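/- arXiv:2603.18080 — 13 statements merged into one kernel-verified Lean document; each statement's English description precedes it below -/
import Mathlib

section
/- Let d ≥ 1 and let p, q : Fin d → ℝ be probability vectors (nonnegative entries summing to 1) with p y > 0 for every y. For n ≥ 1 and a histogram N : Fin d → ℕ with ∑_y N y = n, define P(N) = (n! / ∏_y (N y)!) · ∏_y (p y)^{N y}, and define Q(N) = ∑_z q z · ((n−1)! / ((N z − 1)! · ∏_{y ≠ z} (N y)!)) · (p z)^{N z − 1} · ∏_{y ≠ z} (p y)^{N y}, where the z-th summand is taken to be 0 whenever N z = 0. Then Q(N) = ((1/n) · ∑_y N y · (q y / p y)) · P(N). -/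
open Finset BigOperators

/-- **Exact canonical likelihood ratio** (Lemma 3.1).
`P N` is the multinomial probability of the histogram `N` under `n` i.i.d. draws from `p`;
`Q N` is the histogram probability when one distinguished draw follows `q` and the
remaining `n-1` draws follow `p`.  Then `Q N = ((1/n) ∑_y N_y (q_y/p_y)) P N`. -/
theorem exact_canonical_likelihood_ratio (d n : ℕ) (hd : 1 ≤ d) (hn : 1 ≤ n)
    (p q : Fin d → ℝ)
    (hp0 : ∀ y, 0 < p y) (hq0 : ∀ y, 0 ≤ q y)
    (hp1 : ∑ y, p y = 1) (hq1 : ∑ y, q y = 1)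
    (N : Fin d → ℕ) (hN : ∑ y, N y = n) :
    (∑ z, q z * (if N z = 0 then 0 else
        (Nat.factorial (n - 1) : ℝ) /
          (((Nat.factorial (N z - 1) * ∏ y ∈ Finset.univ.erase z, Nat.factorial (N y)) : ℕ) : ℝ) *
          (p z) ^ (N z - 1) * ∏ y ∈ Finset.univ.erase z, (p y) ^ (N y)))
      = ((1 / (n : ℝ)) * ∑ y, (N y : ℝ) * (q y / p y)) *
        ((Nat.factorial n : ℝ) / ((∏ y, Nat.factorial (N y) : ℕ) : ℝ) *
          ∏ y, (p y) ^ (N y)) := by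
  have hn0 : (n : ℝ) ≠ 0 := by positivity
  have key : ((1 / (n : ℝ)) * ∑ y, (N y : ℝ) * (q y / p y)) *
        ((Nat.factorial n : ℝ) / ((∏ y, Nat.factorial (N y) : ℕ) : ℝ) *
          ∏ y, (p y) ^ (N y))
      = ∑ z, ((1 / (n : ℝ)) * ((N z : ℝ) * (q z / p z))) *
        ((Nat.factorial n : ℝ) / ((∏ y, Nat.factorial (N y) : ℕ) : ℝ) *
          ∏ y, (p y) ^ (N y)) := by
    rw [Finset.mul_sum, Finset.sum_mul]
  rw [key]
  refine Finset.sum_congr rfl fun z _ => ?_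
  by_cases hz : N z = 0
  · simp [hz]
  · rw [if_neg hz]
    have hNz : 1 ≤ N z := Nat.one_le_iff_ne_zero.mpr hz
    have h1 : (Nat.factorial n : ℝ) = n * Nat.factorial (n - 1) := by
      conv_lhs => rw [← Nat.succ_pred_eq_of_pos hn]
      rw [Nat.factorial_succ]
      push_cast [Nat.pred_eq_sub_one, Nat.sub_add_cancel hn]; ring
    have h2 : (Nat.factorial (N z) : ℝ) = N z * Nat.factorial (N z - 1) := by
      conv_lhs => rw [← Nat.succ_pred_eq_of_pos hNz]
      rw [Nat.factorial_succ]
      push_cast [Nat.pred_eq_sub_one, Nat.sub_add_cancel hNz]; ring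
    have h3 : (∏ y, Nat.factorial (N y)) =
        Nat.factorial (N z) * ∏ y ∈ Finset.univ.erase z, Nat.factorial (N y) :=
      (Finset.mul_prod_erase univ _ (mem_univ z)).symm
    have h4 : (∏ y, (p y) ^ (N y)) =
        (p z) ^ (N z) * ∏ y ∈ Finset.univ.erase z, (p y) ^ (N y) :=
      (Finset.mul_prod_erase univ _ (mem_univ z)).symm
    have h5 : (p z) ^ (N z) = p z * (p z) ^ (N z - 1) := by
      conv_lhs => rw [← Nat.succ_pred_eq_of_pos hNz, pow_succ']
      rw [Nat.pred_eq_sub_one]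
    have hfz : (Nat.factorial (N z - 1) : ℝ) ≠ 0 := by
      exact_mod_cast (Nat.factorial_pos _).ne'
    have hfe : ((∏ y ∈ Finset.univ.erase z, Nat.factorial (N y) : ℕ) : ℝ) ≠ 0 := by
      exact_mod_cast (Finset.prod_pos fun y _ => Nat.factorial_pos _).ne'
    have hpz : p z ≠ 0 := (hp0 z).ne'
    rw [h3, h4, h5]
    push_cast
    rw [h1, h2]
    field_simp
end

section
/- Let d ≥ 1, let p, q : Fin d → ℝ be probability vectors with p y > 0 for all y, and set w(y) = q y / p y. Let ℛ = {w(y) : y ∈ Fin d} be the set of distinct likelihood-ratio values, and for a histogram N : Fin d → ℕ with ∑_y N y = n define the quotient statistic M(N) : ℛ → ℕ by M(N)(r) = ∑_{y : w(y) = r} N y. With P and Q the two histogram laws (n i.i.d. draws from p, respectively one draw from q and n−1 from p), the following hold: (i) the pushforward of P under M is the multinomial law on ℛ with cell probabilities p(B_r) = ∑_{y : w(y)=r} p y; (ii) for every histogram N, Q(N)/P(N) = (1/n) ∑_{r ∈ ℛ} r · M(N)(r); (iii) for every m : ℛ → ℕ and every histogram N with M(N) = m, Q(N) · (∑_{N'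 : M(N') = m} P(N')) = P(N) · (∑_{N' : M(N') = m} Q(N')), i.e., the conditional laws of the histogram given M agree under P and Q, so M is sufficient for the binary experiment {P, Q}. -/
open Finset BigOperators
open scoped Classical

/-- Multinomial histogram law of `n` i.i.d. draws from `p`. -/
noncomputable def histP (d n : ℕ) (p : Fin d → ℝ) (N : Fin d → ℕ) : ℝ :=
  (Nat.factorial n : ℝ) / ((∏ y, Nat.factorial (N y) : ℕ) : ℝ) * ∏ y, (p y) ^ (N y)

/-- Histogram law when one distinguished draw follows `q` and `n-1` follow `p`. -/
noncomputable def histQ (d n : ℕ) (p q : Fin d → ℝ) (N : Fin d → ℕ) : ℝ :=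
  ∑ z, q z * (if N z = 0 then 0 else
    (Nat.factorial (n - 1) : ℝ) /
      (((Nat.factorial (N z - 1) * ∏ y ∈ Finset.univ.erase z, Nat.factorial (N y)) : ℕ) : ℝ) *
      (p z) ^ (N z - 1) * ∏ y ∈ Finset.univ.erase z, (p y) ^ (N y))

/-- Quotient statistic: total count on the level set `{y : w y = r}`. -/
noncomputable def quotM (d : ℕ) (w : Fin d → ℝ) (N : Fin d → ℕ) (r : ℝ) : ℕ :=
  ∑ y ∈ Finset.univ.filter (fun y => w y = r), N y

lemma histQ_eq_mul (d n : ℕ) (hn : 1 ≤ n) (p q : Fin d → ℝ) (hp0 : ∀ y, 0 < p y)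
    (N : Fin d → ℕ) (hN : ∑ y, N y = n) :
    histQ d n p q N = histP d n p N * ((1 / (n : ℝ)) * ∑ y, (q y / p y) * (N y : ℝ)) := by
  rw [histQ, histP, Finset.mul_sum, Finset.mul_sum]
  refine Finset.sum_congr rfl fun z _ => ?_
  by_cases hz : N z = 0
  · simp [hz]
  · rw [if_neg hz]
    obtain ⟨k, hk⟩ := Nat.exists_eq_succ_of_ne_zero hz
    have hfz : ∏ y, Nat.factorial (N y)
        = Nat.factorial (N z) * ∏ y ∈ Finset.univ.erase z, Nat.factorial (N y) :=
      (Finset.mul_prod_erase _ _ (Finset.mem_univ z)).symm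
    have hpz : ∏ y, (p y) ^ (N y)
        = (p z) ^ (N z) * ∏ y ∈ Finset.univ.erase z, (p y) ^ (N y) :=
      (Finset.mul_prod_erase _ _ (Finset.mem_univ z)).symm
    have hn' : n = (n - 1) + 1 := (Nat.succ_pred_eq_of_pos hn).symm
    have hfn : (Nat.factorial n : ℝ) = n * Nat.factorial (n - 1) := by
      conv_lhs => rw [hn']
      push_cast [Nat.factorial_succ]
      have : ((n-1:ℕ):ℝ) + 1 = (n:ℝ) := by
        have := Nat.cast_sub hn (R := ℝ); push_cast at this ⊢; linarith
      rw [this]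
    have hfNz : (Nat.factorial (N z) : ℝ) = (N z : ℝ) * Nat.factorial (N z - 1) := by
      rw [hk]; push_cast [Nat.factorial_succ]; ring
    have hpNz : (p z) ^ (N z) = p z * (p z) ^ (N z - 1) := by
      rw [hk]; simp [pow_succ]; ring
    have h1 : ((Nat.factorial (N z - 1) : ℝ)) ≠ 0 := Nat.cast_ne_zero.2 (Nat.factorial_ne_zero _)
    have h2 : ((∏ y ∈ Finset.univ.erase z, Nat.factorial (N y) : ℕ) : ℝ) ≠ 0 := by
      refine Nat.cast_ne_zero.2 (Finset.prod_ne_zero_iff.2 fun y _ => Nat.factorial_ne_zero _)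
    have h3 : p z ≠ 0 := ne_of_gt (hp0 z)
    have h4 : (n : ℝ) ≠ 0 := by positivity
    have h5 : ((Nat.factorial (N z) : ℝ)) ≠ 0 := Nat.cast_ne_zero.2 (Nat.factorial_ne_zero _)
    rw [hfz, hpz]
    push_cast
    rw [hfn, hfNz, hpNz]
    field_simp

lemma sum_image_w (d : ℕ) (w : Fin d → ℝ) (N : Fin d → ℕ) :
    ∑ r ∈ Finset.univ.image w, r * (quotM d w N r : ℝ) = ∑ y, w y * (N y : ℝ) := by
  rw [← Finset.sum_fiberwise_of_maps_to (g := w)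
      (fun y _ => Finset.mem_image_of_mem w (Finset.mem_univ y)) (fun y => w y * (N y : ℝ))]
  refine Finset.sum_congr rfl fun r _ => ?_
  rw [quotM, Nat.cast_sum, Finset.mul_sum]
  exact Finset.sum_congr rfl fun y hy => by rw [(Finset.mem_filter.1 hy).2]

lemma histP_pos (d n : ℕ) (p : Fin d → ℝ) (hp0 : ∀ y, 0 < p y) (N : Fin d → ℕ) :
    0 < histP d n p N := by
  rw [histP]
  have h1 : (0:ℝ) < (Nat.factorial n : ℝ) := by exact_mod_cast Nat.factorial_pos n
  have h2 : (0:ℝ) < ((∏ y, Nat.factorial (N y) : ℕ) : ℝ) := by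
    exact_mod_cast Finset.prod_pos fun y _ => Nat.factorial_pos _
  have h3 : (0:ℝ) < ∏ y, (p y) ^ (N y) :=
    Finset.prod_pos fun y _ => pow_pos (hp0 y) _
  positivity

lemma part_i (d n : ℕ) (p w : Fin d → ℝ)
    (m : ℝ → ℕ) (hm : ∑ r ∈ Finset.univ.image w, m r = n) :
    ∑ N ∈ (Finset.Nat.antidiagonalTuple d n).filter
        (fun N => ∀ r ∈ Finset.univ.image w, quotM d w N r = m r), histP d n p N
      = (Nat.factorial n : ℝ) /
          ((∏ r ∈ Finset.univ.image w, Nat.factorial (m r) : ℕ) : ℝ) *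
          ∏ r ∈ Finset.univ.image w,
            (∑ y ∈ Finset.univ.filter (fun y => w y = r), p y) ^ (m r) := by
  classical
  set R := Finset.univ.image w with hR
  set B : ℝ → Finset (Fin d) := fun r => Finset.univ.filter (fun y => w y = r) with hB
  have hwmem : ∀ y, w y ∈ R := fun y => Finset.mem_image_of_mem w (Finset.mem_univ y)
  have hyB : ∀ (r : ℝ) (y : Fin d), y ∈ B r ↔ w y = r := by
    intro r y; simp [hB]
  symm
  rw [Finset.prod_congr rfl (fun r _ => Finset.sum_pow_eq_sum_piAntidiag (B r) p (m r)),
    Finset.prod_sum, Finset.mul_sum]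
  refine Finset.sum_bij' (i := fun φ _ => (fun y => φ (w y) (hwmem y) y))
    (j := fun N _ => (fun r _ y => if w y = r then N y else 0)) ?_ ?_ ?_ ?_ ?_
  · -- hi : image of i lands in the filtered antidiagonalTuple
    intro φ hφ
    have hφ' := Finset.mem_pi.1 hφ
    have hpt : ∀ (r : ℝ) (hr : r ∈ R) (y : Fin d), y ∈ B r →
        φ (w y) (hwmem y) y = φ r hr y := by
      intro r hr y hy
      have h : w y = r := (hyB r y).1 hy
      subst h; rfl
    have hq : ∀ r ∈ R, quotM d w (fun y => φ (w y) (hwmem y) y) r = m r := by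
      intro r hr
      have hs := (Finset.mem_piAntidiag.1 (hφ' r hr)).1
      rw [quotM]
      calc ∑ y ∈ Finset.univ.filter (fun y => w y = r), φ (w y) (hwmem y) y
          = ∑ y ∈ B r, φ r hr y := Finset.sum_congr rfl fun y hy => hpt r hr y hy
        _ = m r := hs
    simp only [Finset.mem_filter, Finset.Nat.mem_antidiagonalTuple]
    refine ⟨?_, hq⟩
    calc ∑ y, φ (w y) (hwmem y) y
        = ∑ r ∈ R, ∑ y ∈ Finset.univ.filter (fun y => w y = r), φ (w y) (hwmem y) y :=
          (Finset.sum_fiberwise_of_maps_to (fun y _ => hwmem y) _).symm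
      _ = ∑ r ∈ R, m r := Finset.sum_congr rfl fun r hr => hq r hr
      _ = n := hm
  · -- hj
    intro N hN
    simp only [Finset.mem_filter, Finset.Nat.mem_antidiagonalTuple] at hN
    obtain ⟨hN1, hN2⟩ := hN
    refine Finset.mem_pi.2 fun r hr => Finset.mem_piAntidiag.2 ⟨?_, ?_⟩
    · calc ∑ y ∈ B r, (if w y = r then N y else 0)
          = ∑ y ∈ B r, N y := Finset.sum_congr rfl fun y hy => if_pos ((hyB r y).1 hy)
        _ = m r := hN2 r hr
    · intro y hy
      by_cases h : w y = r
      · exact (hyB r y).2 h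
      · simp [h] at hy
  · -- left_inv
    intro φ hφ
    have hφ' := Finset.mem_pi.1 hφ
    funext r hr y
    dsimp only
    by_cases h : w y = r
    · subst h; simp
    · rw [if_neg h]
      by_contra h0
      have h0' : φ r hr y ≠ 0 := fun hc => h0 hc.symm
      exact h ((hyB r y).1 ((Finset.mem_piAntidiag.1 (hφ' r hr)).2 y h0'))
  · -- right_inv
    intro N _
    funext y
    simp
  · -- summand equality
    intro φ hφ
    have hφ' := Finset.mem_pi.1 hφ
    set N : Fin d → ℕ := fun y => φ (w y) (hwmem y) y with hNdef
    have hpt : ∀ (r : ℝ) (hr : r ∈ R) (y : Fin d), y ∈ B r → φ r hr y = N y := by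
      intro r hr y hy
      have h : w y = r := (hyB r y).1 hy
      subst h; rfl
    have hsum : ∀ (r : ℝ) (hr : r ∈ R), ∑ y ∈ B r, N y = m r := by
      intro r hr
      calc ∑ y ∈ B r, N y = ∑ y ∈ B r, φ r hr y :=
            Finset.sum_congr rfl fun y hy => (hpt r hr y hy).symm
        _ = m r := (Finset.mem_piAntidiag.1 (hφ' r hr)).1
    have hfac : ∏ x ∈ R.attach,
        ((Nat.multinomial (B x.1) (φ x.1 x.2) : ℝ) * ∏ y ∈ B x.1, p y ^ (φ x.1 x.2) y)
        = ∏ r ∈ R, ((Nat.multinomial (B r) N : ℝ) * ∏ y ∈ B r, p y ^ N y) := by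
      rw [← Finset.prod_attach R (fun r => ((Nat.multinomial (B r) N : ℝ) * ∏ y ∈ B r, p y ^ N y))]
      refine Finset.prod_congr rfl fun x _ => ?_
      congr 1
      · exact_mod_cast congrArg (Nat.cast (R := ℝ))
          (Nat.multinomial_congr fun y hy => hpt x.1 x.2 y hy)
      · exact Finset.prod_congr rfl fun y hy => by rw [hpt x.1 x.2 y hy]
    have hp2 : ∏ r ∈ R, ∏ y ∈ B r, p y ^ N y = ∏ y, p y ^ N y :=
      Finset.prod_fiberwise_of_maps_to (fun y _ => hwmem y) _
    have hfact : (∏ r ∈ R, Nat.factorial (m r)) =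
        (∏ y, Nat.factorial (N y)) * ∏ r ∈ R, Nat.multinomial (B r) N := by
      calc ∏ r ∈ R, Nat.factorial (m r)
          = ∏ r ∈ R, ((∏ y ∈ B r, Nat.factorial (N y)) * Nat.multinomial (B r) N) := by
            refine Finset.prod_congr rfl fun r hr => ?_
            rw [Nat.multinomial_spec, hsum r hr]
        _ = (∏ r ∈ R, ∏ y ∈ B r, Nat.factorial (N y)) * ∏ r ∈ R, Nat.multinomial (B r) N :=
            Finset.prod_mul_distrib
        _ = _ := by rw [Finset.prod_fiberwise_of_maps_to (fun y _ => hwmem y)]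
    have h1 : ((∏ y, Nat.factorial (N y) : ℕ) : ℝ) ≠ 0 :=
      Nat.cast_ne_zero.2 (Finset.prod_ne_zero_iff.2 fun y _ => Nat.factorial_ne_zero _)
    have h3 : ((∏ r ∈ R, Nat.multinomial (B r) N : ℕ) : ℝ) ≠ 0 :=
      Nat.cast_ne_zero.2 (Finset.prod_ne_zero_iff.2 fun r _ => (Nat.multinomial_pos _ _).ne')
    have hfactR : ((∏ r ∈ R, Nat.factorial (m r) : ℕ) : ℝ) =
        ((∏ y, Nat.factorial (N y) : ℕ) : ℝ) * ((∏ r ∈ R, Nat.multinomial (B r) N : ℕ) : ℝ) := by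
      exact_mod_cast congrArg (Nat.cast (R := ℝ)) hfact
    have key : (Nat.factorial n : ℝ) / ((∏ r ∈ R, Nat.factorial (m r) : ℕ) : ℝ) *
        (∏ r ∈ R, (Nat.multinomial (B r) N : ℝ))
        = (Nat.factorial n : ℝ) / ((∏ y, Nat.factorial (N y) : ℕ) : ℝ) := by
      rw [← Nat.cast_prod, hfactR,
        mul_comm ((∏ y, Nat.factorial (N y) : ℕ) : ℝ) ((∏ r ∈ R, Nat.multinomial (B r) N : ℕ) : ℝ),
        ← div_div, div_mul_eq_mul_div, div_mul_cancel₀ _ h3]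
    rw [hfac, Finset.prod_mul_distrib, hp2, histP, ← mul_assoc, key]

/-- **LR-quotient compression** (Theorem 3.2): (i) the pushforward of the histogram law under
the quotient statistic `M` is the multinomial law on the likelihood-ratio level sets;
(ii) the exact likelihood ratio is `(1/n) ∑_{r ∈ ℛ} r · M r`;
(iii) the conditional laws of the histogram given `M` agree under `P` and `Q`
(so `M` is sufficient for the binary experiment `{P, Q}`). -/
theorem lr_quotient_compression (d n : ℕ) (hd : 1 ≤ d) (hn : 1 ≤ n)
    (p q : Fin d → ℝ)
    (hp0 : ∀ y, 0 < p y) (hq0 : ∀ y, 0 ≤ q y)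
    (hp1 : ∑ y, p y = 1) (hq1 : ∑ y, q y = 1)
    (w : Fin d → ℝ) (hw : ∀ y, w y = q y / p y)
    (R : Finset ℝ) (hR : R = Finset.univ.image w) :
    -- (i) pushforward of P under M is the multinomial law on R
    ((∀ m : ℝ → ℕ, (∑ r ∈ R, m r = n) →
        ∑ N ∈ (Finset.Nat.antidiagonalTuple d n).filter
            (fun N => ∀ r ∈ R, quotM d w N r = m r), histP d n p N
          = (Nat.factorial n : ℝ) / ((∏ r ∈ R, Nat.factorial (m r) : ℕ) : ℝ) *
              ∏ r ∈ R, (∑ y ∈ Finset.univ.filter (fun y => w y = r), p y) ^ (m r)))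
    ∧
    -- (ii) exact likelihood ratio
    (∀ N ∈ Finset.Nat.antidiagonalTuple d n,
        histQ d n p q N / histP d n p N
          = (1 / (n : ℝ)) * ∑ r ∈ R, r * (quotM d w N r : ℝ))
    ∧
    -- (iii) sufficiency: conditional laws given M agree under P and Q
    (∀ N ∈ Finset.Nat.antidiagonalTuple d n,
        histQ d n p q N *
            (∑ N' ∈ (Finset.Nat.antidiagonalTuple d n).filter
                (fun N' => ∀ r : ℝ, quotM d w N' r = quotM d w N r), histP d n p N')
          = histP d n p N *
            (∑ N' ∈ (Finset.Nat.antidiagonalTuple d n).filter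
                (fun N' => ∀ r : ℝ, quotM d w N' r = quotM d w N r), histQ d n p q N')) := by
  subst hR
  have hkey : ∀ N : Fin d → ℕ, (∑ y, N y = n) →
      histQ d n p q N = histP d n p N *
        ((1 / (n : ℝ)) * ∑ r ∈ Finset.univ.image w, r * (quotM d w N r : ℝ)) := by
    intro N hN
    rw [histQ_eq_mul d n hn p q hp0 N hN, sum_image_w]
    have : ∑ y, w y * (N y : ℝ) = ∑ y, (q y / p y) * (N y : ℝ) :=
      Finset.sum_congr rfl fun y _ => by rw [hw y]
    rw [this]
  refine ⟨fun m hm => ?_, ?_, ?_⟩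
  · have h := part_i d n p w m hm
    convert h using 2
    ext N
    simp only [Finset.mem_filter]
  · intro N hN
    have hN' : ∑ y, N y = n := Finset.Nat.mem_antidiagonalTuple.1 hN
    rw [hkey N hN']
    exact mul_div_cancel_left₀ _ (histP_pos d n p hp0 N).ne'
  · intro N hN
    have hN' : ∑ y, N y = n := Finset.Nat.mem_antidiagonalTuple.1 hN
    set c := (1 / (n : ℝ)) * ∑ r ∈ Finset.univ.image w, r * (quotM d w N r : ℝ) with hc
    have hQsum : ∑ N' ∈ (Finset.Nat.antidiagonalTuple d n).filter
          (fun N' => ∀ r : ℝ, quotM d w N' r = quotM d w N r), histQ d n p q N'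
        = c * ∑ N' ∈ (Finset.Nat.antidiagonalTuple d n).filter
          (fun N' => ∀ r : ℝ, quotM d w N' r = quotM d w N r), histP d n p N' := by
      rw [Finset.mul_sum]
      refine Finset.sum_congr rfl fun N' hN'' => ?_
      simp only [Finset.mem_filter] at hN''
      obtain ⟨hN1, hq⟩ := hN''
      rw [hkey N' (Finset.Nat.mem_antidiagonalTuple.1 hN1)]
      simp only [hq, hc]
      ring
    rw [hkey N hN', hQsum]
    ring
end

section
/- Let d ≥ 2, let λ ≥ 1, and let W : Fin d → Fin d → ℝ be a channel with strictly positive entries, each row a probability vector, satisfying the λ-ratio bound W y x ≤ λ · W y x' for all inputs x, x' and outputs y (i.e., W is ε₀-locally differentially private with λ = e^{ε₀}). Then for every pair of inputs a ≠ b, the chi-square divergence χ²(W(·|b) ‖ W(·|a)) = ∑_y (W(y|b) − W(y|a))² / W(y|a) satisfies χ²(W(·|b) ‖ W(·|a)) ≤ (λ − 1)²/λ. Moreover, when λ > 1, equality holds if and only if the likelihood ratio w(y) = W(y|b)/W(y|a) takes only the two values λ^{-1} and λ, with ∑_{y : w(y) = λ^{-1}} W(y|a) = λ/(1+λ) and ∑_{y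 : w(y) = λ} W(y|a) = 1/(1+λ). -/
open Finset BigOperators
open scoped Classical

/-!
Pointwise, `(q - p)² / p = (λ + λ⁻¹ - 2) q - (λp - q)(q - λ⁻¹p) / p`, and the ratio bounds
`λ⁻¹p ≤ q ≤ λp` make the subtracted term nonnegative. Summing against `∑ q = 1` gives the bound,
with equality iff every likelihood ratio `q / p` is one of the endpoints `λ⁻¹`, `λ`; the masses
of the two level sets are then forced by `∑ p = ∑ q = 1`.
-/

noncomputable section

def chiSquare {ι : Type*} [Fintype ι] (q p : ι → ℝ) : ℝ :=
  ∑ y, (q y - p y) ^ 2 / p y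

/-- The pointwise gap in the bound `χ² ≤ (λ - 1)² / λ`. -/
def ratioSlack (lam p q : ℝ) : ℝ :=
  (lam * p - q) * (q - lam⁻¹ * p) / p

end

section Pointwise

variable {lam p q : ℝ}

theorem sq_sub_div_eq_sub_ratioSlack (hlam : lam ≠ 0) (hp : p ≠ 0) :
    (q - p) ^ 2 / p = (lam + lam⁻¹ - 2) * q - ratioSlack lam p q := by
  unfold ratioSlack
  field_simp
  ring

theorem ratioSlack_nonneg (hlam : 0 < lam) (hp : 0 < p) (hqp : q ≤ lam * p)
    (hpq : p ≤ lam * q) : 0 ≤ ratioSlack lam p q := by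
  have hlow : lam⁻¹ * p ≤ q := by rwa [inv_mul_le_iff₀ hlam]
  unfold ratioSlack
  exact div_nonneg (mul_nonneg (by linarith) (by linarith)) hp.le

theorem ratioSlack_eq_zero_iff (hp : p ≠ 0) :
    ratioSlack lam p q = 0 ↔ q / p = lam⁻¹ ∨ q / p = lam := by
  rw [ratioSlack, div_eq_zero_iff, or_iff_left hp, mul_eq_zero, or_comm,
    div_eq_iff hp, div_eq_iff hp, sub_eq_zero, sub_eq_zero, eq_comm (a := lam * p)]

end Pointwise

section ChiSquare

variable {ι : Type*} [Fintype ι] {p q : ι → ℝ} {lam : ℝ}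

theorem chiSquare_eq_sub_sum_ratioSlack (hlam : lam ≠ 0) (hp : ∀ y, p y ≠ 0)
    (hq : ∑ y, q y = 1) :
    chiSquare q p = (lam - 1) ^ 2 / lam - ∑ y, ratioSlack lam (p y) (q y) := by
  have hconst : (lam + lam⁻¹ - 2) * 1 = (lam - 1) ^ 2 / lam := by
    field_simp
    ring
  rw [chiSquare, sum_congr rfl fun y _ => sq_sub_div_eq_sub_ratioSlack hlam (hp y),
    sum_sub_distrib, ← mul_sum, hq, hconst]

theorem chiSquare_le (hlam : 0 < lam) (hp : ∀ y, 0 < p y) (hq : ∑ y, q y = 1)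
    (hqp : ∀ y, q y ≤ lam * p y) (hpq : ∀ y, p y ≤ lam * q y) :
    chiSquare q p ≤ (lam - 1) ^ 2 / lam := by
  rw [chiSquare_eq_sub_sum_ratioSlack hlam.ne' (fun y => (hp y).ne') hq, sub_le_self_iff]
  exact sum_nonneg fun y _ => ratioSlack_nonneg hlam (hp y) (hqp y) (hpq y)

theorem chiSquare_eq_iff (hlam : 0 < lam) (hp : ∀ y, 0 < p y) (hq : ∑ y, q y = 1)
    (hqp : ∀ y, q y ≤ lam * p y) (hpq : ∀ y, p y ≤ lam * q y) :
    chiSquare q p = (lam - 1) ^ 2 / lam ↔ ∀ y, q y / p y = lam⁻¹ ∨ q y / p y = lam := by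
  rw [chiSquare_eq_sub_sum_ratioSlack hlam.ne' (fun y => (hp y).ne') hq, sub_eq_self,
    sum_eq_zero_iff_of_nonneg fun y _ => ratioSlack_nonneg hlam (hp y) (hqp y) (hpq y)]
  simp only [mem_univ, true_implies, ratioSlack_eq_zero_iff (hp _).ne']

theorem sum_filter_ratio_eq_inv (hlam : 1 < lam) (hp : ∀ y, p y ≠ 0) (hp1 : ∑ y, p y = 1)
    (hq1 : ∑ y, q y = 1) (htwo : ∀ y, q y / p y = lam⁻¹ ∨ q y / p y = lam) :
    ∑ y ∈ univ.filter (fun y => q y / p y = lam⁻¹), p y = lam / (1 + lam) := by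
  have hlam0 : 0 < lam := by linarith
  have hinv : lam⁻¹ ≠ lam := ((inv_lt_one_of_one_lt₀ hlam).trans hlam).ne
  -- `λp - q` is `(λ - λ⁻¹) p` on the level set `q / p = λ⁻¹` and vanishes on the other one
  have hmass : (lam - lam⁻¹) * ∑ y ∈ univ.filter (fun y => q y / p y = lam⁻¹), p y
      = ∑ y, (lam * p y - q y) := by
    rw [mul_sum, sum_filter]
    refine sum_congr rfl fun y _ => ?_
    rcases htwo y with h | h
    · rw [if_pos h, (div_eq_iff (hp y)).mp h]
      ring
    · rw [if_neg (h ▸ hinv.symm), (div_eq_iff (hp y)).mp h, sub_self]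
  rw [sum_sub_distrib, ← mul_sum, hp1, hq1, mul_one] at hmass
  field_simp at hmass ⊢
  nlinarith

theorem sum_filter_ratio_eq (hlam : 1 < lam) (hp : ∀ y, p y ≠ 0) (hp1 : ∑ y, p y = 1)
    (hq1 : ∑ y, q y = 1) (htwo : ∀ y, q y / p y = lam⁻¹ ∨ q y / p y = lam) :
    ∑ y ∈ univ.filter (fun y => q y / p y = lam), p y = 1 / (1 + lam) := by
  have hlam0 : 0 < lam := by linarith
  have hinv : lam⁻¹ ≠ lam := ((inv_lt_one_of_one_lt₀ hlam).trans hlam).ne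
  have hmass : (lam - lam⁻¹) * ∑ y ∈ univ.filter (fun y => q y / p y = lam), p y
      = ∑ y, (q y - lam⁻¹ * p y) := by
    rw [mul_sum, sum_filter]
    refine sum_congr rfl fun y _ => ?_
    rcases htwo y with h | h
    · rw [if_neg (h ▸ hinv), (div_eq_iff (hp y)).mp h, sub_self]
    · rw [if_pos h, (div_eq_iff (hp y)).mp h]
      ring
  rw [sum_sub_distrib, ← mul_sum, hp1, hq1, mul_one] at hmass
  field_simp at hmass ⊢
  nlinarith

end ChiSquare

theorem universal_chi_square_bound_general (d : ℕ) (lam : ℝ) (hlam : 1 ≤ lam)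
    (W : Fin d → Fin d → ℝ)
    (hpos : ∀ x y, 0 < W x y)
    (hrow : ∀ x, ∑ y, W x y = 1)
    (hldp : ∀ x x' y, W x y ≤ lam * W x' y) :
    ∀ a b : Fin d, a ≠ b →
      (∑ y, (W b y - W a y) ^ 2 / W a y ≤ (lam - 1) ^ 2 / lam)
      ∧ (1 < lam →
          ((∑ y, (W b y - W a y) ^ 2 / W a y = (lam - 1) ^ 2 / lam) ↔
            ((∀ y, W b y / W a y = lam⁻¹ ∨ W b y / W a y = lam)
              ∧ ∑ y ∈ Finset.univ.filter (fun y => W b y / W a y = lam⁻¹), W a y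
                  = lam / (1 + lam)
              ∧ ∑ y ∈ Finset.univ.filter (fun y => W b y / W a y = lam), W a y
                  = 1 / (1 + lam)))) := by
  intro a b _
  have hlam0 : 0 < lam := by linarith
  refine ⟨chiSquare_le hlam0 (hpos a) (hrow b) (hldp b a) (hldp a b), fun hlam1 => ?_⟩
  have hpa : ∀ y, W a y ≠ 0 := fun y => (hpos a y).ne'
  change chiSquare (W b) (W a) = _ ↔ _
  rw [chiSquare_eq_iff hlam0 (hpos a) (hrow b) (hldp b a) (hldp a b)]
  exact ⟨fun htwo => ⟨htwo, sum_filter_ratio_eq_inv hlam1 hpa (hrow a) (hrow b) htwo,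
    sum_filter_ratio_eq hlam1 hpa (hrow a) (hrow b) htwo⟩, fun h => h.1⟩

/-- **Universal extremal chi-square bound** (Theorem 4.2).  For an `ε₀`-LDP channel with
`λ = e^{ε₀}` (entrywise ratio bound `W(y|x) ≤ λ W(y|x')`), every pairwise chi-square
divergence is at most `(λ−1)²/λ`, and for `λ > 1` equality holds iff the likelihood ratio
takes only the two endpoint values `λ⁻¹` and `λ`, with respective null masses
`λ/(1+λ)` and `1/(1+λ)`. -/
theorem universal_chi_square_bound (d : ℕ) (hd : 2 ≤ d) (lam : ℝ) (hlam : 1 ≤ lam)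
    (W : Fin d → Fin d → ℝ)
    (hpos : ∀ x y, 0 < W x y)
    (hrow : ∀ x, ∑ y, W x y = 1)
    (hldp : ∀ x x' y, W x y ≤ lam * W x' y) :
    ∀ a b : Fin d, a ≠ b →
      (∑ y, (W b y - W a y) ^ 2 / W a y ≤ (lam - 1) ^ 2 / lam)
      ∧ (1 < lam →
          ((∑ y, (W b y - W a y) ^ 2 / W a y = (lam - 1) ^ 2 / lam) ↔
            ((∀ y, W b y / W a y = lam⁻¹ ∨ W b y / W a y = lam)
              ∧ ∑ y ∈ Finset.univ.filter (fun y => W b y / W a y = lam⁻¹), W a y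
                  = lam / (1 + lam)
              ∧ ∑ y ∈ Finset.univ.filter (fun y => W b y / W a y = lam), W a y
                  = 1 / (1 + lam)))) :=
  universal_chi_square_bound_general d lam hlam W hpos hrow hldp
end

section
/- Let d ≥ 2 be even, let λ > 1, identify Fin d with ℤ/dℤ, and for each x define the half-block A_x = {x, x+1, …, x + d/2 − 1} (mod d). Define the half-block channel W(y|x) = (2λ/(d(1+λ))) if y ∈ A_x and (2/(d(1+λ))) if y ∉ A_x. Then: (i) every entrywise ratio W(y|x)/W(y|x') lies in {λ^{-1}, 1, λ}, so W satisfies the λ-ratio bound (W is ε₀-LDP with λ = e^{ε₀}); and (ii) for the opposite pair b = a + d/2 (mod d), the likelihood ratio w(y) = W(y|b)/W(y|a) equals λ^{-1} on A_a and λ on its complement, and χ²(W(·|b) ‖ W(·|a)) = (λ−1)²/λ. -/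
/-!
In `ZMod (k + k)` translation by `k` maps every half-block onto its complement, so the
channel rows `W(·|a)` and `W(·|a + k)` take the two values `λq` and `q`, `q = 1/(k(1+λ))`,
in swapped positions, each on exactly `k` outputs. All entrywise ratios are then `λ^{±1}` or
`1`, and the chi-square sum is `k (q(λ-1)²/λ + q(λ-1)²) = (λ-1)²/λ`.
-/

open Finset

section HalfBlock

variable {d k : ℕ}

theorem ZMod.natCast_add_self_of_eq_add (hk : d = k + k) : (k : ZMod d) + k = 0 := by
  rw [← Nat.cast_add, ← hk, ZMod.natCast_self]

theorem ZMod.val_add_half_lt_iff [NeZero d] (hk : d = k + k) (z : ZMod d) :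
    (z + k).val < k ↔ ¬ z.val < k := by
  have hkval : (k : ZMod d).val = k := ZMod.val_natCast_of_lt (by have := NeZero.ne d; omega)
  have hz := z.val_lt
  by_cases h : z.val < k
  · rw [ZMod.val_add_of_lt (by omega), hkval]; omega
  · rw [ZMod.val_add_of_le (by omega), hkval]; omega

theorem ZMod.val_sub_add_half_lt_iff [NeZero d] (hk : d = k + k) (y a : ZMod d) :
    (y - (a + k)).val < k ↔ ¬ (y - a).val < k := by
  have hneg : -(k : ZMod d) = k := neg_eq_of_add_eq_zero_left (ZMod.natCast_add_self_of_eq_add hk)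
  rw [← ZMod.val_add_half_lt_iff hk, sub_add_eq_sub_sub, sub_eq_add_neg _ (k : ZMod d), hneg]

/-- Exactly one of `y` and `y + k` lies in the half-block at `a`. -/
theorem sum_ite_val_sub_lt [NeZero d] (hk : d = k + k) (a : ZMod d) (c₁ c₂ : ℝ) :
    ∑ y : ZMod d, (if (y - a).val < k then c₁ else c₂) = k * (c₁ + c₂) := by
  set f : ZMod d → ℝ := fun y => if (y - a).val < k then c₁ else c₂
  have hshift : ∑ y, f (y + k) = ∑ y, f y := Equiv.sum_comp (Equiv.addRight _) f
  have hpair : ∀ y, f y + f (y + k) = c₁ + c₂ := by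
    intro y
    have hflip := ZMod.val_add_half_lt_iff hk (y - a)
    rw [← add_sub_right_comm] at hflip
    by_cases h : (y - a).val < k
    · simp [f, h, hflip.not.mpr (not_not.mpr h)]
    · simp [f, h, hflip.mpr h, add_comm]
  have hsum : 2 * ∑ y, f y = d * (c₁ + c₂) := by
    rw [two_mul]
    nth_rewrite 2 [← hshift]
    simp [← sum_add_distrib, hpair, ZMod.card, mul_add]
  have hdk : (d : ℝ) = 2 * k := by rw [hk]; push_cast; ring
  rw [hdk, mul_assoc] at hsum
  change ∑ y, f y = _
  linarith

end HalfBlock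

section TwoValued

variable {lam q u v : ℝ}

theorem div_mem_of_two_valued (hlam : lam ≠ 0) (hq : q ≠ 0)
    (hu : u = lam * q ∨ u = q) (hv : v = lam * q ∨ v = q) :
    u / v ∈ ({lam⁻¹, 1, lam} : Set ℝ) := by
  rcases hu with rfl | rfl <;> rcases hv with rfl | rfl <;> field_simp <;> simp

theorem le_mul_of_two_valued (hlam : 1 ≤ lam) (hq : 0 ≤ q)
    (hu : u = lam * q ∨ u = q) (hv : v = lam * q ∨ v = q) :
    u ≤ lam * v := by
  have hq_le : q ≤ lam * q := le_mul_of_one_le_left hq hlam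
  have hlamq_le : lam * q ≤ lam * (lam * q) := le_mul_of_one_le_left (hq.trans hq_le) hlam
  rcases hu with rfl | rfl <;> rcases hv with rfl | rfl <;> linarith

end TwoValued

theorem half_block_obstruction_general (d : ℕ) [NeZero d] (hdeven : Even d)
    (lam : ℝ) (hlam : 1 < lam)
    (W : ZMod d → ZMod d → ℝ)
    (hW : ∀ x y : ZMod d, W x y =
        if (y - x).val < d / 2 then 2 * lam / (d * (1 + lam)) else 2 / (d * (1 + lam))) :
    (∀ x x' y : ZMod d, W x y / W x' y ∈ ({lam⁻¹, 1, lam} : Set ℝ))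
    ∧ (∀ x x' y : ZMod d, W x y ≤ lam * W x' y)
    ∧ (∀ a : ZMod d,
        (∀ y : ZMod d, W (a + ((d / 2 : ℕ) : ZMod d)) y / W a y
            = if (y - a).val < d / 2 then lam⁻¹ else lam)
        ∧ ∑ y : ZMod d, (W (a + ((d / 2 : ℕ) : ZMod d)) y - W a y) ^ 2 / W a y
            = (lam - 1) ^ 2 / lam) := by
  obtain ⟨k, hk⟩ := hdeven
  have hk2 : d / 2 = k := by omega
  have hkpos : (0 : ℝ) < k := by have := NeZero.ne d; exact_mod_cast (by omega : 0 < k)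
  have hdk : (d : ℝ) = 2 * k := by rw [hk]; push_cast; ring
  set q : ℝ := 2 / (d * (1 + lam))
  have hq : 0 < q := div_pos two_pos (mul_pos (by rw [hdk]; positivity) (by linarith))
  have hWq : ∀ x y, W x y = if (y - x).val < k then lam * q else q := by
    intro x y; rw [hW, hk2, mul_comm 2 lam, mul_div_assoc]
  have hW2 : ∀ x y, W x y = lam * q ∨ W x y = q := fun x y => by rw [hWq]; split_ifs <;> simp
  have hWopp : ∀ a y, W (a + (k : ZMod d)) y = if (y - a).val < k then q else lam * q := by
    intro a y; rw [hWq, if_congr (ZMod.val_sub_add_half_lt_iff hk y a) rfl rfl, ite_not]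
  simp only [hk2]
  refine ⟨fun x x' y => div_mem_of_two_valued (by positivity) hq.ne' (hW2 x y) (hW2 x' y),
    fun x x' y => le_mul_of_two_valued hlam.le hq.le (hW2 x y) (hW2 x' y), fun a => ⟨?_, ?_⟩⟩
  · intro y
    rw [hWopp, hWq]
    split_ifs <;> field_simp
  · simp_rw [hWopp, hWq, apply_ite₂ (fun u v : ℝ => (u - v) ^ 2 / v), sum_ite_val_sub_lt hk]
    simp only [q, hdk]
    field_simp
    ring

/-- **Explicit obstruction family: the cyclic half-block channel** (Theorem 5.2(i)–(ii)).
For even `d` and `λ > 1`, the half-block channel `W(y|x) = 2λ/(d(1+λ))` if `y ∈ A_x`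
(where `A_x = {x, …, x + d/2 − 1}` mod `d`) and `2/(d(1+λ))` otherwise satisfies:
(i) every entrywise ratio lies in `{λ⁻¹, 1, λ}` (hence the `λ`-ratio bound holds);
(ii) for the opposite pair `b = a + d/2`, the likelihood ratio equals `λ⁻¹` on `A_a`
and `λ` off `A_a`, and the chi-square divergence equals `(λ−1)²/λ`. -/
theorem half_block_obstruction (d : ℕ) [NeZero d] (hd : 2 ≤ d) (hdeven : Even d)
    (lam : ℝ) (hlam : 1 < lam)
    (W : ZMod d → ZMod d → ℝ)
    (hW : ∀ x y : ZMod d, W x y =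
        if (y - x).val < d / 2 then 2 * lam / (d * (1 + lam)) else 2 / (d * (1 + lam))) :
    (∀ x x' y : ZMod d, W x y / W x' y ∈ ({lam⁻¹, 1, lam} : Set ℝ))
    ∧ (∀ x x' y : ZMod d, W x y ≤ lam * W x' y)
    ∧ (∀ a : ZMod d,
        (∀ y : ZMod d, W (a + ((d / 2 : ℕ) : ZMod d)) y / W a y
            = if (y - a).val < d / 2 then lam⁻¹ else lam)
        ∧ ∑ y : ZMod d, (W (a + ((d / 2 : ℕ) : ZMod d)) y - W a y) ^ 2 / W a y
            = (lam - 1) ^ 2 / lam) :=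
  half_block_obstruction_general d hdeven lam hlam W hW
end

section
/- Let d ≥ 2 be even, λ > 1, and let W be the cyclic half-block channel W(y|x) = (2λ/(d(1+λ)))·1{y ∈ A_x} + (2/(d(1+λ)))·1{y ∉ A_x}, where A_x = {x,…,x+d/2−1} mod d. Fix a and b = a + d/2 (mod d), let n ≥ 1, and let P be the law of the histogram N of n i.i.d. outputs drawn from W(·|a), and Q be the histogram law when one distinguished user's output is drawn from W(·|b) and the remaining n−1 from W(·|a). Set K(N) = ∑_{y ∉ A_a} N y. Then: (i) under P, K has the binomial distribution Bin(n, 1/(1+λ)); and (ii) for every histogram N, Q(N)/P(N) = λ^{-1} + (K(N)/n)(λ − λ^{-1}). Consequently, for every ε ≥ 0, the privacy curve δ(ε) = ∑_N (Q(N) − e^ε P(N))₊ equals ∑_{k=0}^n C(n,k) q^k (1−q)^{n−k} (λ^{-1} + (k/n)(λ − λ^{-1}) − e^ε)₊ with q = 1/(1+λ), which is exactly the binary randomized-response privacy curve. -/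
/-! Under `P` the histogram is multinomial, so its restrictions to `A_a` and to `A_aᶜ` are
independent multinomial vectors and `K` is binomial with success probability
`W(A_aᶜ | a) = 1/(1+λ)`. Conditioning on the cell of the distinguished draw gives
`Q(N)/P(N) = ∑_z W(z|b)/W(z|a) · N_z/n`; as `A_b = A_aᶜ`, the ratio `W(z|b)/W(z|a)` is `λ⁻¹`
on `A_a` and `λ` off it, so the likelihood ratio is an affine function of `K` alone and the
privacy curve collapses, fibre by fibre of `K`, to the binomial sum. -/

open Finset

section Antidiag

variable {α : Type*} [DecidableEq α] {s : Finset α} {k m : ℕ} {f g : α → ℕ}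

theorem eq_zero_of_mem_piAntidiag (hf : f ∈ s.piAntidiag k) {y : α} (hy : y ∉ s) : f y = 0 :=
  by_contra fun h => hy ((mem_piAntidiag.1 hf).2 y h)

theorem add_apply_eq_left_of_mem_piAntidiag [Fintype α] (hg : g ∈ sᶜ.piAntidiag m) {y : α}
    (hy : y ∈ s) : (f + g) y = f y := by
  rw [Pi.add_apply, eq_zero_of_mem_piAntidiag hg (notMem_compl.2 hy), add_zero]

theorem add_apply_eq_right_of_mem_piAntidiag (hf : f ∈ s.piAntidiag k) {y : α} (hy : y ∉ s) :
    (f + g) y = g y := by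
  rw [Pi.add_apply, eq_zero_of_mem_piAntidiag hf hy, zero_add]

end Antidiag

section Multinomial

variable {α : Type*} [Fintype α]

noncomputable def multinomialLaw (n : ℕ) (p : α → ℝ) (N : α → ℕ) : ℝ :=
  (Nat.factorial n : ℝ) / ((∏ y, Nat.factorial (N y) : ℕ) : ℝ) * ∏ y, p y ^ N y

theorem multinomialLaw_pos {p : α → ℝ} (hp : ∀ y, 0 < p y) (n : ℕ) (N : α → ℕ) :
    0 < multinomialLaw n p N := by
  unfold multinomialLaw
  have hfac : (0 : ℝ) < ((∏ y, Nat.factorial (N y) : ℕ) : ℝ) := by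
    exact_mod_cast prod_pos fun y _ => Nat.factorial_pos (N y)
  exact mul_pos (div_pos (by positivity) hfac) (prod_pos fun y _ => pow_pos (hp y) _)

theorem multinomialLaw_eq_multinomial_mul {n : ℕ} {N : α → ℕ} (hN : ∑ y, N y = n)
    (p : α → ℝ) :
    multinomialLaw n p N = Nat.multinomial univ N * ∏ y, p y ^ N y := by
  have hspec := Nat.multinomial_spec univ N
  rw [hN] at hspec
  rw [multinomialLaw, ← hspec, Nat.cast_mul, mul_div_cancel_left₀]
  exact_mod_cast (prod_pos fun y _ => Nat.factorial_pos (N y)).ne'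

variable [DecidableEq α]

/-- The histogram law of `n` draws, one from `r` and the others from `p`: summand `z` is the
probability `r z` that the distinguished draw lands in `z`, times the multinomial law of the
remaining `n - 1` draws at `N - 𝟙_z`. -/
noncomputable def oneReplacedLaw (n : ℕ) (p r : α → ℝ) (N : α → ℕ) : ℝ :=
  ∑ z, r z * (if N z = 0 then 0 else
    (Nat.factorial (n - 1) : ℝ) /
      (((Nat.factorial (N z - 1) * ∏ y ∈ univ.erase z, Nat.factorial (N y)) : ℕ) : ℝ) *
      p z ^ (N z - 1) * ∏ y ∈ univ.erase z, p y ^ N y)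

theorem piAntidiag_univ_eq_filter_piFinset (n : ℕ) :
    univ.piAntidiag n =
      (Fintype.piFinset fun _ : α => range (n + 1)).filter (fun N => ∑ y, N y = n) := by
  ext N
  simp only [mem_piAntidiag, mem_filter, Fintype.mem_piFinset, mem_range, mem_univ,
    implies_true, and_true]
  refine ⟨fun hN => ⟨fun y => ?_, hN⟩, And.right⟩
  exact Nat.lt_succ_of_le (hN ▸ single_le_sum (fun i _ => Nat.zero_le (N i)) (mem_univ y))

theorem Nat.multinomial_univ_eq_choose_mul (s : Finset α) (N : α → ℕ) :
    Nat.multinomial univ N =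
      (∑ y, N y).choose (∑ y ∈ s, N y) * Nat.multinomial s N * Nat.multinomial sᶜ N := by
  have hfac : 0 < (∏ y ∈ s, Nat.factorial (N y)) * ∏ y ∈ sᶜ, Nat.factorial (N y) :=
    Nat.mul_pos (prod_pos fun y _ => Nat.factorial_pos _) (prod_pos fun y _ => Nat.factorial_pos _)
  refine Nat.eq_of_mul_eq_mul_left hfac ?_
  have hchoose := Nat.choose_mul_factorial_mul_factorial
    (Nat.le_add_right (∑ y ∈ s, N y) (∑ y ∈ sᶜ, N y))
  rw [Nat.add_sub_cancel_left, sum_add_sum_compl] at hchoose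
  conv_lhs => rw [prod_mul_prod_compl, Nat.multinomial_spec, ← hchoose,
    ← Nat.multinomial_spec s N, ← Nat.multinomial_spec sᶜ N]
  ring

theorem sum_filter_piAntidiag_eq_sum_product {M : Type*} [AddCommMonoid M] (s : Finset α)
    {n k : ℕ} (hk : k ≤ n) (F : (α → ℕ) → M) :
    ∑ N ∈ (univ.piAntidiag n).filter (fun N => ∑ y ∈ s, N y = k), F N =
      ∑ x ∈ s.piAntidiag k ×ˢ sᶜ.piAntidiag (n - k), F (x.1 + x.2) := by
  symm
  refine sum_nbij' (fun x => x.1 + x.2) (fun N => (s.piecewise N 0, s.piecewise 0 N))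
    ?_ ?_ ?_ ?_ fun _ _ => rfl
  · rintro ⟨f, g⟩ hfg
    obtain ⟨hf, hg⟩ : f ∈ s.piAntidiag k ∧ g ∈ sᶜ.piAntidiag (n - k) := mem_product.1 hfg
    have hsum_s : ∑ y ∈ s, (f + g) y = k := (sum_congr rfl fun y hy =>
      add_apply_eq_left_of_mem_piAntidiag hg hy).trans (mem_piAntidiag.1 hf).1
    have hsum_sc : ∑ y ∈ sᶜ, (f + g) y = n - k := (sum_congr rfl fun y hy =>
      add_apply_eq_right_of_mem_piAntidiag hf (mem_compl.1 hy)).trans (mem_piAntidiag.1 hg).1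
    refine mem_filter.2 ⟨mem_piAntidiag.2 ⟨?_, fun y _ => mem_univ y⟩, hsum_s⟩
    rw [← sum_add_sum_compl s, hsum_s, hsum_sc]
    omega
  · intro N hN
    obtain ⟨hNn, hNk⟩ := mem_filter.1 hN
    have hNsc : ∑ y ∈ sᶜ, N y = n - k := by
      have := sum_add_sum_compl s N
      rw [(mem_piAntidiag.1 hNn).1, hNk] at this
      omega
    simp only [mem_product, mem_piAntidiag]
    refine ⟨⟨?_, fun y hy => ?_⟩, ⟨?_, fun y hy => ?_⟩⟩
    · rw [← hNk]; exact sum_congr rfl fun y hy => piecewise_eq_of_mem _ _ _ hy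
    · exact by_contra fun h => hy (piecewise_eq_of_notMem _ _ _ h)
    · rw [← hNsc]
      exact sum_congr rfl fun y hy => piecewise_eq_of_notMem _ _ _ (mem_compl.1 hy)
    · exact mem_compl.2 fun h => hy (piecewise_eq_of_mem _ _ _ h)
  · rintro ⟨f, g⟩ hfg
    obtain ⟨hf, hg⟩ : f ∈ s.piAntidiag k ∧ g ∈ sᶜ.piAntidiag (n - k) := mem_product.1 hfg
    ext y <;> by_cases hy : y ∈ s <;>
      simp [hy, eq_zero_of_mem_piAntidiag hf, eq_zero_of_mem_piAntidiag hg]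
  · intro N _
    ext y
    by_cases hy : y ∈ s <;> simp [hy]

theorem multinomialLaw_add_of_mem_piAntidiag (p : α → ℝ) {s : Finset α} {k m : ℕ}
    {f g : α → ℕ} (hf : f ∈ s.piAntidiag k) (hg : g ∈ sᶜ.piAntidiag m) :
    multinomialLaw (k + m) p (f + g) = (k + m).choose k *
      ((Nat.multinomial s f : ℝ) * ∏ y ∈ s, p y ^ f y) *
      ((Nat.multinomial sᶜ g : ℝ) * ∏ y ∈ sᶜ, p y ^ g y) := by
  have hs : ∀ y ∈ s, (f + g) y = f y := fun y hy => add_apply_eq_left_of_mem_piAntidiag hg hy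
  have hsc : ∀ y ∈ sᶜ, (f + g) y = g y := fun y hy =>
    add_apply_eq_right_of_mem_piAntidiag hf (mem_compl.1 hy)
  have hsum_s : ∑ y ∈ s, (f + g) y = k := (sum_congr rfl hs).trans (mem_piAntidiag.1 hf).1
  have hsum_sc : ∑ y ∈ sᶜ, (f + g) y = m := (sum_congr rfl hsc).trans (mem_piAntidiag.1 hg).1
  have hsum : ∑ y, (f + g) y = k + m := by rw [← sum_add_sum_compl s, hsum_s, hsum_sc]
  rw [multinomialLaw_eq_multinomial_mul hsum, Nat.multinomial_univ_eq_choose_mul s, hsum,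
    hsum_s, Nat.multinomial_congr hs, Nat.multinomial_congr hsc, ← prod_mul_prod_compl s,
    prod_congr rfl fun y hy => congrArg (p y ^ ·) (hs y hy),
    prod_congr rfl fun y hy => congrArg (p y ^ ·) (hsc y hy)]
  push_cast
  ring

theorem sum_multinomialLaw_filter_sum_eq (p : α → ℝ) (s : Finset α) {n k : ℕ} (hk : k ≤ n) :
    ∑ N ∈ (univ.piAntidiag n).filter (fun N => ∑ y ∈ s, N y = k), multinomialLaw n p N =
      n.choose k * (∑ y ∈ s, p y) ^ k * (∑ y ∈ sᶜ, p y) ^ (n - k) := by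
  obtain ⟨m, rfl⟩ := Nat.exists_eq_add_of_le hk
  rw [sum_filter_piAntidiag_eq_sum_product s hk, Nat.add_sub_cancel_left,
    sum_pow_eq_sum_piAntidiag, sum_pow_eq_sum_piAntidiag, mul_assoc, sum_mul_sum, mul_sum,
    sum_product]
  refine sum_congr rfl fun f hf => ?_
  rw [mul_sum]
  refine sum_congr rfl fun g hg => ?_
  rw [multinomialLaw_add_of_mem_piAntidiag p hf hg, mul_assoc]

theorem oneReplacedLaw_summand_eq {p : α → ℝ} {n : ℕ} {N : α → ℕ} (hN : ∑ y, N y = n)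
    {z : α} (hz : N z ≠ 0) (hpz : p z ≠ 0) :
    (Nat.factorial (n - 1) : ℝ) /
        (((Nat.factorial (N z - 1) * ∏ y ∈ univ.erase z, Nat.factorial (N y)) : ℕ) : ℝ) *
        p z ^ (N z - 1) * ∏ y ∈ univ.erase z, p y ^ N y =
      N z / (n * p z) * multinomialLaw n p N := by
  obtain ⟨j, hj⟩ := Nat.exists_eq_succ_of_ne_zero hz
  obtain ⟨n', rfl⟩ : ∃ n', n = n' + 1 :=
    Nat.exists_eq_succ_of_ne_zero (hN ▸ (single_le_sum (fun y _ => Nat.zero_le (N y))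
      (mem_univ z)).trans_lt' (Nat.pos_of_ne_zero hz) |>.ne')
  rw [multinomialLaw, ← mul_prod_erase univ (fun y => Nat.factorial (N y)) (mem_univ z),
    ← mul_prod_erase univ (fun y => p y ^ N y) (mem_univ z)]
  simp only [hj, Nat.add_sub_cancel, Nat.factorial_succ, pow_succ]
  have : ((∏ y ∈ univ.erase z, Nat.factorial (N y) : ℕ) : ℝ) ≠ 0 := by
    exact_mod_cast (prod_pos fun y _ => Nat.factorial_pos (N y)).ne'
  push_cast
  field_simp

theorem oneReplacedLaw_eq_mul_sum {p : α → ℝ} (hp : ∀ y, p y ≠ 0) (r : α → ℝ) {n : ℕ}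
    {N : α → ℕ} (hN : ∑ y, N y = n) :
    oneReplacedLaw n p r N = multinomialLaw n p N * ∑ z, r z / p z * (N z / n) := by
  rw [oneReplacedLaw, mul_sum]
  refine sum_congr rfl fun z _ => ?_
  split_ifs with hz
  · simp [hz]
  · rw [oneReplacedLaw_summand_eq hN hz (hp z)]
    ring

end Multinomial

theorem sum_ite_mul_div_eq {α : Type*} [Fintype α] [DecidableEq α] (s : Finset α) (u v : ℝ)
    {n : ℕ} (hn : n ≠ 0) {N : α → ℕ} (hN : ∑ y, N y = n) :
    ∑ z, (if z ∈ s then u else v) * ((N z : ℝ) / n) =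
      u + ((∑ z ∈ sᶜ, N z : ℕ) : ℝ) / n * (v - u) := by
  have hsplit : ((∑ z ∈ s, N z : ℕ) : ℝ) + ((∑ z ∈ sᶜ, N z : ℕ) : ℝ) = n := by
    rw [← Nat.cast_add, sum_add_sum_compl, hN]
  have hs : ∑ z ∈ s, (if z ∈ s then u else v) * ((N z : ℝ) / n) =
      u * ∑ z ∈ s, (N z : ℝ) / n := by
    rw [mul_sum]; exact sum_congr rfl fun z hz => by rw [if_pos hz]
  have hsc : ∑ z ∈ sᶜ, (if z ∈ s then u else v) * ((N z : ℝ) / n) =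
      v * ∑ z ∈ sᶜ, (N z : ℝ) / n := by
    rw [mul_sum]; exact sum_congr rfl fun z hz => by rw [if_neg (mem_compl.1 hz)]
  rw [← sum_add_sum_compl s, hs, hsc, ← sum_div, ← sum_div, ← Nat.cast_sum, ← Nat.cast_sum]
  have : (n : ℝ) ≠ 0 := Nat.cast_ne_zero.2 hn
  field_simp
  linear_combination u * hsplit

theorem sum_max_sub_mul_eq_sum_fiberwise {β γ : Type*} [DecidableEq γ] {H : Finset β}
    {t : Finset γ} {K : β → γ} (hK : ∀ N ∈ H, K N ∈ t) {P Q : β → ℝ} {g : γ → ℝ}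
    (hP : ∀ N ∈ H, 0 ≤ P N) (hQ : ∀ N ∈ H, Q N = P N * g (K N)) (c : ℝ) :
    ∑ N ∈ H, max (Q N - c * P N) 0 =
      ∑ k ∈ t, (∑ N ∈ H.filter (fun N => K N = k), P N) * max (g k - c) 0 := by
  rw [← sum_fiberwise_of_maps_to hK]
  refine sum_congr rfl fun k _ => ?_
  rw [sum_mul]
  refine sum_congr rfl fun N hN => ?_
  obtain ⟨hNH, rfl⟩ := mem_filter.1 hN
  rw [hQ N hNH, mul_max_of_nonneg _ _ (hP N hNH), mul_zero, mul_sub, mul_comm c]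

section HalfBlock

variable {d : ℕ} [NeZero d]

/-- The paper's block `A_x = {x, …, x + d/2 - 1}` of `ZMod d`. -/
def halfBlock (x : ZMod d) : Finset (ZMod d) :=
  univ.filter fun y => (y - x).val < d / 2

noncomputable def halfBlockChannel (d : ℕ) (lam : ℝ) (x y : ZMod d) : ℝ :=
  if (y - x).val < d / 2 then 2 * lam / (d * (1 + lam)) else 2 / (d * (1 + lam))

theorem card_halfBlock (x : ZMod d) : (halfBlock x).card = d / 2 := by
  have hlt : ∀ k < d / 2, ((k : ℕ) : ZMod d).val = k := fun k hk =>
    ZMod.val_natCast_of_lt (hk.trans_le (Nat.div_le_self d 2))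
  rw [← card_range (d / 2)]
  refine card_nbij' (fun y => (y - x).val) (fun k => x + k) ?_ ?_ ?_ ?_
  · intro y hy
    simpa [halfBlock] using hy
  · intro k hk
    rw [mem_coe, mem_range] at hk
    simpa [halfBlock, hlt k hk] using hk
  · intro y _
    simp
  · intro k hk
    rw [mem_coe, mem_range] at hk
    simp [hlt k hk]

theorem card_compl_halfBlock (hd : Even d) (x : ZMod d) : (halfBlock x)ᶜ.card = d / 2 := by
  rw [card_compl, ZMod.card, card_halfBlock]
  obtain ⟨m, rfl⟩ := hd
  omega

/-- Since `d/2 = -(d/2)` in `ZMod d`, shifting the centre by `d/2` shifts every offset `y - x` by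
`d/2`, which exchanges the offsets `< d/2` with those `≥ d/2`. -/
theorem halfBlock_add_half (hd : Even d) (x : ZMod d) :
    halfBlock (x + ((d / 2 : ℕ) : ZMod d)) = (halfBlock x)ᶜ := by
  obtain ⟨m, hm⟩ := hd
  have hd0 := NeZero.pos d
  have hval : ((d / 2 : ℕ) : ZMod d).val = m := by
    rw [ZMod.val_natCast_of_lt (show d / 2 < d by omega)]; omega
  have hneg : -((d / 2 : ℕ) : ZMod d) = ((d / 2 : ℕ) : ZMod d) := by
    rw [neg_eq_iff_add_eq_zero, ← Nat.cast_add, show d / 2 + d / 2 = d by omega,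
      ZMod.natCast_self]
  ext y
  have hw := ZMod.val_lt (y - x)
  rw [mem_compl, halfBlock, halfBlock, mem_filter, mem_filter, sub_add_eq_sub_sub,
    sub_eq_add_neg _ ((d / 2 : ℕ) : ZMod d), hneg]
  simp only [mem_univ, true_and]
  rcases lt_or_ge (y - x).val m with h | h
  · rw [ZMod.val_add_of_lt (by omega), hval]
    omega
  · rw [ZMod.val_add_of_le (by omega), hval]
    omega

theorem halfBlockChannel_eq (lam : ℝ) (x y : ZMod d) :
    halfBlockChannel d lam x y =
      if y ∈ halfBlock x then lam * (2 / (d * (1 + lam))) else 2 / (d * (1 + lam)) := by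
  simp only [halfBlockChannel, halfBlock, mem_filter, mem_univ, true_and]
  split_ifs <;> ring

theorem halfBlockChannel_pos {lam : ℝ} (hlam : 0 < lam) (x y : ZMod d) :
    0 < halfBlockChannel d lam x y := by
  have : (0 : ℝ) < d := Nat.cast_pos.2 (NeZero.pos d)
  rw [halfBlockChannel]
  split_ifs <;> positivity

theorem sum_compl_halfBlock_halfBlockChannel (hd : Even d) {lam : ℝ} (hlam : 1 + lam ≠ 0)
    (x : ZMod d) : ∑ y ∈ (halfBlock x)ᶜ, halfBlockChannel d lam x y = 1 / (1 + lam) := by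
  rw [sum_congr rfl fun y hy => by rw [halfBlockChannel_eq, if_neg (mem_compl.1 hy)],
    sum_const, card_compl_halfBlock hd, nsmul_eq_mul,
    Nat.cast_div_charZero (even_iff_two_dvd.1 hd)]
  have : (d : ℝ) ≠ 0 := Nat.cast_ne_zero.2 (NeZero.ne d)
  field_simp
  norm_num

theorem sum_halfBlock_halfBlockChannel (hd : Even d) {lam : ℝ} (hlam : 1 + lam ≠ 0)
    (x : ZMod d) : ∑ y ∈ halfBlock x, halfBlockChannel d lam x y = 1 - 1 / (1 + lam) := by
  rw [sum_congr rfl fun y hy => by rw [halfBlockChannel_eq, if_pos hy],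
    sum_const, card_halfBlock, nsmul_eq_mul, Nat.cast_div_charZero (even_iff_two_dvd.1 hd)]
  have : (d : ℝ) ≠ 0 := Nat.cast_ne_zero.2 (NeZero.ne d)
  field_simp
  ring

theorem halfBlockChannel_add_half_div (hd : Even d) {lam : ℝ} (hlam : 0 < lam)
    (x y : ZMod d) :
    halfBlockChannel d lam (x + ((d / 2 : ℕ) : ZMod d)) y / halfBlockChannel d lam x y =
      if y ∈ halfBlock x then lam⁻¹ else lam := by
  have : (0 : ℝ) < d := Nat.cast_pos.2 (NeZero.pos d)
  simp only [halfBlockChannel_eq, halfBlock_add_half hd, mem_compl]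
  split_ifs <;> field_simp

theorem sum_filter_multinomialLaw_halfBlockChannel (hd : Even d) {lam : ℝ} (hlam : 1 + lam ≠ 0)
    (x : ZMod d) {n k : ℕ} (hk : k ≤ n) :
    ∑ N ∈ (univ.piAntidiag n).filter (fun N => ∑ y ∈ (halfBlock x)ᶜ, N y = k),
        multinomialLaw n (halfBlockChannel d lam x) N =
      n.choose k * (1 / (1 + lam)) ^ k * (1 - 1 / (1 + lam)) ^ (n - k) := by
  rw [sum_multinomialLaw_filter_sum_eq _ _ hk, compl_compl,
    sum_compl_halfBlock_halfBlockChannel hd hlam, sum_halfBlock_halfBlockChannel hd hlam]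

theorem oneReplacedLaw_halfBlockChannel (hd : Even d) {lam : ℝ} (hlam : 0 < lam) (x : ZMod d)
    {n : ℕ} (hn : n ≠ 0) {N : ZMod d → ℕ} (hN : ∑ y, N y = n) :
    oneReplacedLaw n (halfBlockChannel d lam x)
        (halfBlockChannel d lam (x + ((d / 2 : ℕ) : ZMod d))) N =
      multinomialLaw n (halfBlockChannel d lam x) N *
        (lam⁻¹ + ((∑ y ∈ (halfBlock x)ᶜ, N y : ℕ) : ℝ) / n * (lam - lam⁻¹)) := by
  rw [oneReplacedLaw_eq_mul_sum (fun y => (halfBlockChannel_pos hlam x y).ne') _ hN]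
  simp only [halfBlockChannel_add_half_div hd hlam]
  rw [sum_ite_mul_div_eq _ _ _ hn hN]

end HalfBlock

theorem half_block_privacy_curve_general (d : ℕ) [NeZero d] (hdeven : Even d)
    (lam : ℝ) (hlam : 1 < lam) (n : ℕ) (hn : 1 ≤ n)
    (W : ZMod d → ZMod d → ℝ)
    (hW : ∀ x y : ZMod d, W x y =
        if (y - x).val < d / 2 then 2 * lam / (d * (1 + lam)) else 2 / (d * (1 + lam)))
    (a b : ZMod d) (hb : b = a + ((d / 2 : ℕ) : ZMod d))
    (H : Finset (ZMod d → ℕ))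
    (hH : H = (Fintype.piFinset fun _ : ZMod d => Finset.range (n + 1)).filter
        (fun N => ∑ y, N y = n))
    (P Q : (ZMod d → ℕ) → ℝ)
    (hP : ∀ N, P N = (Nat.factorial n : ℝ) / ((∏ y, Nat.factorial (N y) : ℕ) : ℝ) *
        ∏ y, (W a y) ^ (N y))
    (hQ : ∀ N, Q N = ∑ z, W b z * (if N z = 0 then 0 else
        (Nat.factorial (n - 1) : ℝ) /
          (((Nat.factorial (N z - 1) * ∏ y ∈ Finset.univ.erase z, Nat.factorial (N y)) : ℕ) : ℝ) *
          (W a z) ^ (N z - 1) * ∏ y ∈ Finset.univ.erase z, (W a y) ^ (N y)))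
    (K : (ZMod d → ℕ) → ℕ)
    (hK : ∀ N, K N = ∑ y ∈ Finset.univ.filter (fun y : ZMod d => ¬ (y - a).val < d / 2), N y)
    (qq : ℝ) (hqq : qq = 1 / (1 + lam)) :
    -- (i) under P, K is Bin(n, 1/(1+λ))
    (∀ k ≤ n, ∑ N ∈ H.filter (fun N => K N = k), P N
        = (n.choose k : ℝ) * qq ^ k * (1 - qq) ^ (n - k))
    -- (ii) exact likelihood ratio
    ∧ (∀ N ∈ H, Q N / P N = lam⁻¹ + ((K N : ℝ) / n) * (lam - lam⁻¹))
    -- (iii) exact privacy curve = binary randomized response curve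
    ∧ (∀ ε : ℝ, 0 ≤ ε →
        ∑ N ∈ H, max (Q N - Real.exp ε * P N) 0
          = ∑ k ∈ Finset.range (n + 1), (n.choose k : ℝ) * qq ^ k * (1 - qq) ^ (n - k) *
              max (lam⁻¹ + ((k : ℝ) / n) * (lam - lam⁻¹) - Real.exp ε) 0) := by
  obtain rfl : W = halfBlockChannel d lam := funext fun x => funext (hW x)
  obtain rfl : H = univ.piAntidiag n := hH.trans (piAntidiag_univ_eq_filter_piFinset n).symm
  obtain rfl : P = multinomialLaw n (halfBlockChannel d lam a) := funext hP
  obtain rfl : Q = oneReplacedLaw n (halfBlockChannel d lam a) (halfBlockChannel d lam b) :=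
    funext hQ
  obtain rfl : K = fun N => ∑ y ∈ (halfBlock a)ᶜ, N y :=
    funext fun N => (hK N).trans (by rw [halfBlock, compl_filter])
  subst hb hqq
  have hlam0 : 0 < lam := by linarith
  have hpos := multinomialLaw_pos (halfBlockChannel_pos hlam0 a) n
  have binomial k (hk : k ≤ n) :=
    sum_filter_multinomialLaw_halfBlockChannel hdeven (by linarith : 1 + lam ≠ 0) a hk
  have ratio N (hN : N ∈ univ.piAntidiag n) :=
    oneReplacedLaw_halfBlockChannel hdeven hlam0 a (by omega) (mem_piAntidiag.1 hN).1
  refine ⟨binomial, fun N hN => ?_, fun ε _ => ?_⟩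
  · rw [ratio N hN, mul_div_cancel_left₀ _ (hpos N).ne']
  · have hK_mem (N) (hN : N ∈ univ.piAntidiag n) : ∑ y ∈ (halfBlock a)ᶜ, N y ∈ range (n + 1) :=
      mem_range.2 <| Nat.lt_succ_of_le <| (mem_piAntidiag.1 hN).1 ▸
        sum_le_sum_of_subset (subset_univ _)
    rw [sum_max_sub_mul_eq_sum_fiberwise hK_mem (fun N _ => (hpos N).le)
      (g := fun k : ℕ => lam⁻¹ + (k : ℝ) / n * (lam - lam⁻¹)) ratio]
    exact sum_congr rfl fun k hk => by rw [binomial k (Nat.lt_succ_iff.1 (mem_range.1 hk))]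

/-- **Half-block channel: binomial quotient statistic and the exact privacy curve of
binary randomized response** (Theorem 5.2(iii)–(iv)).  For the cyclic half-block channel,
the opposite pair `b = a + d/2`, `P` and `Q` the two histogram laws, and
`K(N) = ∑_{y ∉ A_a} N_y`: (i) under `P`, `K ∼ Bin(n, 1/(1+λ))`;
(ii) `Q(N)/P(N) = λ⁻¹ + (K(N)/n)(λ − λ⁻¹)`; consequently (iii) for every `ε ≥ 0`
the privacy curve `∑_N (Q(N) − e^ε P(N))₊` equals the binary randomized-response curve
`∑_{k≤n} C(n,k) q^k (1−q)^{n−k} (λ⁻¹ + (k/n)(λ−λ⁻¹) − e^ε)₊` with `q = 1/(1+λ)`. -/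
theorem half_block_privacy_curve (d : ℕ) [NeZero d] (hd : 2 ≤ d) (hdeven : Even d)
    (lam : ℝ) (hlam : 1 < lam) (n : ℕ) (hn : 1 ≤ n)
    (W : ZMod d → ZMod d → ℝ)
    (hW : ∀ x y : ZMod d, W x y =
        if (y - x).val < d / 2 then 2 * lam / (d * (1 + lam)) else 2 / (d * (1 + lam)))
    (a b : ZMod d) (hb : b = a + ((d / 2 : ℕ) : ZMod d))
    (H : Finset (ZMod d → ℕ))
    (hH : H = (Fintype.piFinset fun _ : ZMod d => Finset.range (n + 1)).filter
        (fun N => ∑ y, N y = n))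
    (P Q : (ZMod d → ℕ) → ℝ)
    (hP : ∀ N, P N = (Nat.factorial n : ℝ) / ((∏ y, Nat.factorial (N y) : ℕ) : ℝ) *
        ∏ y, (W a y) ^ (N y))
    (hQ : ∀ N, Q N = ∑ z, W b z * (if N z = 0 then 0 else
        (Nat.factorial (n - 1) : ℝ) /
          (((Nat.factorial (N z - 1) * ∏ y ∈ Finset.univ.erase z, Nat.factorial (N y)) : ℕ) : ℝ) *
          (W a z) ^ (N z - 1) * ∏ y ∈ Finset.univ.erase z, (W a y) ^ (N y)))
    (K : (ZMod d → ℕ) → ℕ)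
    (hK : ∀ N, K N = ∑ y ∈ Finset.univ.filter (fun y : ZMod d => ¬ (y - a).val < d / 2), N y)
    (qq : ℝ) (hqq : qq = 1 / (1 + lam)) :
    -- (i) under P, K is Bin(n, 1/(1+λ))
    (∀ k ≤ n, ∑ N ∈ H.filter (fun N => K N = k), P N
        = (n.choose k : ℝ) * qq ^ k * (1 - qq) ^ (n - k))
    -- (ii) exact likelihood ratio
    ∧ (∀ N ∈ H, Q N / P N = lam⁻¹ + ((K N : ℝ) / n) * (lam - lam⁻¹))
    -- (iii) exact privacy curve = binary randomized response curve
    ∧ (∀ ε : ℝ, 0 ≤ ε →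
        ∑ N ∈ H, max (Q N - Real.exp ε * P N) 0
          = ∑ k ∈ Finset.range (n + 1), (n.choose k : ℝ) * qq ^ k * (1 - qq) ^ (n - k) *
              max (lam⁻¹ + ((k : ℝ) / n) * (lam - lam⁻¹) - Real.exp ε) 0) :=
  half_block_privacy_curve_general d hdeven lam hlam n hn W hW a b hb H hH P Q hP hQ K hK qq hqq
end

section
/- Let ε₀ > 0 and λ = e^{ε₀}. For each d ≥ 2, let W_d : Fin d → Fin d → ℝ be a channel with strictly positive entries, rows probability vectors, satisfying the λ-ratio bound. For inputs a ≠ b, let ν_{ab,d} be the pushforward to ℝ of the law W_d(·|a) under the likelihood-ratio map y ↦ W_d(y|b)/W_d(y|a) (a probability measure supported in [λ^{-1}, λ]), and let I_d^★ = max_{a≠b} χ²(W_d(·|b) ‖ W_d(·|a)). Then I_d^★ → 0 as d → ∞ if and only if for every choice of pairs a_d ≠ b_d (one pair for each d), the measures ν_{a_d b_d, d} converge weakly to the Dirac measure δ₁ as d → ∞. -/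
open Finset BigOperators MeasureTheory Filter Topology


lemma integral_comb {n : ℕ} (c : Fin n → ℝ) (hc : ∀ y, 0 ≤ c y) (p : Fin n → ℝ)
    (f : BoundedContinuousFunction ℝ ℝ) :
    ∫ x, f x ∂(∑ y, ENNReal.ofReal (c y) • Measure.dirac (p y)) = ∑ y, c y * f (p y) := by
  rw [MeasureTheory.integral_finset_sum_measure]
  · refine Finset.sum_congr rfl fun y _ => ?_
    rw [MeasureTheory.integral_smul_measure, MeasureTheory.integral_dirac,
      ENNReal.toReal_ofReal (hc y), smul_eq_mul]
  · intro y _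
    exact (f.integrable _).smul_measure ENNReal.ofReal_ne_top

lemma key_est {n : ℕ} (c r : Fin n → ℝ) (hc : ∀ y, 0 ≤ c y) (hsum : ∑ y, c y = 1)
    (f : BoundedContinuousFunction ℝ ℝ) (ε δ : ℝ) (hε : 0 < ε) (hδ : 0 < δ)
    (hcont : ∀ x : ℝ, |x - 1| < δ → |f x - f 1| ≤ ε / 2)
    (hS : (2 * ‖f‖ + 1) * (∑ y, c y * (r y - 1) ^ 2) < δ ^ 2 * (ε / 2)) :
    |(∑ y, c y * f (r y)) - f 1| < ε := by
  set S := ∑ y, c y * (r y - 1) ^ 2 with hSdef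
  set T : Finset (Fin n) := Finset.univ.filter (fun y => δ ≤ |r y - 1|) with hT
  set t := ∑ y ∈ T, c y with ht
  have ht0 : 0 ≤ t := Finset.sum_nonneg fun y _ => hc y
  have hcheb : δ ^ 2 * t ≤ S := by
    rw [ht, Finset.mul_sum]
    refine le_trans (Finset.sum_le_sum fun y hy => ?_)
      (Finset.sum_le_sum_of_subset_of_nonneg (Finset.subset_univ T)
        fun y _ _ => mul_nonneg (hc y) (sq_nonneg _))
    have h1 : δ ≤ |r y - 1| := (Finset.mem_filter.mp hy).2
    have h2 : δ ^ 2 ≤ (r y - 1) ^ 2 := by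
      rw [← sq_abs (r y - 1)]; exact pow_le_pow_left₀ hδ.le h1 2
    nlinarith [mul_le_mul_of_nonneg_right h2 (hc y)]
  have hnorm : 0 ≤ ‖f‖ := norm_nonneg _
  have hdiff : (∑ y, c y * f (r y)) - f 1 = ∑ y, c y * (f (r y) - f 1) := by
    simp only [mul_sub, Finset.sum_sub_distrib, ← Finset.sum_mul, hsum, one_mul]
  rw [hdiff]
  have habs : |∑ y, c y * (f (r y) - f 1)| ≤ ∑ y, c y * |f (r y) - f 1| := by
    refine le_trans (Finset.abs_sum_le_sum_abs _ _) (le_of_eq ?_)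
    exact Finset.sum_congr rfl fun y _ => by rw [abs_mul, abs_of_nonneg (hc y)]
  refine lt_of_le_of_lt habs ?_
  have hsplit := Finset.sum_filter_add_sum_filter_not Finset.univ
    (fun y => δ ≤ |r y - 1|) (fun y => c y * |f (r y) - f 1|)
  rw [← hsplit]
  have hb1 : ∑ y ∈ T, c y * |f (r y) - f 1| ≤ 2 * ‖f‖ * t := by
    rw [ht, Finset.mul_sum]
    refine Finset.sum_le_sum fun y hy => ?_
    have : |f (r y) - f 1| ≤ 2 * ‖f‖ := by
      have := f.dist_le_two_norm (r y) 1
      rwa [Real.dist_eq] at this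
    nlinarith [hc y]
  have hb2 : ∑ y ∈ Finset.univ.filter (fun y => ¬ δ ≤ |r y - 1|), c y * |f (r y) - f 1|
      ≤ ε / 2 := by
    have h1 : ∑ y ∈ Finset.univ.filter (fun y => ¬ δ ≤ |r y - 1|), c y * |f (r y) - f 1|
        ≤ ∑ y ∈ Finset.univ.filter (fun y => ¬ δ ≤ |r y - 1|), c y * (ε / 2) := by
      refine Finset.sum_le_sum fun y hy => ?_
      have h2 : |r y - 1| < δ := lt_of_not_ge (Finset.mem_filter.mp hy).2
      exact mul_le_mul_of_nonneg_left (hcont _ h2) (hc y)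
    refine le_trans h1 ?_
    rw [← Finset.sum_mul]
    have h3 : ∑ y ∈ Finset.univ.filter (fun y => ¬ δ ≤ |r y - 1|), c y ≤ 1 := by
      rw [← hsum]
      exact Finset.sum_le_sum_of_subset_of_nonneg (Finset.subset_univ _)
        fun y _ _ => hc y
    nlinarith
  have hfin : 2 * ‖f‖ * t < ε / 2 := by nlinarith [sq_nonneg δ, mul_pos hδ hδ]
  calc (∑ y ∈ T, c y * |f (r y) - f 1|) +
        ∑ y ∈ Finset.univ.filter (fun y => ¬ δ ≤ |r y - 1|), c y * |f (r y) - f 1|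
      ≤ 2 * ‖f‖ * t + ε / 2 := add_le_add hb1 hb2
    _ < ε := by linarith

/-- truncated squared distance to 1, as a bounded continuous function -/
noncomputable def truncSq (C : ℝ) (hC : 0 ≤ C) : BoundedContinuousFunction ℝ ℝ :=
  BoundedContinuousFunction.mkOfBound
    ⟨fun x => min ((x - 1) ^ 2) C, by fun_prop⟩ C
    (by
      intro x y
      rw [Real.dist_eq]
      have h1 : (0:ℝ) ≤ min ((x - 1) ^ 2) C := le_min (sq_nonneg _) hC
      have h2 : (0:ℝ) ≤ min ((y - 1) ^ 2) C := le_min (sq_nonneg _) hC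
      have h3 : min ((x - 1) ^ 2) C ≤ C := min_le_right _ _
      have h4 : min ((y - 1) ^ 2) C ≤ C := min_le_right _ _
      rw [abs_sub_le_iff]
      constructor <;> simp only [ContinuousMap.coe_mk] <;> linarith)

@[simp] lemma truncSq_apply (C : ℝ) (hC : 0 ≤ C) (x : ℝ) :
    truncSq C hC x = min ((x - 1) ^ 2) C := rfl

/-- **Dilution ↔ collapse of all likelihood-ratio laws to `δ₁`** (Theorem 6.2(i)).
The alphabet size is written as `d = k + 2` so that pairs of distinct inputs exist for
every index.  The worst-case pairwise chi-square divergence `I_d^★` tends to `0` iff,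
for every choice of pairs `a_d ≠ b_d`, the pushforward of `W_d(·|a_d)` under the
likelihood-ratio map `y ↦ W_d(y|b_d)/W_d(y|a_d)` converges weakly to the Dirac mass at `1`
(weak convergence being tested against all bounded continuous functions). -/
theorem diluting_iff_lr_law_collapse (ε₀ : ℝ) (hε : 0 < ε₀) (lam : ℝ)
    (hlam : lam = Real.exp ε₀)
    (W : (k : ℕ) → Fin (k + 2) → Fin (k + 2) → ℝ)
    (hpos : ∀ k x y, 0 < W k x y)
    (hrow : ∀ k x, ∑ y, W k x y = 1)
    (hldp : ∀ k x x' y, W k x y ≤ lam * W k x' y) :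
    Tendsto (fun k => sSup {c : ℝ | ∃ a b : Fin (k + 2), a ≠ b ∧
          c = ∑ y, (W k b y - W k a y) ^ 2 / W k a y}) atTop (nhds 0)
    ↔
    ∀ (a b : (k : ℕ) → Fin (k + 2)), (∀ k, a k ≠ b k) →
      ∀ f : BoundedContinuousFunction ℝ ℝ,
        Tendsto (fun k => ∫ x, f x ∂(∑ y : Fin (k + 2),
            ENNReal.ofReal (W k (a k) y) • Measure.dirac (W k (b k) y / W k (a k) y)))
          atTop (nhds (f 1)) := by
  have hlam1 : 1 < lam := by
    rw [hlam]; nlinarith [Real.add_one_le_exp ε₀]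
  have hlam0 : 0 < lam := by linarith
  have hchi : ∀ k (a b : Fin (k + 2)),
      ∑ y, (W k b y - W k a y) ^ 2 / W k a y
        = ∑ y, W k a y * (W k b y / W k a y - 1) ^ 2 := by
    intro k a b
    refine Finset.sum_congr rfl fun y _ => ?_
    have h := (hpos k a y).ne'
    field_simp
  have hfin : ∀ k, Set.Finite {c : ℝ | ∃ a b : Fin (k + 2), a ≠ b ∧
      c = ∑ y, (W k b y - W k a y) ^ 2 / W k a y} := by
    intro k
    refine Set.Finite.subset (Set.finite_range
      (fun p : Fin (k + 2) × Fin (k + 2) => ∑ y, (W k p.2 y - W k p.1 y) ^ 2 / W k p.1 y)) ?_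
    rintro c ⟨a, b, -, rfl⟩
    exact ⟨(a, b), rfl⟩
  have hne : ∀ k, Set.Nonempty {c : ℝ | ∃ a b : Fin (k + 2), a ≠ b ∧
      c = ∑ y, (W k b y - W k a y) ^ 2 / W k a y} := by
    intro k
    exact ⟨_, 0, 1, by simp [Fin.ext_iff], rfl⟩
  constructor
  · intro hsup a b hab f
    set S : ℕ → ℝ := fun k => ∑ y, (W k (b k) y - W k (a k) y) ^ 2 / W k (a k) y with hSdef
    have hS0 : ∀ k, 0 ≤ S k := fun k =>
      Finset.sum_nonneg fun y _ => div_nonneg (sq_nonneg _) (hpos _ _ _).le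
    have hSle : ∀ k, S k ≤ sSup {c : ℝ | ∃ a' b' : Fin (k + 2), a' ≠ b' ∧
        c = ∑ y, (W k b' y - W k a' y) ^ 2 / W k a' y} := fun k =>
      le_csSup (hfin k).bddAbove ⟨a k, b k, hab k, rfl⟩
    have hStend : Tendsto S atTop (nhds 0) := squeeze_zero hS0 hSle hsup
    have hI : ∀ k, ∫ x, f x ∂(∑ y : Fin (k + 2),
        ENNReal.ofReal (W k (a k) y) • Measure.dirac (W k (b k) y / W k (a k) y))
          = ∑ y, W k (a k) y * f (W k (b k) y / W k (a k) y) := fun k =>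
      integral_comb _ (fun y => (hpos _ _ y).le) _ f
    rw [Metric.tendsto_atTop]
    intro ε hεp
    obtain ⟨δ, hδ, hcont⟩ := Metric.continuousAt_iff.mp
      (f.continuous.continuousAt (x := 1)) (ε / 2) (by positivity)
    have hc' : ∀ x : ℝ, |x - 1| < δ → |f x - f 1| ≤ ε / 2 := by
      intro x hx
      have := hcont (show dist x 1 < δ by rwa [Real.dist_eq])
      rw [Real.dist_eq] at this
      exact this.le
    obtain ⟨N, hN⟩ := (Metric.tendsto_atTop.mp hStend)
      (δ ^ 2 * (ε / 2) / (2 * ‖f‖ + 1)) (by positivity)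
    refine ⟨N, fun k hk => ?_⟩
    have hSk := hN k hk
    rw [Real.dist_eq, sub_zero, abs_of_nonneg (hS0 k)] at hSk
    have hSk' : (2 * ‖f‖ + 1) *
        (∑ y, W k (a k) y * (W k (b k) y / W k (a k) y - 1) ^ 2) < δ ^ 2 * (ε / 2) := by
      rw [← hchi k (a k) (b k)]
      rw [lt_div_iff₀ (by positivity)] at hSk
      linarith
    rw [Real.dist_eq, hI k]
    exact key_est (fun y => W k (a k) y) (fun y => W k (b k) y / W k (a k) y)
      (fun y => (hpos _ _ y).le) (hrow k (a k)) f ε δ hεp hδ hc' hSk'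
  · intro hcol
    have hmem : ∀ k, ∃ a b : Fin (k + 2), a ≠ b ∧
        sSup {c : ℝ | ∃ a' b' : Fin (k + 2), a' ≠ b' ∧
          c = ∑ y, (W k b' y - W k a' y) ^ 2 / W k a' y}
          = ∑ y, (W k b y - W k a y) ^ 2 / W k a y := fun k =>
      Set.Nonempty.csSup_mem (hne k) (hfin k)
    choose a b hab heq using hmem
    have hC : (0:ℝ) ≤ lam ^ 2 := sq_nonneg _
    have htd := hcol a b hab (truncSq (lam ^ 2) hC)
    have h1 : truncSq (lam ^ 2) hC 1 = 0 := by
      simp only [truncSq_apply, sub_self]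
      simpa using hC
    rw [h1] at htd
    have hmin : ∀ k (y : Fin (k + 2)),
        min ((W k (b k) y / W k (a k) y - 1) ^ 2) (lam ^ 2)
          = (W k (b k) y / W k (a k) y - 1) ^ 2 := by
      intro k y
      refine min_eq_left ?_
      set r := W k (b k) y / W k (a k) y with hr
      have hr0 : 0 < r := div_pos (hpos _ _ _) (hpos _ _ _)
      have hrle : r ≤ lam := (div_le_iff₀ (hpos _ _ _)).mpr (hldp k (b k) (a k) y)
      have habs : |r - 1| ≤ lam := abs_le.mpr ⟨by linarith, by linarith⟩
      calc (r - 1) ^ 2 = |r - 1| ^ 2 := (sq_abs _).symm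
        _ ≤ lam ^ 2 := pow_le_pow_left₀ (abs_nonneg _) habs 2
    have h2 : ∀ k, ∫ x, truncSq (lam ^ 2) hC x ∂(∑ y : Fin (k + 2),
        ENNReal.ofReal (W k (a k) y) • Measure.dirac (W k (b k) y / W k (a k) y))
        = sSup {c : ℝ | ∃ a' b' : Fin (k + 2), a' ≠ b' ∧
          c = ∑ y, (W k b' y - W k a' y) ^ 2 / W k a' y} := by
      intro k
      rw [integral_comb _ (fun y => (hpos _ _ y).le) _ _, heq k, hchi k (a k) (b k)]
      refine Finset.sum_congr rfl fun y _ => ?_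
      rw [truncSq_apply, hmin k y]
    exact Tendsto.congr h2 htd
end

section
/- Let ε₀ > 0 and λ = e^{ε₀}. For each d ≥ 2, let W_d : Fin d → Fin d → ℝ be a channel with strictly positive entries, rows probability vectors, satisfying the λ-ratio bound, and define ν_{ab,d} and I_d^★ as the pairwise likelihood-ratio laws and the worst-case pairwise χ² divergence. Then limsup_{d→∞} I_d^★ > 0 if and only if there exist a strictly increasing sequence d_m → ∞, pairs a_m ≠ b_m in Fin d_m, and a probability measure ν on ℝ with ν ≠ δ₁ such that ν_{a_m b_m, d_m} converges weakly to ν as m → ∞. -/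
/-!
All likelihood ratios lie in `[0, λ]`, so every law `ν_{ab,d}` lives on one compact set, on which
the χ² divergence `χ²(W_d(·|b) ‖ W_d(·|a))` is the integral against `ν_{ab,d}` of a single bounded
continuous test function, `x ↦ min ((x - 1)², 1 + λ²)`. This function vanishes only at `1`, so a
weak limit is `δ₁` exactly when it integrates the test function to `0`. Given persistence, pick
pairs realising `I_d^★ > c > 0` along a subsequence and extract a weak limit by Prokhorov's
theorem; its integral is at least `c`. Conversely, the integrals of the test function along a
nondegenerate limit converge to a positive number and are bounded by `I_d^★`.
-/

open MeasureTheory Filter Topology TopologicalSpace BoundedContinuousFunction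

noncomputable section

section LikelihoodRatio

variable {α : Type*} [Fintype α]

def chiSq (q p : α → ℝ) : ℝ := ∑ y, (q y - p y) ^ 2 / p y

def likelihoodRatioLaw (p q : α → ℝ) : Measure ℝ :=
  ∑ y, ENNReal.ofReal (p y) • Measure.dirac (q y / p y)

lemma chiSq_nonneg {q p : α → ℝ} (hp : ∀ y, 0 ≤ p y) : 0 ≤ chiSq q p :=
  Finset.sum_nonneg fun y _ => div_nonneg (sq_nonneg _) (hp y)

lemma chiSq_eq_sum_mul_sq {q p : α → ℝ} (hp : ∀ y, 0 < p y) :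
    chiSq q p = ∑ y, p y * (q y / p y - 1) ^ 2 := by
  refine Finset.sum_congr rfl fun y _ => ?_
  have := (hp y).ne'
  field_simp

lemma chiSq_le_of_sq_le {q p : α → ℝ} {C : ℝ} (hp : ∀ y, 0 < p y) (hp1 : ∑ y, p y = 1)
    (hC : ∀ y, (q y / p y - 1) ^ 2 ≤ C) : chiSq q p ≤ C :=
  calc chiSq q p = ∑ y, p y * (q y / p y - 1) ^ 2 := chiSq_eq_sum_mul_sq hp
    _ ≤ ∑ y, p y * C := Finset.sum_le_sum fun y _ => mul_le_mul_of_nonneg_left (hC y) (hp y).le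
    _ = C := by rw [← Finset.sum_mul, hp1, one_mul]

lemma isProbabilityMeasure_likelihoodRatioLaw {p : α → ℝ} (q : α → ℝ) (hp : ∀ y, 0 ≤ p y)
    (hp1 : ∑ y, p y = 1) : IsProbabilityMeasure (likelihoodRatioLaw p q) := by
  constructor
  simp only [likelihoodRatioLaw, Measure.coe_finsetSum, Finset.sum_apply, Measure.smul_apply,
    measure_univ, smul_eq_mul, mul_one]
  rw [← ENNReal.ofReal_sum_of_nonneg fun y _ => hp y, hp1, ENNReal.ofReal_one]

lemma likelihoodRatioLaw_compl_eq_zero {p q : α → ℝ} {s : Set ℝ} (hs : ∀ y, q y / p y ∈ s) :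
    likelihoodRatioLaw p q sᶜ = 0 := by
  simp [likelihoodRatioLaw, hs]

lemma integral_likelihoodRatioLaw {p : α → ℝ} (q : α → ℝ) (hp : ∀ y, 0 ≤ p y) (f : ℝ →ᵇ ℝ) :
    ∫ x, f x ∂likelihoodRatioLaw p q = ∑ y, p y * f (q y / p y) := by
  rw [likelihoodRatioLaw, integral_finsetSum_measure fun y _ =>
    (f.integrable _).smul_measure ENNReal.ofReal_ne_top]
  refine Finset.sum_congr rfl fun y _ => ?_
  rw [integral_smul_measure, integral_dirac, ENNReal.toReal_ofReal (hp y), smul_eq_mul]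

end LikelihoodRatio

/-- Truncation makes the χ² integrand `(x - 1)²` a bounded test function. -/
def truncChiSqIntegrand (C : ℝ) : ℝ →ᵇ ℝ :=
  ofNormedAddCommGroup (fun x => min ((x - 1) ^ 2) C) (by fun_prop) |C| fun x => by
    rw [Real.norm_eq_abs, abs_le]
    exact ⟨le_min ((neg_nonpos.mpr (abs_nonneg C)).trans (sq_nonneg _)) (neg_abs_le C),
      (min_le_right _ _).trans (le_abs_self C)⟩

lemma truncChiSqIntegrand_apply (C x : ℝ) : truncChiSqIntegrand C x = min ((x - 1) ^ 2) C := rfl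

lemma support_truncChiSqIntegrand {C : ℝ} (hC : 0 < C) :
    Function.support (truncChiSqIntegrand C) = {1}ᶜ := by
  ext x
  refine not_congr ⟨fun h => ?_, fun h => by
    obtain rfl : x = 1 := h
    simp [truncChiSqIntegrand_apply, hC.le]⟩
  rcases min_eq_iff.mp h with ⟨h0, -⟩ | ⟨h0, -⟩
  · exact sub_eq_zero.mp ((pow_eq_zero_iff two_ne_zero).mp h0)
  · exact absurd h0 hC.ne'

lemma integral_truncChiSqIntegrand_likelihoodRatioLaw {α : Type*} [Fintype α] {p q : α → ℝ}
    {C : ℝ} (hp : ∀ y, 0 < p y) (hC : ∀ y, (q y / p y - 1) ^ 2 ≤ C) :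
    ∫ x, truncChiSqIntegrand C x ∂likelihoodRatioLaw p q = chiSq q p := by
  rw [integral_likelihoodRatioLaw q fun y => (hp y).le, chiSq_eq_sum_mul_sq hp]
  simp only [truncChiSqIntegrand_apply, min_eq_left (hC _)]

lemma MeasureTheory.Measure.eq_dirac_of_measure_compl_singleton_eq_zero {E : Type*}
    [MeasurableSpace E] [MeasurableSingletonClass E] {ν : Measure E} [IsProbabilityMeasure ν]
    {a : E} (h : ν {a}ᶜ = 0) : ν = Measure.dirac a := by
  have hae : ∀ᵐ x ∂ν, x ∈ ({a} : Set E) := mem_ae_iff.mpr h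
  rw [← Measure.restrict_eq_self_of_ae_mem hae, Measure.restrict_singleton,
    (prob_compl_eq_zero_iff (measurableSet_singleton a)).mp h, one_smul]

lemma integral_truncChiSqIntegrand_pos {ν : Measure ℝ} [IsProbabilityMeasure ν] {C : ℝ}
    (hC : 0 < C) (hν : ν ≠ Measure.dirac 1) : 0 < ∫ x, truncChiSqIntegrand C x ∂ν := by
  rw [integral_pos_iff_support_of_nonneg (f := truncChiSqIntegrand C)
    (fun x => le_min (sq_nonneg _) hC.le) ((truncChiSqIntegrand C).integrable ν),
    support_truncChiSqIntegrand hC, pos_iff_ne_zero]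
  exact fun h => hν (Measure.eq_dirac_of_measure_compl_singleton_eq_zero h)

/-- Prokhorov's theorem, in the form of sequential compactness. -/
lemma MeasureTheory.ProbabilityMeasure.exists_tendsto_subseq_of_measure_compl_eq_zero
    {E : Type*} [TopologicalSpace E] [T2Space E] [PseudoMetrizableSpace E] [SeparableSpace E]
    [MeasurableSpace E] [BorelSpace E] {K : Set E} (hK : IsCompact K)
    {μ : ℕ → ProbabilityMeasure E} (hμK : ∀ n, (μ n : Measure E) Kᶜ = 0) :
    ∃ ν : ProbabilityMeasure E, ∃ ψ : ℕ → ℕ, StrictMono ψ ∧ Tendsto (μ ∘ ψ) atTop (𝓝 ν) := by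
  have htight : IsTightMeasureSet {(ν : Measure E) | ν ∈ Set.range μ} :=
    isTightMeasureSet_iff_exists_isCompact_measure_compl_le.mpr fun _ _ =>
      ⟨K, hK, by rintro _ ⟨_, ⟨n, rfl⟩, rfl⟩; simp [hμK n]⟩
  obtain ⟨ν, -, ψ, hψ, hlim⟩ := (isCompact_closure_of_isTightMeasureSet htight).tendsto_subseq
    fun n => subset_closure (Set.mem_range_self n)
  exact ⟨ν, ψ, hψ, hlim⟩

lemma le_limsup_of_tendsto_of_le_comp {u v : ℕ → ℝ} {φ : ℕ → ℕ} {L : ℝ}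
    (hu : IsBoundedUnder (· ≤ ·) atTop u) (hφ : Tendsto φ atTop atTop)
    (hv : Tendsto v atTop (𝓝 L)) (hvu : ∀ i, v i ≤ u (φ i)) : L ≤ limsup u atTop :=
  forall_lt_imp_le_iff_le_of_dense.mp fun _ hc => le_limsup_of_frequently_le
    (hφ.frequently ((hv.eventually (lt_mem_nhds hc)).mono fun i hi =>
      hi.le.trans (hvu i)).frequently) hu

section PairwiseChiSq

variable {α : Type*} [Fintype α]

def maxPairwiseChiSq (W : α → α → ℝ) : ℝ :=
  sSup {c : ℝ | ∃ a b : α, a ≠ b ∧ c = chiSq (W b) (W a)}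

lemma finite_pairwiseChiSq (W : α → α → ℝ) :
    {c : ℝ | ∃ a b : α, a ≠ b ∧ c = chiSq (W b) (W a)}.Finite :=
  (Set.finite_range fun ab : α × α => chiSq (W ab.2) (W ab.1)).subset
    (by rintro _ ⟨a, b, -, rfl⟩; exact ⟨(a, b), rfl⟩)

lemma chiSq_le_maxPairwiseChiSq {W : α → α → ℝ} {a b : α} (hab : a ≠ b) :
    chiSq (W b) (W a) ≤ maxPairwiseChiSq W :=
  le_csSup (finite_pairwiseChiSq W).bddAbove ⟨a, b, hab, rfl⟩

lemma exists_eq_maxPairwiseChiSq {W : α → α → ℝ} (h : maxPairwiseChiSq W ≠ 0) :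
    ∃ a b : α, a ≠ b ∧ maxPairwiseChiSq W = chiSq (W b) (W a) := by
  refine Set.Nonempty.csSup_mem ?_ (finite_pairwiseChiSq W)
  by_contra hempty
  exact h (by rw [maxPairwiseChiSq, Set.not_nonempty_iff_eq_empty.mp hempty, Real.sSup_empty])

lemma maxPairwiseChiSq_nonneg {W : α → α → ℝ} (hW : ∀ a y, 0 ≤ W a y) :
    0 ≤ maxPairwiseChiSq W :=
  Real.sSup_nonneg (by rintro _ ⟨a, b, -, rfl⟩; exact chiSq_nonneg (hW a))

lemma maxPairwiseChiSq_le {W : α → α → ℝ} {C : ℝ} (hC0 : 0 ≤ C)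
    (hC : ∀ a b, chiSq (W b) (W a) ≤ C) : maxPairwiseChiSq W ≤ C :=
  Real.sSup_le (by rintro _ ⟨a, b, -, rfl⟩; exact hC a b) hC0

end PairwiseChiSq

lemma div_mem_Icc_of_le_mul {p q lam : ℝ} (hp : 0 < p) (hq : 0 ≤ q) (h : q ≤ lam * p) :
    q / p ∈ Set.Icc 0 lam :=
  ⟨div_nonneg hq hp.le, (div_le_iff₀ hp).mpr h⟩

lemma sq_sub_one_le_of_mem_Icc {r lam : ℝ} (hr : r ∈ Set.Icc 0 lam) :
    (r - 1) ^ 2 ≤ 1 + lam ^ 2 := by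
  nlinarith [hr.1, hr.2]

section ChannelFamily

variable {α : ℕ → Type*} [∀ k, Fintype (α k)]

def Persistent (W : ∀ k, α k → α k → ℝ) : Prop :=
  0 < limsup (fun k => maxPairwiseChiSq (W k)) atTop

def HasNondegenerateRatioLimit (W : ∀ k, α k → α k → ℝ) : Prop :=
  ∃ φ : ℕ → ℕ, StrictMono φ ∧
    ∃ (a b : ∀ i, α (φ i)), (∀ i, a i ≠ b i) ∧
      ∃ ν : Measure ℝ, IsProbabilityMeasure ν ∧ ν ≠ Measure.dirac 1 ∧
        ∀ f : ℝ →ᵇ ℝ,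
          Tendsto (fun i => ∫ x, f x ∂likelihoodRatioLaw (W (φ i) (a i)) (W (φ i) (b i)))
            atTop (𝓝 (∫ x, f x ∂ν))

variable {lam : ℝ} (W : ∀ k, α k → α k → ℝ)

theorem Persistent.hasNondegenerateRatioLimit (hpos : ∀ k x y, 0 < W k x y)
    (hrow : ∀ k x, ∑ y, W k x y = 1) (hldp : ∀ k x x' y, W k x y ≤ lam * W k x' y)
    (h : Persistent W) : HasNondegenerateRatioLimit W := by
  have hratio k (a b : α k) y : W k b y / W k a y ∈ Set.Icc 0 lam :=
    div_mem_Icc_of_le_mul (hpos k a y) (hpos k b y).le (hldp k b a y)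
  set c := limsup (fun k => maxPairwiseChiSq (W k)) atTop / 2
  obtain ⟨φ₀, hφ₀, hlarge⟩ := extraction_of_frequently_atTop
    (frequently_lt_of_lt_limsup (isCoboundedUnder_le_of_le atTop fun k =>
      maxPairwiseChiSq_nonneg fun a y => (hpos k a y).le) (half_lt_self h))
  choose a b hab hmax using fun i =>
    exists_eq_maxPairwiseChiSq ((half_pos h).trans (hlarge i)).ne'
  let μ i : ProbabilityMeasure ℝ :=
    ⟨likelihoodRatioLaw (W (φ₀ i) (a i)) (W (φ₀ i) (b i)),
      isProbabilityMeasure_likelihoodRatioLaw _ (fun y => (hpos _ _ y).le) (hrow _ _)⟩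
  obtain ⟨ν, ψ, hψ, hlim⟩ :=
    ProbabilityMeasure.exists_tendsto_subseq_of_measure_compl_eq_zero
      (isCompact_Icc (a := 0) (b := lam)) (μ := μ)
      fun _ => likelihoodRatioLaw_compl_eq_zero (hratio _ _ _)
  rw [ProbabilityMeasure.tendsto_iff_forall_integral_tendsto] at hlim
  refine ⟨φ₀ ∘ ψ, hφ₀.comp hψ, fun i => a (ψ i), fun i => b (ψ i), fun i => hab (ψ i), ν,
    inferInstance, fun hν => ?_, hlim⟩
  have hc : c ≤ ∫ x, truncChiSqIntegrand (1 + lam ^ 2) x ∂(ν : Measure ℝ) :=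
    ge_of_tendsto (hlim _) (Eventually.of_forall fun i => by
      change c ≤ ∫ x, _ ∂likelihoodRatioLaw _ _
      rw [integral_truncChiSqIntegrand_likelihoodRatioLaw (fun y => hpos _ _ y)
        (fun y => sq_sub_one_le_of_mem_Icc (hratio _ _ _ y)), ← hmax]
      exact (hlarge _).le)
  rw [hν, integral_dirac, truncChiSqIntegrand_apply, sub_self, zero_pow two_ne_zero,
    min_eq_left (by positivity)] at hc
  exact hc.not_gt (half_pos h)

theorem HasNondegenerateRatioLimit.persistent (hpos : ∀ k x y, 0 < W k x y)
    (hrow : ∀ k x, ∑ y, W k x y = 1) (hldp : ∀ k x x' y, W k x y ≤ lam * W k x' y)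
    (h : HasNondegenerateRatioLimit W) : Persistent W := by
  obtain ⟨φ, hφ, a, b, hab, ν, hν, hν1, hlim⟩ := h
  have hsq k (a b : α k) y : (W k b y / W k a y - 1) ^ 2 ≤ 1 + lam ^ 2 :=
    sq_sub_one_le_of_mem_Icc (div_mem_Icc_of_le_mul (hpos k a y) (hpos k b y).le (hldp k b a y))
  have hbdd : IsBoundedUnder (· ≤ ·) atTop fun k => maxPairwiseChiSq (W k) :=
    isBoundedUnder_of ⟨1 + lam ^ 2, fun k => maxPairwiseChiSq_le (by positivity) fun a b =>
      chiSq_le_of_sq_le (hpos k a) (hrow k a) (hsq k a b)⟩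
  refine (integral_truncChiSqIntegrand_pos (C := 1 + lam ^ 2) (by positivity) hν1).trans_le
    (le_limsup_of_tendsto_of_le_comp hbdd hφ.tendsto_atTop (hlim _) fun i => ?_)
  rw [integral_truncChiSqIntegrand_likelihoodRatioLaw (hpos _ _) (hsq _ _ _)]
  exact chiSq_le_maxPairwiseChiSq (hab i)

end ChannelFamily

end

theorem persistent_iff_nondegenerate_limit_general (lam : ℝ)
    (W : (k : ℕ) → Fin (k + 2) → Fin (k + 2) → ℝ)
    (hpos : ∀ k x y, 0 < W k x y)
    (hrow : ∀ k x, ∑ y, W k x y = 1)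
    (hldp : ∀ k x x' y, W k x y ≤ lam * W k x' y) :
    (0 < Filter.limsup (fun k => sSup {c : ℝ | ∃ a b : Fin (k + 2), a ≠ b ∧
          c = ∑ y, (W k b y - W k a y) ^ 2 / W k a y}) atTop)
    ↔
    ∃ φ : ℕ → ℕ, StrictMono φ ∧
      ∃ (a b : (i : ℕ) → Fin (φ i + 2)), (∀ i, a i ≠ b i) ∧
        ∃ ν : Measure ℝ, IsProbabilityMeasure ν ∧ ν ≠ Measure.dirac 1 ∧
          ∀ f : BoundedContinuousFunction ℝ ℝ,
            Tendsto (fun i => ∫ x, f x ∂(∑ y : Fin (φ i + 2),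
                ENNReal.ofReal (W (φ i) (a i) y) •
                  Measure.dirac (W (φ i) (b i) y / W (φ i) (a i) y)))
              atTop (nhds (∫ x, f x ∂ν)) :=
  ⟨Persistent.hasNondegenerateRatioLimit W hpos hrow hldp,
    HasNondegenerateRatioLimit.persistent W hpos hrow hldp⟩

/-- **Persistence ↔ existence of a nondegenerate subsequential weak limit**
(Theorem 6.2(ii)).  The alphabet size is written as `d = k + 2` so that pairs of distinct
inputs exist for every index.  `limsup I_d^★ > 0` iff there exist a strictly increasing
subsequence `d_m`, pairs `a_m ≠ b_m`, and a probability measure `ν ≠ δ₁` on `ℝ` such that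
the pairwise likelihood-ratio laws `ν_{a_m b_m, d_m}` converge weakly to `ν`. -/
theorem persistent_iff_nondegenerate_limit (ε₀ : ℝ) (hε : 0 < ε₀) (lam : ℝ)
    (hlam : lam = Real.exp ε₀)
    (W : (k : ℕ) → Fin (k + 2) → Fin (k + 2) → ℝ)
    (hpos : ∀ k x y, 0 < W k x y)
    (hrow : ∀ k x, ∑ y, W k x y = 1)
    (hldp : ∀ k x x' y, W k x y ≤ lam * W k x' y) :
    (0 < Filter.limsup (fun k => sSup {c : ℝ | ∃ a b : Fin (k + 2), a ≠ b ∧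
          c = ∑ y, (W k b y - W k a y) ^ 2 / W k a y}) atTop)
    ↔
    ∃ φ : ℕ → ℕ, StrictMono φ ∧
      ∃ (a b : (i : ℕ) → Fin (φ i + 2)), (∀ i, a i ≠ b i) ∧
        ∃ ν : Measure ℝ, IsProbabilityMeasure ν ∧ ν ≠ Measure.dirac 1 ∧
          ∀ f : BoundedContinuousFunction ℝ ℝ,
            Tendsto (fun i => ∫ x, f x ∂(∑ y : Fin (φ i + 2),
                ENNReal.ofReal (W (φ i) (a i) y) •
                  Measure.dirac (W (φ i) (b i) y / W (φ i) (a i) y)))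
              atTop (nhds (∫ x, f x ∂ν)) :=
  persistent_iff_nondegenerate_limit_general lam W hpos hrow hldp
end

section
/- Let d ≥ 2, let W : Fin d → Fin d → ℝ be a channel with strictly positive entries and rows probability vectors, fix inputs a ≠ b, set w(y) = W(y|b)/W(y|a) and I = χ²(W(·|b)‖W(·|a)) = ∑_y W(y|a)(w(y) − 1)². Let n ≥ 1, let Y₁,…,Y_n be i.i.d. with law W(·|a), and let L = (1/n) ∑_{i=1}^n w(Y_i). Then for every ε > 0: (i) E[(L − e^ε)₊] ≤ I/(n(e^ε − 1)); and (ii) E[(1 − e^ε L)₊] ≤ e^ε I/(n(1 − e^{−ε})). -/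
/-!
Writing `L - 1 = (1/n) ∑ᵢ (w(Yᵢ) - 1)` with centred i.i.d. summands of variance `I`
(`E[w(Y)] = ∑ W(y|b) = 1`), the cross terms vanish and `E[(L - 1)²] = I/n`.
Both privacy losses are then bounded pointwise by a multiple of `(L - 1)²`:
for `s > 0` one has `(u - s)₊ ≤ u²/s`, applied with `u = L - 1, s = e^ε - 1` and, after
factoring out `e^ε`, with `u = 1 - L, s = 1 - e^{-ε}`.
-/

open Finset

lemma max_sub_zero_le_sq_div {u s : ℝ} (hs : 0 < s) : max (u - s) 0 ≤ u ^ 2 / s := by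
  refine max_le ?_ (by positivity)
  rw [le_div_iff₀ hs]
  nlinarith [sq_nonneg (u - s)]

lemma max_sub_zero_le_inv_mul_sq {x c : ℝ} (hc : 1 < c) :
    max (x - c) 0 ≤ (c - 1)⁻¹ * (x - 1) ^ 2 := by
  have h := max_sub_zero_le_sq_div (u := x - 1) (sub_pos.mpr hc)
  rwa [sub_sub_sub_cancel_right, ← inv_mul_eq_div] at h

lemma max_one_sub_mul_zero_le_mul_sq {x c : ℝ} (hc : 1 < c) :
    max (1 - c * x) 0 ≤ c / (1 - c⁻¹) * (x - 1) ^ 2 := by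
  have hc0 : 0 < c := zero_lt_one.trans hc
  have h := max_sub_zero_le_sq_div (u := 1 - x) (sub_pos.mpr (inv_lt_one_of_one_lt₀ hc))
  have hfactor : 1 - c * x = c * (1 - x - (1 - c⁻¹)) := by field_simp; ring
  calc max (1 - c * x) 0 = c * max (1 - x - (1 - c⁻¹)) 0 := by
        rw [hfactor, mul_max_of_nonneg _ _ hc0.le, mul_zero]
    _ ≤ c * ((1 - x) ^ 2 / (1 - c⁻¹)) := mul_le_mul_of_nonneg_left h hc0.le
    _ = c / (1 - c⁻¹) * (x - 1) ^ 2 := by ring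

lemma sum_mul_le_mul_sum_mul {β : Type*} [Fintype β] {μ f q : β → ℝ} (K : ℝ)
    (hμ : ∀ Y, 0 ≤ μ Y) (hf : ∀ Y, f Y ≤ K * q Y) :
    ∑ Y, μ Y * f Y ≤ K * ∑ Y, μ Y * q Y := by
  rw [mul_sum]
  exact sum_le_sum fun Y _ => by
    linarith [mul_le_mul_of_nonneg_left (hf Y) (hμ Y)]

section IIDSum

variable {ι α : Type*} [Fintype ι] [DecidableEq ι] [Fintype α] {p g : α → ℝ}

lemma sum_pi_prod_mul_prod (f : ι → α → ℝ) :
    ∑ Y : ι → α, (∏ k, p (Y k)) * ∏ k, f k (Y k) = ∏ k, ∑ y, p y * f k y := by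
  simp only [← prod_mul_distrib]
  exact (Fintype.prod_sum fun k y => p y * f k y).symm

lemma sum_pi_prod_mul_mul_apply (hp : ∑ y, p y = 1) (hg : ∑ y, p y * g y = 0) (i j : ι) :
    ∑ Y : ι → α, (∏ k, p (Y k)) * (g (Y i) * g (Y j))
      = if i = j then ∑ y, p y * g y ^ 2 else 0 := by
  set f : ι → α → ℝ := fun k y => (if k = i then g y else 1) * (if k = j then g y else 1)
  have hprod (Y : ι → α) : g (Y i) * g (Y j) = ∏ k, f k (Y k) := by
    simp only [f, prod_mul_distrib, prod_ite_eq', mem_univ, if_true]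
  rw [sum_congr rfl fun Y _ => by rw [hprod Y], sum_pi_prod_mul_prod]
  split_ifs with hij
  · subst hij
    rw [prod_eq_single i (fun k _ hk => by simpa [f, hk] using hp) (by simp)]
    simp [f, sq]
  · exact prod_eq_zero (mem_univ i) (by simpa [f, hij] using hg)

lemma sum_pi_prod_mul_sum_sq (hp : ∑ y, p y = 1) (hg : ∑ y, p y * g y = 0) :
    ∑ Y : ι → α, (∏ k, p (Y k)) * (∑ i, g (Y i)) ^ 2
      = Fintype.card ι * ∑ y, p y * g y ^ 2 := by
  have hexpand (Y : ι → α) : (∏ k, p (Y k)) * (∑ i, g (Y i)) ^ 2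
      = ∑ i, ∑ j, (∏ k, p (Y k)) * (g (Y i) * g (Y j)) := by
    rw [sq, sum_mul_sum, mul_sum]
    simp only [mul_sum]
  rw [sum_congr rfl fun Y _ => hexpand Y, sum_comm]
  simp_rw [sum_comm (s := (univ : Finset (ι → α))), sum_pi_prod_mul_mul_apply hp hg]
  simp

end IIDSum

lemma sum_pi_prod_mul_sq_average_sub_one {α : Type*} [Fintype α] {n : ℕ} (hn : n ≠ 0)
    {p w : α → ℝ} (hp : ∑ y, p y = 1) (hw : ∑ y, p y * w y = 1) :
    ∑ Y : Fin n → α, (∏ k, p (Y k)) * ((1 / (n : ℝ)) * ∑ i, w (Y i) - 1) ^ 2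
      = (∑ y, p y * (w y - 1) ^ 2) / (n : ℝ) := by
  have hcentred : ∑ y, p y * (w y - 1) = 0 := by
    simp [mul_sub, sum_sub_distrib, hp, hw]
  have havg (Y : Fin n → α) : (1 / (n : ℝ)) * ∑ i, w (Y i) - 1
      = (1 / (n : ℝ)) * ∑ i, (w (Y i) - 1) := by
    simp only [sum_sub_distrib, sum_const, card_univ, Fintype.card_fin, nsmul_eq_mul, mul_one]
    field_simp
  simp only [havg, mul_pow, mul_left_comm _ ((1 / (n : ℝ)) ^ 2), ← mul_sum,
    sum_pi_prod_mul_sum_sq hp hcentred, Fintype.card_fin]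
  field_simp

theorem fixed_eps_privacy_bounds_general (d n : ℕ) (hn : 1 ≤ n)
    (W : Fin d → Fin d → ℝ)
    (hpos : ∀ x y, 0 < W x y)
    (hrow : ∀ x, ∑ y, W x y = 1)
    (a b : Fin d)
    (w : Fin d → ℝ) (hw : ∀ y, w y = W b y / W a y)
    (I : ℝ) (hI : I = ∑ y, W a y * (w y - 1) ^ 2)
    (L : (Fin n → Fin d) → ℝ) (hL : ∀ Y, L Y = (1 / (n : ℝ)) * ∑ i, w (Y i))
    (ε : ℝ) (hε : 0 < ε) :
    (∑ Y : Fin n → Fin d, (∏ i, W a (Y i)) * max (L Y - Real.exp ε) 0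
        ≤ I / (n * (Real.exp ε - 1)))
    ∧ (∑ Y : Fin n → Fin d, (∏ i, W a (Y i)) * max (1 - Real.exp ε * L Y) 0
        ≤ Real.exp ε * I / (n * (1 - Real.exp (-ε)))) := by
  have hc : 1 < Real.exp ε := Real.one_lt_exp_iff.mpr hε
  have hweight (Y : Fin n → Fin d) : 0 ≤ ∏ i, W a (Y i) :=
    prod_nonneg fun i _ => (hpos a (Y i)).le
  have hmean : ∑ y, W a y * w y = 1 := by
    simpa [hw, mul_div_cancel₀ _ (hpos a _).ne'] using hrow b
  have hvar : ∑ Y : Fin n → Fin d, (∏ i, W a (Y i)) * (L Y - 1) ^ 2 = I / n := by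
    simp only [hL, hI]
    exact sum_pi_prod_mul_sq_average_sub_one (by omega) (hrow a) hmean
  constructor
  · calc _ ≤ (Real.exp ε - 1)⁻¹ * (I / n) :=
          hvar ▸ sum_mul_le_mul_sum_mul _ hweight fun Y => max_sub_zero_le_inv_mul_sq hc
      _ = _ := by field_simp
  · rw [Real.exp_neg]
    calc _ ≤ Real.exp ε / (1 - (Real.exp ε)⁻¹) * (I / n) :=
          hvar ▸ sum_mul_le_mul_sum_mul _ hweight fun Y => max_one_sub_mul_zero_le_mul_sq hc
      _ = _ := by rw [div_mul_div_comm, mul_comm (1 - _)]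

/-- **Fixed-ε privacy-curve bounds** (Theorem 6.2(v)).  With `w(y) = W(y|b)/W(y|a)`,
`I = χ²(W(·|b)‖W(·|a))`, and `L = (1/n)∑ᵢ w(Yᵢ)` for `Y₁,…,Yₙ` i.i.d. from `W(·|a)`
(expectations written as explicit finite sums over sample tuples), for every `ε > 0`:
(i) `E[(L − e^ε)₊] ≤ I/(n(e^ε − 1))` and (ii) `E[(1 − e^ε L)₊] ≤ e^ε I/(n(1 − e^{−ε}))`. -/
theorem fixed_eps_privacy_bounds (d n : ℕ) (hd : 2 ≤ d) (hn : 1 ≤ n)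
    (W : Fin d → Fin d → ℝ)
    (hpos : ∀ x y, 0 < W x y)
    (hrow : ∀ x, ∑ y, W x y = 1)
    (a b : Fin d) (hab : a ≠ b)
    (w : Fin d → ℝ) (hw : ∀ y, w y = W b y / W a y)
    (I : ℝ) (hI : I = ∑ y, W a y * (w y - 1) ^ 2)
    (L : (Fin n → Fin d) → ℝ) (hL : ∀ Y, L Y = (1 / (n : ℝ)) * ∑ i, w (Y i))
    (ε : ℝ) (hε : 0 < ε) :
    (∑ Y : Fin n → Fin d, (∏ i, W a (Y i)) * max (L Y - Real.exp ε) 0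
        ≤ I / (n * (Real.exp ε - 1)))
    ∧ (∑ Y : Fin n → Fin d, (∏ i, W a (Y i)) * max (1 - Real.exp ε * L Y) 0
        ≤ Real.exp ε * I / (n * (1 - Real.exp (-ε)))) :=
  fixed_eps_privacy_bounds_general d n hn W hpos hrow a b w hw I hI L hL ε hε
end

section
/- Let d ≥ 2 and λ > 1, and let W be the d-ary generalized randomized response channel W(y|x) = λ/(λ+d−1) if y = x and 1/(λ+d−1) if y ≠ x. Then for every pair of inputs a ≠ b: (i) the likelihood ratio w(y) = W(y|b)/W(y|a) takes only the values λ^{-1} (at y = a), λ (at y = b), and 1 (elsewhere); (ii) under the law W(·|a), the pushforward of w has mass λ/(λ+d−1) at λ^{-1}, mass (d−2)/(λ+d−1) at 1, and mass 1/(λ+d−1) at λ; and (iii) χ²(W(·|b) ‖ W(·|a)) = (λ−1)²(λ+1)/(λ(λ+d−1)). In particular, as d → ∞, the pushforward laws converge weakly to δ₁ and the χ² divergence tends to 0, so GRR is diluting. -/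
open Finset BigOperators MeasureTheory Filter Topology
open scoped Classical

/-- The `d`-ary generalized randomized response channel with parameter `λ`. -/
noncomputable def grr (d : ℕ) (lam : ℝ) (x y : Fin d) : ℝ :=
  if y = x then lam / (lam + d - 1) else 1 / (lam + d - 1)

/-!
Every quantity in the statement is an expectation under `W(·|a)` of a function of the
likelihood ratio `w = W(·|b)/W(·|a)`, and `w` equals `λ⁻¹` at `a`, `λ` at `b` and `1` on the
remaining `d - 2` points. Hence `E g(w) = (λ g(λ⁻¹) + g(λ) + (d - 2) g(1)) / (λ + d - 1)`:
indicators of points give the masses of the law of `w`, `g(t) = (t - 1)²` gives the χ²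
divergence, and as `d → ∞` all the weight moves to `g(1)`.
-/

theorem Fintype.sum_eq_of_eq_const_off_pair {ι R : Type*} [Fintype ι] [DecidableEq ι]
    [CommRing R] {a b : ι} (hab : a ≠ b) (F : ι → R) (c : R)
    (hF : ∀ y, y ≠ a → y ≠ b → F y = c) :
    ∑ y, F y = F a + F b + ((Fintype.card ι : R) - 2) * c := by
  have hsplit : ∀ y,
      F y = (if y = a then F a - c else 0) + (if y = b then F b - c else 0) + c := by
    intro y
    by_cases hya : y = a
    · subst hya; simp [hab]
    · by_cases hyb : y = b
      · subst hyb; simp [hya]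
      · simp [hya, hyb, hF y hya hyb]
  rw [Finset.sum_congr rfl fun y _ => hsplit y]
  simp only [Finset.sum_add_distrib, Finset.sum_ite_eq', Finset.mem_univ, if_true,
    Finset.sum_const, Finset.card_univ, nsmul_eq_mul]
  ring

theorem integral_finset_sum_smul_dirac {ι α E : Type*} [Fintype ι] [MeasurableSpace α]
    [MeasurableSingletonClass α] [NormedAddCommGroup E] [NormedSpace ℝ E] [CompleteSpace E]
    (c : ι → ℝ) (hc : ∀ i, 0 ≤ c i) (x : ι → α) (f : α → E) :
    ∫ t, f t ∂(∑ i, ENNReal.ofReal (c i) • Measure.dirac (x i)) = ∑ i, c i • f (x i) := by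
  rw [integral_finsetSum_measure fun i _ =>
    (integrable_dirac enorm_lt_top).smul_measure ENNReal.ofReal_ne_top]
  refine Finset.sum_congr rfl fun i _ => ?_
  rw [integral_smul_measure, integral_dirac, ENNReal.toReal_ofReal (hc i)]

theorem sum_sq_sub_div_eq_sum_mul_sq_div_sub_one {ι : Type*} [Fintype ι] (p q : ι → ℝ)
    (hp : ∀ i, p i ≠ 0) :
    ∑ i, (q i - p i) ^ 2 / p i = ∑ i, p i * (q i / p i - 1) ^ 2 := by
  refine Finset.sum_congr rfl fun i _ => ?_
  field_simp [hp i]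

theorem tendsto_add_natCast_mul_div_natCast_add (A B c : ℝ) :
    Tendsto (fun n : ℕ => (A + n * B) / (n + c)) atTop (𝓝 B) := by
  have hA : Tendsto (fun n : ℕ => A / (n + c)) atTop (𝓝 0) :=
    tendsto_const_nhds.div_atTop (tendsto_atTop_add_const_right _ c tendsto_natCast_atTop_atTop)
  have hB := (tendsto_natCast_div_add_atTop c).const_mul B
  rw [mul_one] at hB
  simpa [add_div, mul_div_assoc, mul_comm] using hA.add hB

section Grr

variable {d : ℕ} {lam : ℝ}

theorem grr_denom_pos (hlam : 0 < lam) (x : Fin d) : 0 < lam + d - 1 := by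
  have : (1 : ℝ) ≤ d := Nat.one_le_cast.2 x.pos
  linarith

theorem grr_pos (hlam : 0 < lam) (x y : Fin d) : 0 < grr d lam x y := by
  have := grr_denom_pos hlam x
  unfold grr
  split_ifs <;> positivity

theorem grr_ratio (hlam : 0 < lam) {a b : Fin d} (hab : a ≠ b) (y : Fin d) :
    grr d lam b y / grr d lam a y = if y = a then lam⁻¹ else if y = b then lam else 1 := by
  have hc := (grr_denom_pos hlam a).ne'
  by_cases hya : y = a
  · subst hya
    simp only [grr, if_pos, if_neg hab]
    field_simp
  · by_cases hyb : y = b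
    · subst hyb
      simp only [grr, if_pos, if_neg (Ne.symm hab)]
      field_simp
    · simp only [grr, if_neg hya, if_neg hyb]
      field_simp

theorem sum_grr_mul_ratio (hlam : 0 < lam) {a b : Fin d} (hab : a ≠ b) (g : ℝ → ℝ) :
    ∑ y, grr d lam a y * g (grr d lam b y / grr d lam a y)
      = (lam * g lam⁻¹ + g lam + ((d : ℝ) - 2) * g 1) / (lam + d - 1) := by
  have hc := (grr_denom_pos hlam a).ne'
  rw [Fintype.sum_eq_of_eq_const_off_pair hab _ (1 / (lam + d - 1) * g 1)]
  · simp only [grr_ratio hlam hab, if_pos, if_neg (Ne.symm hab), Fintype.card_fin]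
    simp only [grr, if_neg (Ne.symm hab), if_pos]
    field_simp
  · intro y hya hyb
    rw [grr_ratio hlam hab, if_neg hya, if_neg hyb]
    simp only [grr, if_neg hya]

theorem sum_filter_grr_ratio_eq (hlam : 0 < lam) {a b : Fin d} (hab : a ≠ b) (r : ℝ) :
    ∑ y ∈ Finset.univ.filter (fun y => grr d lam b y / grr d lam a y = r), grr d lam a y
      = (lam * (if lam⁻¹ = r then 1 else 0) + (if lam = r then 1 else 0)
          + ((d : ℝ) - 2) * (if (1 : ℝ) = r then 1 else 0)) / (lam + d - 1) := by
  rw [Finset.sum_filter]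
  simpa only [mul_ite, mul_one, mul_zero] using
    sum_grr_mul_ratio hlam hab fun t => if t = r then (1 : ℝ) else 0

theorem sum_grr_chiSq (hlam : 0 < lam) {a b : Fin d} (hab : a ≠ b) :
    ∑ y, (grr d lam b y - grr d lam a y) ^ 2 / grr d lam a y
      = (lam - 1) ^ 2 * (lam + 1) / (lam * (lam + d - 1)) := by
  rw [sum_sq_sub_div_eq_sum_mul_sq_div_sub_one _ _ fun y => (grr_pos hlam a y).ne',
    sum_grr_mul_ratio hlam hab fun t => (t - 1) ^ 2]
  have hc := (grr_denom_pos hlam a).ne'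
  field_simp
  ring

theorem integral_grr_ratio_law (hlam : 0 < lam) {a b : Fin d} (hab : a ≠ b) (f : ℝ → ℝ) :
    ∫ t, f t ∂(∑ y, ENNReal.ofReal (grr d lam a y) •
        Measure.dirac (grr d lam b y / grr d lam a y))
      = (lam * f lam⁻¹ + f lam + ((d : ℝ) - 2) * f 1) / (lam + d - 1) := by
  rw [integral_finset_sum_smul_dirac _ fun y => (grr_pos hlam a y).le]
  exact sum_grr_mul_ratio hlam hab f

end Grr

/-- **The GRR pole** (Proposition 7.1).  For `d`-ary GRR and every pair `a ≠ b`: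
(i) the likelihood ratio takes only the values `λ⁻¹` (at `y = a`), `λ` (at `y = b`)
and `1` (elsewhere); (ii) its pushforward under `W(·|a)` has masses `λ/(λ+d−1)`,
`(d−2)/(λ+d−1)`, `1/(λ+d−1)` at `λ⁻¹`, `1`, `λ`; (iii) the chi-square divergence is
`(λ−1)²(λ+1)/(λ(λ+d−1))`.  In particular, as `d → ∞` (written `d = k+2`), the
likelihood-ratio laws converge weakly to `δ₁` and the chi-square divergence tends
to `0`: GRR is diluting. -/
theorem grr_pole (lam : ℝ) (hlam : 1 < lam) :
    (∀ d : ℕ, 2 ≤ d → ∀ a b : Fin d, a ≠ b →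
      ((∀ y, grr d lam b y / grr d lam a y
          = if y = a then lam⁻¹ else if y = b then lam else 1)
        ∧ (∑ y ∈ Finset.univ.filter (fun y => grr d lam b y / grr d lam a y = lam⁻¹),
              grr d lam a y = lam / (lam + d - 1))
        ∧ (∑ y ∈ Finset.univ.filter (fun y => grr d lam b y / grr d lam a y = 1),
              grr d lam a y = ((d : ℝ) - 2) / (lam + d - 1))
        ∧ (∑ y ∈ Finset.univ.filter (fun y => grr d lam b y / grr d lam a y = lam),
              grr d lam a y = 1 / (lam + d - 1))
        ∧ (∑ y, (grr d lam b y - grr d lam a y) ^ 2 / grr d lam a y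
            = (lam - 1) ^ 2 * (lam + 1) / (lam * (lam + d - 1)))))
    ∧ (∀ (a b : (k : ℕ) → Fin (k + 2)), (∀ k, a k ≠ b k) →
        (∀ f : BoundedContinuousFunction ℝ ℝ,
          Tendsto (fun k => ∫ x, f x ∂(∑ y : Fin (k + 2),
              ENNReal.ofReal (grr (k + 2) lam (a k) y) •
                Measure.dirac (grr (k + 2) lam (b k) y / grr (k + 2) lam (a k) y)))
            atTop (nhds (f 1)))
        ∧ Tendsto (fun k => ∑ y : Fin (k + 2),
            (grr (k + 2) lam (b k) y - grr (k + 2) lam (a k) y) ^ 2 / grr (k + 2) lam (a k) y)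
            atTop (nhds 0)) := by
  have hlam₀ : 0 < lam := one_pos.trans hlam
  have hinv : lam⁻¹ < 1 := inv_lt_one_of_one_lt₀ hlam
  have h₁ : lam⁻¹ ≠ 1 := hinv.ne
  have h₂ : lam⁻¹ ≠ lam := (hinv.trans hlam).ne
  have h₃ : (1 : ℝ) ≠ lam := hlam.ne
  refine ⟨fun d _ a b hab => ⟨grr_ratio hlam₀ hab, ?_, ?_, ?_, sum_grr_chiSq hlam₀ hab⟩,
    fun a b hab => ⟨fun f => ?_, ?_⟩⟩
  · rw [sum_filter_grr_ratio_eq hlam₀ hab, if_pos rfl, if_neg h₂.symm, if_neg h₁.symm]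
    ring
  · rw [sum_filter_grr_ratio_eq hlam₀ hab, if_neg h₁, if_neg h₃.symm, if_pos rfl]
    ring
  · rw [sum_filter_grr_ratio_eq hlam₀ hab, if_neg h₂, if_pos rfl, if_neg h₃]
    ring
  · simp_rw [integral_grr_ratio_law hlam₀ (hab _) ⇑f]
    convert tendsto_add_natCast_mul_div_natCast_add (lam * f lam⁻¹ + f lam) (f 1) (lam + 1)
      using 2
    push_cast
    congr 1 <;> ring
  · simp_rw [sum_grr_chiSq hlam₀ (hab _), div_mul_eq_div_div]
    convert tendsto_add_natCast_mul_div_natCast_add ((lam - 1) ^ 2 * (lam + 1) / lam) 0 (lam + 1)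
      using 2
    push_cast
    congr 1 <;> ring
end

section
/- Let d ≥ 2, let 𝒴 be a finite set, and let W : Fin d → 𝒴 → ℝ assign to each input x a probability vector W(·|x) on 𝒴, with W(y|x) > 0 for every x, y. Let χ_* = max_{a≠b} ∑_y (W(y|b) − W(y|a))²/W(y|a) and assume χ_* > 0. Fix n ≥ 1, 0 < ρ < 1/(d−1), set θ = (1−(d−1)ρ, ρ, …, ρ) ∈ ℝ^d and q(y) = ∑_x θ_x W(y|x), and let T be the subspace {u ∈ ℝ^d : ∑_x u_x = 0} with orthogonal projection P_T = I − (1/d)𝟙𝟙ᵀ. Define the Fisher matrix I_θ = n · P_T · W · diag(q)^{-1} · Wᵀ · P_T (viewing W as the d × |𝒴| matrix (W(y|x))), and assume I_θ is positive definite as a quadratic form on T. Then the trace on T of the inverse of the restriction of I_θ to T satisfies tr_T(I_θ^{-1}) ≥ (d−1)(1−(d−1)ρ)/(n·χ_*). -/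
open Finset BigOperators Matrix

/-! Write `P` for the centring projection `1 - 𝟙𝟙ᵀ/d`; its rows satisfy
`P *ᵥ P j = P j` and `P j ⬝ᵥ P j = 1 - 1/d`. Since `B = P B P` and `I_θ = P I_θ P`, both traces are
sums of the quadratic forms over the rows: `tr B = ∑ⱼ P j ⬝ B P j` and `tr I_θ = ∑ⱼ P j ⬝ I_θ P j`.
For `w = B P j` we have `I_θ w = P j`, so Cauchy–Schwarz for the semidefinite form of `I_θ` gives
`(1 - 1/d)² ≤ (P j ⬝ I_θ P j) (P j ⬝ B P j)`, and Cauchy–Schwarz over `j` gives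
`(d - 1)² ≤ tr I_θ · tr B`.

On the other side `tr I_θ = n ∑_y ∑ⱼ (W(y|j) - mean W(y|·))² / q(y)`. The centred sum of squares is
at most the sum of squares around `W(y|x₀)`, and `q ≥ θ_{x₀} W(·|x₀)`, so
`tr I_θ ≤ n (d - 1) χ_* / θ_{x₀}`. -/

section PosSemidef

variable {ι : Type*} [Fintype ι]

theorem Matrix.IsSymm.dotProduct_mulVec_comm {I : Matrix ι ι ℝ} (hI : I.IsSymm) (u w : ι → ℝ) :
    u ⬝ᵥ I *ᵥ w = w ⬝ᵥ I *ᵥ u := by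
  rw [dotProduct_mulVec, ← mulVec_transpose, hI.eq, dotProduct_comm]

theorem Matrix.PosSemidef.dotProduct_nonneg_of_mulVec_eq {I : Matrix ι ι ℝ} (hI : I.PosSemidef)
    {u w : ι → ℝ} (hw : I *ᵥ w = u) : 0 ≤ u ⬝ᵥ w := by
  simpa [← hw, dotProduct_comm] using hI.dotProduct_mulVec_nonneg w

theorem Matrix.PosSemidef.sq_dotProduct_self_le_of_mulVec_eq {I : Matrix ι ι ℝ}
    (hI : I.PosSemidef) {u w : ι → ℝ} (hw : I *ᵥ w = u) :
    (u ⬝ᵥ u) ^ 2 ≤ (u ⬝ᵥ I *ᵥ u) * (u ⬝ᵥ w) := by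
  have hquad : ∀ t : ℝ, 0 ≤ (u ⬝ᵥ w) * (t * t) + 2 * (u ⬝ᵥ u) * t + u ⬝ᵥ I *ᵥ u := fun t => by
    have h := hI.dotProduct_mulVec_nonneg (u + t • w)
    have hwu : w ⬝ᵥ I *ᵥ u = u ⬝ᵥ u := by
      rw [IsSymm.dotProduct_mulVec_comm (by simpa using hI.isHermitian), hw]
    simp only [star_trivial, mulVec_add, mulVec_smul, hw, dotProduct_add, add_dotProduct,
      dotProduct_smul, smul_dotProduct, smul_eq_mul, hwu] at h
    rw [dotProduct_comm w u] at h
    linarith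
  have hdiscrim := discrim_le_zero hquad
  rw [discrim] at hdiscrim
  linarith

end PosSemidef

section Centering

variable {ι : Type*} [Fintype ι] [DecidableEq ι]

noncomputable def centeringMatrix (ι : Type*) [Fintype ι] [DecidableEq ι] : Matrix ι ι ℝ :=
  1 - (Fintype.card ι : ℝ)⁻¹ • of fun _ _ => 1

lemma centeringMatrix_mul_apply {κ : Type*} (X : Matrix ι κ ℝ) (i : ι) (k : κ) :
    (centeringMatrix ι * X) i k = X i k - (Fintype.card ι : ℝ)⁻¹ * ∑ j, X j k := by
  rw [centeringMatrix, Matrix.sub_mul, Matrix.one_mul, Matrix.smul_mul]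
  simp [mul_apply]

lemma isSymm_centeringMatrix : (centeringMatrix ι).IsSymm := by
  ext i j
  simp [centeringMatrix, one_apply, eq_comm]

lemma sum_centeringMatrix_apply [Nonempty ι] (k : ι) : ∑ j, centeringMatrix ι j k = 0 := by
  simp [centeringMatrix, one_apply, Finset.sum_sub_distrib]

lemma centeringMatrix_mul_self [Nonempty ι] :
    centeringMatrix ι * centeringMatrix ι = centeringMatrix ι := by
  ext i k
  rw [centeringMatrix_mul_apply, sum_centeringMatrix_apply, mul_zero, sub_zero]

lemma centeringMatrix_mulVec_row [Nonempty ι] (j : ι) :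
    centeringMatrix ι *ᵥ centeringMatrix ι j = centeringMatrix ι j := by
  ext i
  have h := congrFun (congrFun (centeringMatrix_mul_self (ι := ι)) i) j
  rw [mul_apply] at h
  rw [isSymm_centeringMatrix.apply i j, ← h]
  exact Finset.sum_congr rfl fun k _ => by rw [isSymm_centeringMatrix.apply k j]

lemma dotProduct_centeringMatrix_row_self [Nonempty ι] (j : ι) :
    centeringMatrix ι j ⬝ᵥ centeringMatrix ι j = 1 - (Fintype.card ι : ℝ)⁻¹ := by
  have h := congrFun (centeringMatrix_mulVec_row (ι := ι) j) j
  rw [mulVec] at h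
  rw [h]
  simp [centeringMatrix]

lemma trace_eq_sum_centeringMatrix_row {A : Matrix ι ι ℝ}
    (hA : centeringMatrix ι * A * centeringMatrix ι = A) :
    trace A = ∑ j, centeringMatrix ι j ⬝ᵥ A *ᵥ centeringMatrix ι j := by
  conv_lhs => rw [← hA]
  simp only [trace, Matrix.diag, mul_mul_apply, isSymm_centeringMatrix.eq]

lemma mulVec_mulVec_centeringMatrix_row [Nonempty ι] {I B : Matrix ι ι ℝ}
    (hIB : I * B = centeringMatrix ι) (j : ι) :
    I *ᵥ (B *ᵥ centeringMatrix ι j) = centeringMatrix ι j := by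
  rw [mulVec_mulVec, hIB, centeringMatrix_mulVec_row]

theorem trace_nonneg_of_mul_eq_centeringMatrix [Nonempty ι] {I B : Matrix ι ι ℝ}
    (hI : I.PosSemidef) (hIB : I * B = centeringMatrix ι) (hPB : centeringMatrix ι * B = B)
    (hBP : B * centeringMatrix ι = B) : 0 ≤ trace B := by
  rw [trace_eq_sum_centeringMatrix_row (by rw [Matrix.mul_assoc, hBP, hPB])]
  exact Finset.sum_nonneg fun j _ =>
    hI.dotProduct_nonneg_of_mulVec_eq (mulVec_mulVec_centeringMatrix_row hIB j)

theorem sq_card_sub_one_le_trace_mul_trace [Nonempty ι] {I B : Matrix ι ι ℝ}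
    (hI : I.PosSemidef) (hPIP : centeringMatrix ι * I * centeringMatrix ι = I)
    (hIB : I * B = centeringMatrix ι) (hPB : centeringMatrix ι * B = B)
    (hBP : B * centeringMatrix ι = B) :
    ((Fintype.card ι : ℝ) - 1) ^ 2 ≤ trace I * trace B := by
  set P := centeringMatrix ι
  have hsum : ∑ _j : ι, (1 - (Fintype.card ι : ℝ)⁻¹) = Fintype.card ι - 1 := by
    simp [Fintype.card_ne_zero]
  rw [trace_eq_sum_centeringMatrix_row hPIP,
    trace_eq_sum_centeringMatrix_row (by rw [Matrix.mul_assoc, hBP, hPB]), ← hsum]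
  refine sum_sq_le_sum_mul_sum_of_sq_le_mul _ (fun j _ => ?_) (fun j _ => ?_) (fun j _ => ?_)
  · simpa using hI.dotProduct_mulVec_nonneg (P j)
  · exact hI.dotProduct_nonneg_of_mulVec_eq (mulVec_mulVec_centeringMatrix_row hIB j)
  · rw [← dotProduct_centeringMatrix_row_self j]
    exact hI.sq_dotProduct_self_le_of_mulVec_eq (mulVec_mulVec_centeringMatrix_row hIB j)

end Centering

section Gram

variable {ι Y : Type*} [Fintype Y]

lemma sum_sq_sub_mean_le [Fintype ι] [Nonempty ι] (f : ι → ℝ) (c : ℝ) :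
    ∑ i, (f i - (Fintype.card ι : ℝ)⁻¹ * ∑ j, f j) ^ 2 ≤ ∑ i, (f i - c) ^ 2 := by
  set m := (Fintype.card ι : ℝ)⁻¹ * ∑ j, f j
  have hm : ∑ j, f j = Fintype.card ι * m := by
    rw [mul_inv_cancel_left₀ (by simp [Fintype.card_ne_zero])]
  have hsplit : ∑ i, (f i - c) ^ 2 = ∑ i, (f i - m) ^ 2 + Fintype.card ι * (m - c) ^ 2 := by
    have h : ∀ i, (f i - c) ^ 2 = (f i - m) ^ 2 + 2 * (m - c) * f i - (m ^ 2 - c ^ 2) :=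
      fun i => by ring
    simp only [h, Finset.sum_sub_distrib, Finset.sum_add_distrib, ← Finset.mul_sum, hm,
      Finset.sum_const, Finset.card_univ, nsmul_eq_mul]
    ring
  rw [hsplit]
  have : 0 ≤ (Fintype.card ι : ℝ) * (m - c) ^ 2 := by positivity
  linarith

lemma sum_sum_sq_sub_div_le [Fintype ι] [DecidableEq ι] {W : ι → Y → ℝ} {χ : ℝ} (i₀ : ι)
    (hχ : ∀ j, j ≠ i₀ → ∑ y, (W j y - W i₀ y) ^ 2 / W i₀ y ≤ χ) :
    ∑ j, ∑ y, (W j y - W i₀ y) ^ 2 / W i₀ y ≤ ((Fintype.card ι : ℝ) - 1) * χ := by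
  rw [← Finset.sum_erase (a := i₀) _ (by simp)]
  refine (Finset.sum_le_card_nsmul _ _ χ fun j hj => hχ j (Finset.ne_of_mem_erase hj)).trans_eq ?_
  rw [Finset.card_erase_of_mem (Finset.mem_univ _), Finset.card_univ, nsmul_eq_mul,
    Nat.cast_pred (Fintype.card_pos_iff.mpr ⟨i₀⟩)]

lemma trace_mul_diagonal_mul_transpose [Fintype ι] [DecidableEq Y] (A : Matrix ι Y ℝ)
    (r : Y → ℝ) :
    trace (A * diagonal r * Aᵀ) = ∑ i, ∑ y, A i y ^ 2 * r y := by
  simp only [trace, Matrix.diag, mul_apply, transpose_apply, diagonal_apply, mul_ite, mul_zero,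
    Finset.sum_ite_eq', Finset.mem_univ, if_true]
  exact Finset.sum_congr rfl fun i _ => Finset.sum_congr rfl fun y _ => by ring

lemma of_sum_mul_div_eq [DecidableEq Y] (W : ι → Y → ℝ) (q : Y → ℝ) :
    of (fun x x' => ∑ y, W x y * W x' y / q y) = of W * diagonal q⁻¹ * (of W)ᵀ := by
  ext x x'
  simp only [of_apply, mul_apply, transpose_apply, diagonal_apply, mul_ite, mul_zero,
    Finset.sum_ite_eq', Finset.mem_univ, if_true, Pi.inv_apply]
  exact Finset.sum_congr rfl fun y _ => by ring

variable [Fintype ι] [DecidableEq ι] [DecidableEq Y]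

lemma centeringMatrix_mul_gram_mul_centeringMatrix (W : ι → Y → ℝ) (q : Y → ℝ) :
    centeringMatrix ι * of (fun x x' => ∑ y, W x y * W x' y / q y) * centeringMatrix ι =
      (centeringMatrix ι * of W) * diagonal q⁻¹ * (centeringMatrix ι * of W)ᵀ := by
  rw [of_sum_mul_div_eq, transpose_mul, isSymm_centeringMatrix.eq]
  simp only [Matrix.mul_assoc]

lemma posSemidef_centered_gram (W : ι → Y → ℝ) {q : Y → ℝ} (hq : ∀ y, 0 ≤ q y) :
    (centeringMatrix ι * of (fun x x' => ∑ y, W x y * W x' y / q y) *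
      centeringMatrix ι).PosSemidef := by
  rw [centeringMatrix_mul_gram_mul_centeringMatrix, ← conjTranspose_eq_transpose_of_trivial]
  exact (PosSemidef.diagonal fun y => inv_nonneg.2 (hq y)).mul_mul_conjTranspose_same _

theorem trace_centered_gram_le [Nonempty ι] {W : ι → Y → ℝ} {q : Y → ℝ} {c χ : ℝ} (i₀ : ι)
    (hc : 0 < c) (hW : ∀ y, 0 < W i₀ y) (hq : ∀ y, c * W i₀ y ≤ q y)
    (hχ : ∀ j, j ≠ i₀ → ∑ y, (W j y - W i₀ y) ^ 2 / W i₀ y ≤ χ) :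
    trace (centeringMatrix ι * of (fun x x' => ∑ y, W x y * W x' y / q y) * centeringMatrix ι)
      ≤ ((Fintype.card ι : ℝ) - 1) * χ / c := by
  rw [centeringMatrix_mul_gram_mul_centeringMatrix, trace_mul_diagonal_mul_transpose,
    Finset.sum_comm]
  simp only [centeringMatrix_mul_apply, of_apply, Pi.inv_apply, ← Finset.sum_mul]
  calc ∑ y, (∑ j, (W j y - (Fintype.card ι : ℝ)⁻¹ * ∑ x, W x y) ^ 2) * (q y)⁻¹
      ≤ ∑ y, (∑ j, (W j y - W i₀ y) ^ 2) * (c * W i₀ y)⁻¹ := by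
        refine Finset.sum_le_sum fun y _ => ?_
        have hcW := mul_pos hc (hW y)
        exact mul_le_mul (sum_sq_sub_mean_le _ _) (inv_anti₀ hcW (hq y))
          (inv_nonneg.2 (hcW.le.trans (hq y))) (Finset.sum_nonneg fun _ _ => sq_nonneg _)
    _ = c⁻¹ * ∑ j, ∑ y, (W j y - W i₀ y) ^ 2 / W i₀ y := by
        simp only [Finset.mul_sum, Finset.sum_mul]
        rw [Finset.sum_comm]
        exact Finset.sum_congr rfl fun j _ => Finset.sum_congr rfl fun y _ => by
          rw [mul_inv, div_eq_mul_inv]; ring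
    _ ≤ c⁻¹ * (((Fintype.card ι : ℝ) - 1) * χ) := by
        gcongr
        exact sum_sum_sq_sub_div_le i₀ hχ
    _ = ((Fintype.card ι : ℝ) - 1) * χ / c := by rw [inv_mul_eq_div]

theorem sq_card_sub_one_div_le_trace [Nonempty ι] {W : ι → Y → ℝ} {q : Y → ℝ} {c χ : ℝ} (n : ℕ)
    (i₀ : ι) (hc : 0 < c) (hW : ∀ y, 0 < W i₀ y) (hq : ∀ y, c * W i₀ y ≤ q y)
    (hχ : ∀ j, j ≠ i₀ → ∑ y, (W j y - W i₀ y) ^ 2 / W i₀ y ≤ χ) {B : Matrix ι ι ℝ}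
    (hIB : ((n : ℝ) • (centeringMatrix ι * of (fun x x' => ∑ y, W x y * W x' y / q y) *
      centeringMatrix ι)) * B = centeringMatrix ι)
    (hPB : centeringMatrix ι * B = B) (hBP : B * centeringMatrix ι = B) :
    ((Fintype.card ι : ℝ) - 1) ^ 2 / (n * (((Fintype.card ι : ℝ) - 1) * χ / c)) ≤ trace B := by
  set I := (n : ℝ) • (centeringMatrix ι * of (fun x x' => ∑ y, W x y * W x' y / q y) *
    centeringMatrix ι)
  have hI : I.PosSemidef := (posSemidef_centered_gram W fun y =>
    (mul_pos hc (hW y)).le.trans (hq y)).smul (Nat.cast_nonneg n)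
  have hPIP : centeringMatrix ι * I * centeringMatrix ι = I := by
    simp only [I, Matrix.mul_smul, Matrix.smul_mul, ← Matrix.mul_assoc, centeringMatrix_mul_self]
    simp only [Matrix.mul_assoc, centeringMatrix_mul_self]
  have htrI : trace I ≤ n * (((Fintype.card ι : ℝ) - 1) * χ / c) := by
    rw [trace_smul, smul_eq_mul]
    gcongr
    exact trace_centered_gram_le i₀ hc hW hq hχ
  have hCR := sq_card_sub_one_le_trace_mul_trace hI hPIP hIB hPB hBP
  have htrB := trace_nonneg_of_mul_eq_centeringMatrix hI hIB hPB hBP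
  exact div_le_of_le_mul₀ (hI.trace_nonneg.trans htrI) htrB
    (hCR.trans (by rw [mul_comm (trace B)]; exact mul_le_mul_of_nonneg_right htrI htrB))

end Gram

/-- The trace on `T` of the inverse of the restriction of `I_θ` to `T` is realised as the trace of
any matrix `B` with `I_θ B = P_T` and `P_T B = B P_T = B`. -/
theorem near_vertex_cramer_rao (d : ℕ) (hd : 2 ≤ d)
    (Y : Type) [Fintype Y] [DecidableEq Y]
    (W : Fin d → Y → ℝ) (hpos : ∀ x y, 0 < W x y)
    (chiStar : ℝ)
    (hub : ∀ a b : Fin d, a ≠ b → ∑ y, (W b y - W a y) ^ 2 / W a y ≤ chiStar)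
    (n : ℕ)
    (ρ : ℝ) (hρ0 : 0 < ρ) (hρ1 : ρ < 1 / ((d : ℝ) - 1))
    (θ : Fin d → ℝ) (hθ : θ = fun x => if x = (⟨0, by omega⟩ : Fin d) then 1 - ((d : ℝ) - 1) * ρ else ρ)
    (q : Y → ℝ) (hq : q = fun y => ∑ x, θ x * W x y)
    (PT : Matrix (Fin d) (Fin d) ℝ)
    (hPT : PT = 1 - (d : ℝ)⁻¹ • (Matrix.of fun _ _ => (1 : ℝ)))
    (Iθ : Matrix (Fin d) (Fin d) ℝ)
    (hIθ : Iθ = (n : ℝ) • (PT * Matrix.of (fun x x' => ∑ y, W x y * W x' y / q y) * PT))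
    (B : Matrix (Fin d) (Fin d) ℝ)
    (hB2 : Iθ * B = PT) (hB3 : PT * B = B) (hB4 : B * PT = B) :
    ((d : ℝ) - 1) * (1 - ((d : ℝ) - 1) * ρ) / (n * chiStar) ≤ Matrix.trace B := by
  set x₀ : Fin d := ⟨0, by omega⟩
  have : Nonempty (Fin d) := ⟨x₀⟩
  obtain rfl : PT = centeringMatrix (Fin d) := by rw [hPT, centeringMatrix, Fintype.card_fin]
  have hd1 : (0 : ℝ) < d - 1 := by
    have : (2 : ℝ) ≤ d := by exact_mod_cast hd
    linarith
  set θ₀ := 1 - ((d : ℝ) - 1) * ρ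
  have hθ₀ : 0 < θ₀ := by linarith [(lt_div_iff₀ hd1).mp hρ1]
  have hq_ge : ∀ y, θ₀ * W x₀ y ≤ q y := fun y => by
    have hθ_nonneg : ∀ x, 0 ≤ θ x := fun x => by simp only [hθ]; split_ifs <;> positivity
    rw [hq, show θ₀ = θ x₀ by simp [hθ]]
    exact Finset.single_le_sum (f := fun x => θ x * W x y)
      (fun x _ => mul_nonneg (hθ_nonneg x) (hpos x y).le) (Finset.mem_univ x₀)
  have hCR := sq_card_sub_one_div_le_trace n x₀ hθ₀ (hpos x₀) hq_ge
    (fun j hj => hub x₀ j hj.symm) (hIθ ▸ hB2) hB3 hB4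
  rw [Fintype.card_fin] at hCR
  calc ((d : ℝ) - 1) * θ₀ / (n * chiStar)
      = ((d : ℝ) - 1) ^ 2 / (n * (((d : ℝ) - 1) * chiStar / θ₀)) := by
        rw [mul_div_assoc', div_div_eq_mul_div, sq, mul_assoc, mul_left_comm (n : ℝ),
          mul_div_mul_left _ _ hd1.ne']
    _ ≤ trace B := hCR
end

section
/- Let (Ω, ℱ) be a measurable space, let m ≥ 1, and let {P_v : v ∈ {0,1}^m} be a family of probability measures on Ω. Suppose there is η ≥ 0 such that for every coordinate j and every pair v, v' ∈ {0,1}^m differing only in coordinate j, the total variation distance sup_{A ∈ ℱ} |P_v(A) − P_{v'}(A)| ≤ η. Then for every measurable decoder v̂ : Ω → {0,1}^m, sup_{v ∈ {0,1}^m} E_{P_v}[ ∑_{j=1}^m 1{v̂_j ≠ v_j} ] ≥ (m/2)(1 − η). -/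
open Finset BigOperators MeasureTheory

/-- **Assouad cube lemma** (Lemma 8.3).  If all pairs of measures indexed by hypercube
vertices differing in one coordinate are within total variation `η`, then every measurable
decoder makes at least `(m/2)(1−η)` expected coordinate errors at some vertex.  The
expectation `E_{P_v}[∑ⱼ 1{v̂ⱼ ≠ vⱼ}]` is written as `∑ⱼ P_v{ω | v̂(ω)ⱼ ≠ vⱼ}`. -/
theorem assouad_cube {Ω : Type*} [MeasurableSpace Ω] (m : ℕ) (hm : 1 ≤ m)
    (P : (Fin m → Bool) → Measure Ω)
    (hP : ∀ v, IsProbabilityMeasure (P v))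
    (η : ℝ) (hη : 0 ≤ η)
    (hTV : ∀ (j : Fin m) (v : Fin m → Bool), ∀ A : Set Ω, MeasurableSet A →
        |((P v) A).toReal - ((P (Function.update v j (!(v j)))) A).toReal| ≤ η)
    (vhat : Ω → (Fin m → Bool)) (hvhat : Measurable vhat) :
    ∃ v : Fin m → Bool,
      ((m : ℝ) / 2) * (1 - η) ≤ ∑ j, ((P v) {ω | vhat ω j ≠ v j}).toReal := by
  classical
  haveI := hP
  set g : Fin m → (Fin m → Bool) → ℝ :=
    fun j v => ((P v) {ω | vhat ω j ≠ v j}).toReal with hg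
  have flip_invol : ∀ (j : Fin m) (v : Fin m → Bool),
      Function.update (Function.update v j (!(v j))) j
        (!(Function.update v j (!(v j)) j)) = v := by
    intro j v
    simp [Function.update_idem]
  have hmeasA : ∀ (j : Fin m) (v : Fin m → Bool),
      MeasurableSet {ω | vhat ω j ≠ v j} := by
    intro j v
    have hmf : Measurable fun ω => vhat ω j := (measurable_pi_apply j).comp hvhat
    have : {ω | vhat ω j ≠ v j} = (fun ω => vhat ω j) ⁻¹' ({v j}ᶜ) := by
      ext ω; simp only [Set.mem_setOf_eq, Set.mem_preimage, Set.mem_compl_iff,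
        Set.mem_singleton_iff]
    rw [this]
    exact hmf (measurableSet_singleton (v j)).compl
  have pair : ∀ (j : Fin m) (v : Fin m → Bool),
      1 - η ≤ g j v + g j (Function.update v j (!(v j))) := by
    intro j v
    have hA := hmeasA j v
    set v' := Function.update v j (!(v j)) with hv'
    have hset : {ω | vhat ω j ≠ v' j} = {ω | vhat ω j ≠ v j}ᶜ := by
      ext ω
      simp only [hv', Function.update_self, Set.mem_setOf_eq, Set.mem_compl_iff]
      cases v j <;> cases vhat ω j <;> simp
    have hle : (P v') {ω | vhat ω j ≠ v j} ≤ 1 := prob_le_one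
    have hcompl : ((P v') ({ω | vhat ω j ≠ v j}ᶜ)).toReal
        = 1 - ((P v') {ω | vhat ω j ≠ v j}).toReal := by
      rw [prob_compl_eq_one_sub hA,
        ENNReal.toReal_sub_of_le hle ENNReal.one_ne_top, ENNReal.toReal_one]
    have htv := abs_le.mp (hTV j v _ hA)
    have h1 : g j v' = 1 - ((P v') {ω | vhat ω j ≠ v j}).toReal := by
      rw [hg]; simp only []; rw [hset, hcompl]
    rw [h1, hg]
    simp only []
    linarith [htv.1]
  have colsum : ∀ j : Fin m,
      (2:ℝ)^m * ((1 - η)/2) ≤ ∑ v : Fin m → Bool, g j v := by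
    intro j
    have hre : ∑ v : Fin m → Bool, g j (Function.update v j (!(v j)))
        = ∑ v : Fin m → Bool, g j v :=
      Fintype.sum_equiv
        ⟨fun v => Function.update v j (!(v j)), fun v => Function.update v j (!(v j)),
          fun v => flip_invol j v, fun v => flip_invol j v⟩ _ (g j) (fun v => rfl)
    have hcard : (Fintype.card (Fin m → Bool) : ℝ) = 2 ^ m := by
      simp [Fintype.card_fun]
    have h2 : (2:ℝ)^m * (1 - η) ≤ 2 * ∑ v : Fin m → Bool, g j v := by
      calc (2:ℝ)^m * (1 - η)
          = ∑ _v : Fin m → Bool, (1 - η) := by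
            rw [Finset.sum_const, nsmul_eq_mul, Finset.card_univ, Fintype.card_fun,
              Fintype.card_bool, Fintype.card_fin]
            push_cast; ring
        _ ≤ ∑ v : Fin m → Bool, (g j v + g j (Function.update v j (!(v j)))) :=
            Finset.sum_le_sum fun v _ => pair j v
        _ = 2 * ∑ v : Fin m → Bool, g j v := by
            rw [Finset.sum_add_distrib, hre]; ring
    linarith
  have total : (2:ℝ)^m * (((m:ℝ)/2) * (1 - η)) ≤ ∑ v : Fin m → Bool, ∑ j, g j v := by
    rw [Finset.sum_comm]
    calc (2:ℝ)^m * (((m:ℝ)/2) * (1 - η))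
        = ∑ _j : Fin m, (2:ℝ)^m * ((1 - η)/2) := by
          rw [Finset.sum_const, nsmul_eq_mul]; simp; ring
      _ ≤ ∑ j : Fin m, ∑ v : Fin m → Bool, g j v :=
          Finset.sum_le_sum fun j _ => colsum j
  have hconst : ∑ _v : Fin m → Bool, (((m:ℝ)/2) * (1 - η))
      ≤ ∑ v : Fin m → Bool, ∑ j, g j v := by
    rw [Finset.sum_const, nsmul_eq_mul]
    calc ((Finset.univ.card : ℝ)) * (((m:ℝ)/2) * (1 - η))
        = (2:ℝ)^m * (((m:ℝ)/2) * (1 - η)) := by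
          simp [Finset.card_univ, Fintype.card_fun]
      _ ≤ _ := total
  obtain ⟨v, _, hv⟩ := Finset.exists_le_of_sum_le
    (Finset.univ_nonempty (α := Fin m → Bool)) hconst
  exact ⟨v, hv⟩
end

section
/- Let d ≥ 2, 𝒴 a finite set, and W : Fin d → 𝒴 → ℝ a channel with each row a probability vector and W(y|1) > 0 for all y (input 1 is the distinguished vertex). Let χ_* = max_{a≠b} ∑_y (W(y|b) − W(y|a))²/W(y|a), assume 0 < χ_* < ∞, fix n ≥ 1 and 0 < δ ≤ 1/(4(d−1)). For v = (v_2,…,v_d) ∈ {0,1}^{d−1} define θ^v ∈ ℝ^d by θ^v_j = δ(1 + v_j) for j ≥ 2 and θ^v_1 = 1 − ∑_{j≥2} δ(1+v_j), and let q_v(y) = ∑_x θ^v_x W(y|x). Then every estimator θ̂ that is a measurable function of n i.i.d. samples drawn from q_v (equivalently of their histogram) satisfies sup_{v ∈ {0,1}^{d−1}} E_v‖θ̂ − θ^v‖₂² ≥ ((d−1)/8)·δ²·(1 − δ·√(n·χ_*)). Consequently, if n·χ_* ≥ 4(d−1)², then inf over estimators of sup_v E_v‖θ̂ − θ^v‖₂²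 ≥ (d−1)/(64·n·χ_*). -/
/-!
Flipping the `i`-th bit of the cube point `v` moves `θ^v` by `±δ` along `e_{i+1} - e_0`, so the
mixtures `q_v` and `q_{v'}` differ by `±δ (W(·|i+1) - W(·|0))`; since `θ^v_0 ≥ 1/2`,
`q_{v'} ≥ W(·|0)/2` and `χ²(q_v ‖ q_{v'}) ≤ 2δ²χ_*`. Hence `KL(q_v^n ‖ q_{v'}^n) ≤ 2nδ²χ_*`, and
Pinsker's inequality bounds the overlap `∑ min(q_v^n, q_{v'}^n)` from below by `1 - δ√(nχ_*)`.
Le Cam's two-point argument then bounds the sum of the `i`-th coordinate risks at `v` and `v'`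
below by `δ²(1 - δ√(nχ_*))/4`, and averaging over the cube (Assouad) yields a cube point whose
risk is at least `(d - 1)/2` times this.
-/

open Finset Real InformationTheory

noncomputable def pinskerGap (t : ℝ) : ℝ := klFun t - 3 * (t - 1) ^ 2 / (2 * (t + 2))

lemma hasDerivAt_pinskerGap {t : ℝ} (ht : t ≠ 0) (ht2 : t + 2 ≠ 0) :
    HasDerivAt pinskerGap (log t - 3 * (t - 1) * (t + 5) / (2 * (t + 2) ^ 2)) t := by
  have hq : HasDerivAt (fun t : ℝ => 3 * (t - 1) ^ 2 / (2 * (t + 2)))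
      ((3 * (2 * (t - 1)) * (2 * (t + 2)) - 3 * (t - 1) ^ 2 * 2) / (2 * (t + 2)) ^ 2) t := by
    refine HasDerivAt.div ?_ ?_ (by simpa using ht2)
    · simpa using (((hasDerivAt_id t).sub_const 1).pow 2).const_mul 3
    · simpa using ((hasDerivAt_id t).add_const 2).const_mul 2
  refine ((hasDerivAt_klFun ht).sub hq).congr_deriv ?_
  field_simp
  ring

lemma hasDerivAt_pinskerGap_deriv {t : ℝ} (ht : t ≠ 0) (ht2 : t + 2 ≠ 0) :
    HasDerivAt (fun t => log t - 3 * (t - 1) * (t + 5) / (2 * (t + 2) ^ 2))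
      (t⁻¹ - 27 / (t + 2) ^ 3) t := by
  have hq : HasDerivAt (fun t : ℝ => 3 * (t - 1) * (t + 5) / (2 * (t + 2) ^ 2))
      (((3 * (t + 5) + 3 * (t - 1)) * (2 * (t + 2) ^ 2)
          - 3 * (t - 1) * (t + 5) * (2 * (2 * (t + 2)))) / (2 * (t + 2) ^ 2) ^ 2) t := by
    refine HasDerivAt.div ?_ ?_ (by simpa using ht2)
    · exact ((((hasDerivAt_id t).sub_const 1).const_mul 3).mul
        ((hasDerivAt_id t).add_const 5)).congr_deriv (by simp)
    · simpa using (((hasDerivAt_id t).add_const 2).pow 2).const_mul 2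
  refine ((hasDerivAt_log ht).sub hq).congr_deriv ?_
  field_simp
  ring

/-- `pinskerGap` is convex on `[0, ∞)`, its second derivative `1/t - 27/(t + 2)³` being nonnegative
by AM-GM, and has a critical zero at `1`. -/
lemma three_mul_sq_div_le_klFun {t : ℝ} (ht : 0 ≤ t) :
    3 * (t - 1) ^ 2 / (2 * (t + 2)) ≤ klFun t := by
  have hconvex : ConvexOn ℝ (Set.Ici 0) pinskerGap := by
    refine convexOn_of_hasDerivWithinAt2_nonneg (convex_Ici 0)
      (f' := fun t => log t - 3 * (t - 1) * (t + 5) / (2 * (t + 2) ^ 2))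
      (f'' := fun t => t⁻¹ - 27 / (t + 2) ^ 3) ?_ ?_ ?_ ?_
    · exact continuous_klFun.continuousOn.sub <| ContinuousOn.div (by fun_prop) (by fun_prop)
        fun x (hx : 0 ≤ x) => by positivity
    · intro x hx
      rw [interior_Ici, Set.mem_Ioi] at hx
      exact (hasDerivAt_pinskerGap hx.ne' (by positivity)).hasDerivWithinAt
    · intro x hx
      rw [interior_Ici, Set.mem_Ioi] at hx
      exact (hasDerivAt_pinskerGap_deriv hx.ne' (by positivity)).hasDerivWithinAt
    · intro x hx
      rw [interior_Ici, Set.mem_Ioi] at hx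
      rw [sub_nonneg, div_le_iff₀ (by positivity), inv_mul_eq_div, le_div_iff₀ hx]
      nlinarith [sq_nonneg (x - 1)]
  have hmin : IsMinOn pinskerGap (Set.Ici 0) 1 := by
    refine hconvex.isMinOn_of_rightDeriv_eq_zero (by simp) ?_
    rw [((hasDerivAt_pinskerGap one_ne_zero (by norm_num)).hasDerivWithinAt).derivWithin
      (uniqueDiffWithinAt_Ioi 1)]
    norm_num
  have := hmin (Set.mem_Ici.2 ht)
  simp only [pinskerGap, klFun_one] at this
  norm_num at this
  linarith

section DiscreteDivergences

variable {α : Type*} [Fintype α]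

noncomputable def klDivSum (p q : α → ℝ) : ℝ := ∑ a, p a * log (p a / q a)

noncomputable def chiSqSum (p q : α → ℝ) : ℝ := ∑ a, (p a - q a) ^ 2 / q a

lemma klDivSum_le_chiSqSum {p q : α → ℝ} (hp : ∀ a, 0 ≤ p a) (hq : ∀ a, 0 < q a)
    (hpq : ∑ a, p a = ∑ a, q a) : klDivSum p q ≤ chiSqSum p q := by
  have hterm : ∀ a, p a * log (p a / q a) ≤ (p a - q a) ^ 2 / q a + (p a - q a) := by
    intro a
    rcases (hp a).eq_or_lt with hpa | hpa
    · rw [← hpa]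
      simp [sq, (hq a).ne']
    calc p a * log (p a / q a) ≤ p a * (p a / q a - 1) :=
          mul_le_mul_of_nonneg_left (log_le_sub_one_of_pos (div_pos hpa (hq a))) hpa.le
      _ = (p a - q a) ^ 2 / q a + (p a - q a) := by field_simp [(hq a).ne']; ring
  calc klDivSum p q ≤ ∑ a, ((p a - q a) ^ 2 / q a + (p a - q a)) := sum_le_sum fun a _ => hterm a
    _ = chiSqSum p q := by rw [sum_add_distrib, sum_sub_distrib, hpq, sub_self, add_zero]; rfl

/-- **Pinsker's inequality**. -/
theorem sq_sum_abs_sub_le_two_mul_klDivSum {p q : α → ℝ} (hp : ∀ a, 0 ≤ p a) (hq : ∀ a, 0 < q a)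
    (hp1 : ∑ a, p a = 1) (hq1 : ∑ a, q a = 1) :
    (∑ a, |p a - q a|) ^ 2 ≤ 2 * klDivSum p q := by
  have hw : ∀ a, 0 < p a + 2 * q a := fun a => by linarith [hp a, hq a]
  have hterm : ∀ a, 3 / 2 * ((p a - q a) ^ 2 / (p a + 2 * q a))
      ≤ p a * log (p a / q a) + q a - p a := by
    intro a
    have h := mul_le_mul_of_nonneg_left
      (three_mul_sq_div_le_klFun (div_nonneg (hp a) (hq a).le)) (hq a).le
    have hqa := (hq a).ne'
    have hwa := (hw a).ne'
    rw [klFun_apply] at h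
    calc 3 / 2 * ((p a - q a) ^ 2 / (p a + 2 * q a))
        = q a * (3 * (p a / q a - 1) ^ 2 / (2 * (p a / q a + 2))) := by field_simp
      _ ≤ q a * (p a / q a * log (p a / q a) + 1 - p a / q a) := h
      _ = p a * log (p a / q a) + q a - p a := by field_simp
  have hsedrakyan := sq_sum_div_le_sum_sq_div univ (fun a => |p a - q a|) fun a _ => hw a
  have htot : ∑ a, (p a + 2 * q a) = 3 := by
    rw [sum_add_distrib, ← mul_sum, hp1, hq1]; norm_num
  have hkl : ∑ a, (p a * log (p a / q a) + q a - p a) = klDivSum p q := by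
    rw [sum_sub_distrib, sum_add_distrib, hp1, hq1, add_sub_cancel_right]; rfl
  simp only [sq_abs, htot] at hsedrakyan
  have := sum_le_sum fun a (_ : a ∈ univ) => hterm a
  rw [← mul_sum, hkl] at this
  linarith

end DiscreteDivergences

section ProductDistributions

variable {ι α : Type*} [Fintype ι] [DecidableEq ι] [Fintype α]

lemma sum_prod_eq_one {R : Type*} [CommSemiring R] {p : α → R} (hp1 : ∑ a, p a = 1) :
    ∑ s : ι → α, ∏ u, p (s u) = 1 := by
  rw [← Fintype.prod_sum]; simp [hp1]

lemma sum_prod_mul_apply {R : Type*} [CommSemiring R] {p : α → R}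
    (hp1 : ∑ a, p a = 1) (g : α → R) (t : ι) :
    ∑ s : ι → α, (∏ u, p (s u)) * g (s t) = ∑ a, p a * g a := by
  have hsplit : ∀ s : ι → α,
      (∏ u, p (s u)) * g (s t) = ∏ u, p (s u) * (if u = t then g (s u) else 1) := by
    intro s
    rw [prod_mul_distrib, prod_ite_eq' univ t]
    simp
  simp_rw [hsplit, ← Fintype.prod_sum (fun u a => p a * if u = t then g a else 1)]
  rw [Fintype.prod_eq_single t fun u hu => by simp [hu, hp1]]
  simp

theorem klDivSum_pi {p q : α → ℝ} (hp : ∀ a, 0 < p a) (hq : ∀ a, 0 < q a) (hp1 : ∑ a, p a = 1) :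
    klDivSum (fun s : ι → α => ∏ u, p (s u)) (fun s => ∏ u, q (s u))
      = Fintype.card ι * klDivSum p q := by
  have hlog : ∀ s : ι → α,
      log ((∏ u, p (s u)) / ∏ u, q (s u)) = ∑ u, log (p (s u) / q (s u)) := fun s => by
    rw [← prod_div_distrib, log_prod fun u _ => (div_pos (hp _) (hq _)).ne']
  calc ∑ s : ι → α, (∏ u, p (s u)) * log ((∏ u, p (s u)) / ∏ u, q (s u))
      = ∑ s : ι → α, ∑ u, (∏ u, p (s u)) * log (p (s u) / q (s u)) := by simp_rw [hlog, mul_sum]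
    _ = ∑ _u : ι, klDivSum p q := by
      rw [sum_comm]
      exact sum_congr rfl fun u _ => sum_prod_mul_apply hp1 (fun a => log (p a / q a)) u
    _ = Fintype.card ι * klDivSum p q := by simp

lemma sum_min_eq_one_sub {p q : α → ℝ} (hp1 : ∑ a, p a = 1) (hq1 : ∑ a, q a = 1) :
    ∑ a, min (p a) (q a) = 1 - (∑ a, |p a - q a|) / 2 := by
  have hmin : ∀ a, min (p a) (q a) = (p a + q a - |p a - q a|) / 2 := fun a => by
    rcases le_total (p a) (q a) with h | h
    · rw [min_eq_left h, abs_of_nonpos (sub_nonpos.2 h)]; ring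
    · rw [min_eq_right h, abs_of_nonneg (sub_nonneg.2 h)]; ring
  simp only [hmin, ← sum_div, sum_sub_distrib, sum_add_distrib, hp1, hq1]
  ring

theorem one_sub_sqrt_le_sum_min_pi {p q : α → ℝ} (hp : ∀ a, 0 < p a) (hq : ∀ a, 0 < q a)
    (hp1 : ∑ a, p a = 1) (hq1 : ∑ a, q a = 1) :
    1 - √(Fintype.card ι * klDivSum p q / 2)
      ≤ ∑ s : ι → α, min (∏ u, p (s u)) (∏ u, q (s u)) := by
  have hpinsker := sq_sum_abs_sub_le_two_mul_klDivSum
    (fun s : ι → α => prod_nonneg fun u _ => (hp (s u)).le)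
    (fun s => prod_pos fun u _ => hq (s u)) (sum_prod_eq_one hp1) (sum_prod_eq_one hq1)
  rw [klDivSum_pi hp hq hp1] at hpinsker
  have htv : (∑ s : ι → α, |∏ u, p (s u) - ∏ u, q (s u)|) / 2
      ≤ √(Fintype.card ι * klDivSum p q / 2) :=
    Real.le_sqrt_of_sq_le (by linarith [div_pow (∑ s : ι → α, |∏ u, p (s u) - ∏ u, q (s u)|) 2 2])
  rw [sum_min_eq_one_sub (sum_prod_eq_one hp1) (sum_prod_eq_one hq1)]
  linarith

end ProductDistributions

lemma min_mul_sq_sub_le {P Q x a b : ℝ} (hP : 0 ≤ P) (hQ : 0 ≤ Q) :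
    min P Q * ((a - b) ^ 2 / 2) ≤ P * (x - a) ^ 2 + Q * (x - b) ^ 2 := by
  rcases le_total P Q with h | h
  · rw [min_eq_left h]
    nlinarith [mul_nonneg (sub_nonneg.2 h) (sq_nonneg (x - b)),
      mul_nonneg hP (sq_nonneg (2 * x - a - b))]
  · rw [min_eq_right h]
    nlinarith [mul_nonneg (sub_nonneg.2 h) (sq_nonneg (x - a)),
      mul_nonneg hQ (sq_nonneg (2 * x - a - b))]

/-- **Le Cam's two-point bound** for the squared loss. -/
theorem mul_sum_min_le_add {S : Type*} [Fintype S] {P Q : S → ℝ} (hP : ∀ s, 0 ≤ P s)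
    (hQ : ∀ s, 0 ≤ Q s) (x : S → ℝ) (a b : ℝ) :
    (a - b) ^ 2 / 2 * ∑ s, min (P s) (Q s)
      ≤ ∑ s, P s * (x s - a) ^ 2 + ∑ s, Q s * (x s - b) ^ 2 := by
  rw [mul_sum, ← sum_add_distrib]
  exact sum_le_sum fun s _ => by rw [mul_comm]; exact min_mul_sq_sub_le (hP s) (hQ s)

section Hypercube

variable {ι : Type*} [DecidableEq ι]

def flipAt (i : ι) (v : ι → Bool) : ι → Bool := Function.update v i (!v i)

lemma flipAt_involutive (i : ι) : Function.Involutive (flipAt i) := fun v => by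
  simp [flipAt]

/-- **Assouad's lemma**, in its combinatorial form on the hypercube. -/
theorem exists_card_mul_le_sum_of_le_add_flipAt [Fintype ι] (L : ι → (ι → Bool) → ℝ) (c : ℝ)
    (h : ∀ i v, c ≤ L i v + L i (flipAt i v)) :
    ∃ v, Fintype.card ι * c / 2 ≤ ∑ i, L i v := by
  have hpair : ∀ i, 2 ^ Fintype.card ι * c / 2 ≤ ∑ v, L i v := fun i => by
    have := sum_le_sum fun v (_ : v ∈ univ) => h i v
    rw [sum_add_distrib, (flipAt_involutive i).bijective.sum_comp (L i)] at this
    simp at this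
    linarith
  have htotal : ∑ _v : ι → Bool, Fintype.card ι * c / 2 ≤ ∑ v, ∑ i, L i v := by
    rw [sum_comm]
    calc ∑ _v : ι → Bool, Fintype.card ι * c / 2 = ∑ _i : ι, 2 ^ Fintype.card ι * c / 2 := by
          simp; ring
      _ ≤ _ := sum_le_sum fun i _ => hpair i
  obtain ⟨v, -, hv⟩ := exists_le_of_sum_le univ_nonempty htotal
  exact ⟨v, hv⟩

end Hypercube

lemma sum_sum_succ_le_sum_mul_sum {S : Type*} [Fintype S] {d : ℕ} {P : S → ℝ} (hP : ∀ s, 0 ≤ P s)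
    (f : S → Fin (d + 1) → ℝ) :
    ∑ i : Fin d, ∑ s, P s * f s i.succ ^ 2 ≤ ∑ s, P s * ∑ j, f s j ^ 2 := by
  rw [sum_comm]
  refine sum_le_sum fun s _ => ?_
  rw [← mul_sum, Fin.sum_univ_succ]
  exact mul_le_mul_of_nonneg_left (le_add_of_nonneg_left (sq_nonneg _)) (hP s)

section CubeFamily

variable {d : ℕ} {Y : Type*}

def cubeParam (δ : ℝ) (v : Fin d → Bool) : Fin (d + 1) → ℝ :=
  Fin.cons (1 - ∑ i, δ * (1 + (if v i then (1 : ℝ) else 0)))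
    (fun i => δ * (1 + (if v i then (1 : ℝ) else 0)))

def cubeMixture (W : Fin (d + 1) → Y → ℝ) (δ : ℝ) (v : Fin d → Bool) (y : Y) : ℝ :=
  ∑ x, cubeParam δ v x * W x y

lemma sum_cubeParam (δ : ℝ) (v : Fin d → Bool) : ∑ x, cubeParam δ v x = 1 := by
  simp [cubeParam, Fin.sum_univ_succ]

lemma half_le_cubeParam_zero {δ : ℝ} (hδ0 : 0 ≤ δ) (hδ1 : δ ≤ 1 / (4 * d)) (v : Fin d → Bool) :
    1 / 2 ≤ cubeParam δ v 0 := by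
  have hstep : ∀ i, δ * (1 + (if v i then (1 : ℝ) else 0)) ≤ 2 * δ := fun i => by
    split_ifs <;> linarith
  have hsum := sum_le_sum fun i (_ : i ∈ univ) => hstep i
  rcases Nat.eq_zero_or_pos d with rfl | hd
  · norm_num [cubeParam]
  have hδd : δ * (4 * d) ≤ 1 := (le_div_iff₀ (by positivity)).1 hδ1
  simp only [sum_const, card_univ, Fintype.card_fin, nsmul_eq_mul] at hsum
  simp only [cubeParam, Fin.cons_zero]
  linarith

lemma cubeParam_nonneg {δ : ℝ} (hδ0 : 0 ≤ δ) (hδ1 : δ ≤ 1 / (4 * d)) (v : Fin d → Bool)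
    (x : Fin (d + 1)) : 0 ≤ cubeParam δ v x := by
  cases x using Fin.cases with
  | zero => linarith [half_le_cubeParam_zero hδ0 hδ1 v]
  | succ i => simp only [cubeParam, Fin.cons_succ]; split_ifs <;> positivity

lemma cubeParam_succ_sub_cubeParam_flipAt (δ : ℝ) (v : Fin d → Bool) (i j : Fin d) :
    cubeParam δ v j.succ - cubeParam δ (flipAt i v) j.succ
      = if j = i then (if v i then δ else -δ) else 0 := by
  simp only [cubeParam, Fin.cons_succ]
  by_cases hj : j = i
  · subst hj; cases h : v j <;> simp [flipAt, h] <;> ring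
  · simp [flipAt, hj]

lemma cubeParam_zero_sub_cubeParam_flipAt (δ : ℝ) (v : Fin d → Bool) (i : Fin d) :
    cubeParam δ v 0 - cubeParam δ (flipAt i v) 0 = -(if v i then δ else -δ) := by
  have h := sum_congr rfl fun j (_ : j ∈ univ) => cubeParam_succ_sub_cubeParam_flipAt δ v i j
  rw [sum_sub_distrib, sum_ite_eq', if_pos (mem_univ i)] at h
  simp only [cubeParam, Fin.cons_succ, Fin.cons_zero] at h ⊢
  linarith

lemma cubeMixture_sub_cubeMixture_flipAt (W : Fin (d + 1) → Y → ℝ) (δ : ℝ) (v : Fin d → Bool)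
    (i : Fin d) (y : Y) :
    cubeMixture W δ v y - cubeMixture W δ (flipAt i v) y
      = (if v i then δ else -δ) * (W i.succ y - W 0 y) := by
  calc cubeMixture W δ v y - cubeMixture W δ (flipAt i v) y
      = ∑ x, (cubeParam δ v x - cubeParam δ (flipAt i v) x) * W x y := by
        simp only [cubeMixture, ← sum_sub_distrib, sub_mul]
    _ = (cubeParam δ v 0 - cubeParam δ (flipAt i v) 0) * W 0 y
        + ∑ j : Fin d, (cubeParam δ v j.succ - cubeParam δ (flipAt i v) j.succ) * W j.succ y :=
        Fin.sum_univ_succ _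
    _ = (if v i then δ else -δ) * (W i.succ y - W 0 y) := by
        simp only [cubeParam_zero_sub_cubeParam_flipAt, cubeParam_succ_sub_cubeParam_flipAt,
          ite_mul, zero_mul, sum_ite_eq', mem_univ, if_true]
        split_ifs <;> ring

lemma half_mul_le_cubeMixture {W : Fin (d + 1) → Y → ℝ} (hW : ∀ x y, 0 ≤ W x y) {δ : ℝ}
    (hδ0 : 0 ≤ δ) (hδ1 : δ ≤ 1 / (4 * d)) (v : Fin d → Bool) (y : Y) :
    W 0 y / 2 ≤ cubeMixture W δ v y := by
  rw [cubeMixture, Fin.sum_univ_succ]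
  have h0 := mul_le_mul_of_nonneg_right (half_le_cubeParam_zero hδ0 hδ1 v) (hW 0 y)
  have hrest : 0 ≤ ∑ j : Fin d, cubeParam δ v j.succ * W j.succ y :=
    sum_nonneg fun j _ => mul_nonneg (cubeParam_nonneg hδ0 hδ1 v _) (hW _ y)
  linarith

lemma cubeMixture_pos {W : Fin (d + 1) → Y → ℝ} (hW : ∀ x y, 0 ≤ W x y) (hW0 : ∀ y, 0 < W 0 y)
    {δ : ℝ} (hδ0 : 0 ≤ δ) (hδ1 : δ ≤ 1 / (4 * d)) (v : Fin d → Bool) (y : Y) :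
    0 < cubeMixture W δ v y :=
  (half_pos (hW0 y)).trans_le (half_mul_le_cubeMixture hW hδ0 hδ1 v y)

lemma sum_cubeMixture [Fintype Y] {W : Fin (d + 1) → Y → ℝ} (hrow : ∀ x, ∑ y, W x y = 1)
    (δ : ℝ) (v : Fin d → Bool) : ∑ y, cubeMixture W δ v y = 1 := by
  simp only [cubeMixture]
  rw [sum_comm]
  simp [← mul_sum, hrow, sum_cubeParam]

lemma chiSqSum_cubeMixture_flipAt_le [Fintype Y] {W : Fin (d + 1) → Y → ℝ} (hW : ∀ x y, 0 ≤ W x y)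
    (hW0 : ∀ y, 0 < W 0 y) {χ : ℝ} (hχ : ∀ i : Fin d, ∑ y, (W i.succ y - W 0 y) ^ 2 / W 0 y ≤ χ)
    {δ : ℝ} (hδ0 : 0 ≤ δ) (hδ1 : δ ≤ 1 / (4 * d)) (v : Fin d → Bool) (i : Fin d) :
    chiSqSum (cubeMixture W δ v) (cubeMixture W δ (flipAt i v)) ≤ 2 * δ ^ 2 * χ := by
  have hterm : ∀ y, (cubeMixture W δ v y - cubeMixture W δ (flipAt i v) y) ^ 2
      / cubeMixture W δ (flipAt i v) y ≤ 2 * δ ^ 2 * ((W i.succ y - W 0 y) ^ 2 / W 0 y) := by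
    intro y
    have hsq : (if v i then δ else -δ) ^ 2 = δ ^ 2 := by split_ifs <;> ring
    rw [cubeMixture_sub_cubeMixture_flipAt, mul_pow, hsq]
    calc δ ^ 2 * (W i.succ y - W 0 y) ^ 2 / cubeMixture W δ (flipAt i v) y
        ≤ δ ^ 2 * (W i.succ y - W 0 y) ^ 2 / (W 0 y / 2) :=
          div_le_div_of_nonneg_left (by positivity) (by linarith [hW0 y])
            (half_mul_le_cubeMixture hW hδ0 hδ1 _ y)
      _ = 2 * δ ^ 2 * ((W i.succ y - W 0 y) ^ 2 / W 0 y) := by field_simp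
  calc chiSqSum (cubeMixture W δ v) (cubeMixture W δ (flipAt i v))
      ≤ ∑ y, 2 * δ ^ 2 * ((W i.succ y - W 0 y) ^ 2 / W 0 y) := sum_le_sum fun y _ => hterm y
    _ ≤ 2 * δ ^ 2 * χ := by rw [← mul_sum]; exact mul_le_mul_of_nonneg_left (hχ i) (by positivity)

end CubeFamily

section CubeRisk

variable {d : ℕ} {Y : Type*} [Fintype Y] {W : Fin (d + 1) → Y → ℝ} {χ δ : ℝ}

lemma one_sub_le_sum_min_cubeMixture_pi (hW : ∀ x y, 0 ≤ W x y) (hW0 : ∀ y, 0 < W 0 y)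
    (hrow : ∀ x, ∑ y, W x y = 1) (hχ : ∀ i : Fin d, ∑ y, (W i.succ y - W 0 y) ^ 2 / W 0 y ≤ χ)
    (hδ0 : 0 ≤ δ) (hδ1 : δ ≤ 1 / (4 * d)) (n : ℕ) (v : Fin d → Bool) (i : Fin d) :
    1 - δ * √(n * χ) ≤ ∑ s : Fin n → Y,
      min (∏ t, cubeMixture W δ v (s t)) (∏ t, cubeMixture W δ (flipAt i v) (s t)) := by
  have hq := cubeMixture_pos hW hW0 hδ0 hδ1
  have hkl : klDivSum (cubeMixture W δ v) (cubeMixture W δ (flipAt i v)) ≤ 2 * δ ^ 2 * χ :=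
    (klDivSum_le_chiSqSum (fun y => (hq v y).le) (hq _)
      (by rw [sum_cubeMixture hrow, sum_cubeMixture hrow])).trans
      (chiSqSum_cubeMixture_flipAt_le hW hW0 hχ hδ0 hδ1 v i)
  have hpinsker := one_sub_sqrt_le_sum_min_pi (ι := Fin n) (hq v) (hq (flipAt i v))
    (sum_cubeMixture hrow δ v) (sum_cubeMixture hrow δ _)
  rw [Fintype.card_fin] at hpinsker
  calc 1 - δ * √(n * χ) = 1 - √(n * (2 * δ ^ 2 * χ) / 2) := by
        rw [show (n : ℝ) * (2 * δ ^ 2 * χ) / 2 = δ ^ 2 * (n * χ) by ring,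
          Real.sqrt_mul (sq_nonneg δ), Real.sqrt_sq hδ0]
    _ ≤ _ := by gcongr
    _ ≤ _ := hpinsker

def cubeCoordRisk (W : Fin (d + 1) → Y → ℝ) (δ : ℝ) {n : ℕ}
    (est : (Fin n → Y) → Fin (d + 1) → ℝ) (v : Fin d → Bool) (i : Fin d) : ℝ :=
  ∑ s : Fin n → Y, (∏ t, cubeMixture W δ v (s t)) * (est s i.succ - cubeParam δ v i.succ) ^ 2

lemma le_cubeCoordRisk_add_cubeCoordRisk_flipAt (hW : ∀ x y, 0 ≤ W x y) (hW0 : ∀ y, 0 < W 0 y)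
    (hrow : ∀ x, ∑ y, W x y = 1) (hχ : ∀ i : Fin d, ∑ y, (W i.succ y - W 0 y) ^ 2 / W 0 y ≤ χ)
    (hδ0 : 0 ≤ δ) (hδ1 : δ ≤ 1 / (4 * d)) {n : ℕ} (est : (Fin n → Y) → Fin (d + 1) → ℝ)
    (i : Fin d) (v : Fin d → Bool) :
    δ ^ 2 * (1 - δ * √(n * χ)) / 4
      ≤ cubeCoordRisk W δ est v i + cubeCoordRisk W δ est (flipAt i v) i := by
  have hP : ∀ w (s : Fin n → Y), 0 ≤ ∏ t, cubeMixture W δ w (s t) := fun w s =>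
    prod_nonneg fun t _ => (cubeMixture_pos hW hW0 hδ0 hδ1 w _).le
  have hgap : (cubeParam δ v i.succ - cubeParam δ (flipAt i v) i.succ) ^ 2 = δ ^ 2 := by
    rw [cubeParam_succ_sub_cubeParam_flipAt, if_pos rfl]
    split_ifs <;> ring
  have hlecam := mul_sum_min_le_add (hP v) (hP (flipAt i v)) (fun s => est s i.succ)
    (cubeParam δ v i.succ) (cubeParam δ (flipAt i v) i.succ)
  rw [hgap] at hlecam
  have hoverlap := one_sub_le_sum_min_cubeMixture_pi hW hW0 hrow hχ hδ0 hδ1 n v i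
  -- the overlap is also nonnegative, so it is at least half of `1 - δ √(n χ)` whatever its sign
  have hoverlap_nonneg : 0 ≤ ∑ s : Fin n → Y,
      min (∏ t, cubeMixture W δ v (s t)) (∏ t, cubeMixture W δ (flipAt i v) (s t)) :=
    sum_nonneg fun s _ => le_min (hP v s) (hP _ s)
  unfold cubeCoordRisk
  nlinarith [sq_nonneg δ]

theorem exists_le_cubeRisk (hW : ∀ x y, 0 ≤ W x y) (hW0 : ∀ y, 0 < W 0 y)
    (hrow : ∀ x, ∑ y, W x y = 1) (hχ : ∀ i : Fin d, ∑ y, (W i.succ y - W 0 y) ^ 2 / W 0 y ≤ χ)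
    (hδ0 : 0 ≤ δ) (hδ1 : δ ≤ 1 / (4 * d)) {n : ℕ} (est : (Fin n → Y) → Fin (d + 1) → ℝ) :
    ∃ v : Fin d → Bool, (d : ℝ) / 8 * δ ^ 2 * (1 - δ * √(n * χ))
      ≤ ∑ s : Fin n → Y, (∏ t, cubeMixture W δ v (s t)) * ∑ j, (est s j - cubeParam δ v j) ^ 2 := by
  obtain ⟨v, hv⟩ := exists_card_mul_le_sum_of_le_add_flipAt _ _
    (le_cubeCoordRisk_add_cubeCoordRisk_flipAt hW hW0 hrow hχ hδ0 hδ1 est)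
  have hP : ∀ s : Fin n → Y, 0 ≤ ∏ t, cubeMixture W δ v (s t) := fun s =>
    prod_nonneg fun t _ => (cubeMixture_pos hW hW0 hδ0 hδ1 v _).le
  refine ⟨v, ?_⟩
  calc (d : ℝ) / 8 * δ ^ 2 * (1 - δ * √(n * χ))
      = Fintype.card (Fin d) * (δ ^ 2 * (1 - δ * √(n * χ)) / 4) / 2 := by
        rw [Fintype.card_fin]; ring
    _ ≤ _ := hv
    _ ≤ _ := sum_sum_succ_le_sum_mul_sum hP fun s j => est s j - cubeParam δ v j

end CubeRisk

theorem assouad_risk_lower_bound_general (d' : ℕ)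
    (Y : Type) [Fintype Y]
    (W : Fin (d' + 1) → Y → ℝ)
    (hnn : ∀ x y, 0 ≤ W x y) (hrow : ∀ x, ∑ y, W x y = 1)
    (hpos : ∀ y, 0 < W 0 y)
    (chiStar : ℝ)
    (hub : ∀ a b : Fin (d' + 1), a ≠ b → ∑ y, (W b y - W a y) ^ 2 / W a y ≤ chiStar)
    (n : ℕ)
    (δ : ℝ) (hδ0 : 0 < δ) (hδ1 : δ ≤ 1 / (4 * (d' : ℝ)))
    (θ : (Fin d' → Bool) → Fin (d' + 1) → ℝ)
    (hθ : ∀ v, θ v = Fin.cons (1 - ∑ i, δ * (1 + (if v i then (1 : ℝ) else 0)))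
        (fun i => δ * (1 + (if v i then (1 : ℝ) else 0))))
    (qv : (Fin d' → Bool) → Y → ℝ)
    (hqv : ∀ v y, qv v y = ∑ x, θ v x * W x y)
    (est : (Fin n → Y) → Fin (d' + 1) → ℝ) :
    (∃ v : Fin d' → Bool,
        ((d' : ℝ) / 8) * δ ^ 2 * (1 - δ * Real.sqrt (n * chiStar))
          ≤ ∑ s : Fin n → Y, (∏ t, qv v (s t)) * ∑ j, (est s j - θ v j) ^ 2)
    ∧ (4 * (d' : ℝ) ^ 2 ≤ n * chiStar → δ = 1 / (2 * Real.sqrt (n * chiStar)) →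
        ∃ v : Fin d' → Bool,
          (d' : ℝ) / (64 * n * chiStar)
            ≤ ∑ s : Fin n → Y, (∏ t, qv v (s t)) * ∑ j, (est s j - θ v j) ^ 2) := by
  obtain rfl : θ = cubeParam δ := funext hθ
  obtain rfl : qv = cubeMixture W δ := funext fun v => funext (hqv v)
  have hχ : ∀ i : Fin d', ∑ y, (W i.succ y - W 0 y) ^ 2 / W 0 y ≤ chiStar := fun i =>
    hub 0 i.succ (Fin.succ_ne_zero i).symm
  have hrisk := exists_le_cubeRisk hnn hpos hrow hχ hδ0.le hδ1 est
  refine ⟨hrisk, fun _ hδ => ?_⟩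
  obtain ⟨v, hv⟩ := hrisk
  refine ⟨v, Eq.trans_le ?_ hv⟩
  have hnχ : 0 < (n : ℝ) * chiStar := by
    rw [hδ, one_div_pos] at hδ0; exact Real.sqrt_pos.1 (by linarith)
  have hsq := Real.sq_sqrt hnχ.le
  have hr : Real.sqrt (n * chiStar) ≠ 0 := (Real.sqrt_pos.2 hnχ).ne'
  set r := Real.sqrt (n * chiStar)
  rw [hδ, mul_assoc 64, ← hsq]
  field_simp
  ring

/-- **Assouad lower bound for arbitrary estimators** (Theorem 8.4).  The alphabet size is
`d = d' + 1` (so `d − 1 = d'`), input `0` is the distinguished vertex.  For the hypercube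
family `θ^v` with step `δ ≤ 1/(4(d−1))` and mixtures `q_v`, every estimator (an arbitrary
function of the `n` i.i.d. samples, expectations written as explicit finite sums) satisfies
`sup_v E_v‖θ̂ − θ^v‖₂² ≥ ((d−1)/8)·δ²·(1 − δ√(n χ_*))`; consequently, if `n χ_* ≥ 4(d−1)²`
and `δ = 1/(2√(n χ_*))`, then `sup_v E_v‖θ̂ − θ^v‖₂² ≥ (d−1)/(64 n χ_*)`. -/
theorem assouad_risk_lower_bound (d' : ℕ) (hd' : 1 ≤ d')
    (Y : Type) [Fintype Y] [DecidableEq Y]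
    (W : Fin (d' + 1) → Y → ℝ)
    (hnn : ∀ x y, 0 ≤ W x y) (hrow : ∀ x, ∑ y, W x y = 1)
    (hpos : ∀ y, 0 < W 0 y)
    (chiStar : ℝ) (hchipos : 0 < chiStar)
    (hub : ∀ a b : Fin (d' + 1), a ≠ b → ∑ y, (W b y - W a y) ^ 2 / W a y ≤ chiStar)
    (hat : ∃ a b : Fin (d' + 1), a ≠ b ∧ ∑ y, (W b y - W a y) ^ 2 / W a y = chiStar)
    (n : ℕ) (hn : 1 ≤ n)
    (δ : ℝ) (hδ0 : 0 < δ) (hδ1 : δ ≤ 1 / (4 * (d' : ℝ)))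
    (θ : (Fin d' → Bool) → Fin (d' + 1) → ℝ)
    (hθ : ∀ v, θ v = Fin.cons (1 - ∑ i, δ * (1 + (if v i then (1 : ℝ) else 0)))
        (fun i => δ * (1 + (if v i then (1 : ℝ) else 0))))
    (qv : (Fin d' → Bool) → Y → ℝ)
    (hqv : ∀ v y, qv v y = ∑ x, θ v x * W x y)
    (est : (Fin n → Y) → Fin (d' + 1) → ℝ) :
    (∃ v : Fin d' → Bool,
        ((d' : ℝ) / 8) * δ ^ 2 * (1 - δ * Real.sqrt (n * chiStar))
          ≤ ∑ s : Fin n → Y, (∏ t, qv v (s t)) * ∑ j, (est s j - θ v j) ^ 2)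
    ∧ (4 * (d' : ℝ) ^ 2 ≤ n * chiStar → δ = 1 / (2 * Real.sqrt (n * chiStar)) →
        ∃ v : Fin d' → Bool,
          (d' : ℝ) / (64 * n * chiStar)
            ≤ ∑ s : Fin n → Y, (∏ t, qv v (s t)) * ∑ j, (est s j - θ v j) ^ 2) :=
  assouad_risk_lower_bound_general d' Y W hnn hrow hpos chiStar hub n δ hδ0 hδ1 θ hθ qv hqv est
end

section
/- Let d ≥ 2, 𝒴 a finite set, and W : Fin d → 𝒴 → ℝ a channel with all entries strictly positive and rows probability vectors. At the uniform point θ = (1/d,…,1/d), let q(y) = (1/d)∑_x W(y|x), T = {u ∈ ℝ^d : ∑ u_x = 0}, P_T = I − (1/d)𝟙𝟙ᵀ, and I(V) = n·P_T·V·diag(q_V)^{-1}·Vᵀ·P_T the Fisher matrix on T of a channel V at the uniform point. Let W̄ be the symmetrized channel W̄((π,y)|x) = W(y|π^{-1}x)/d! on (permutations of Fin d) × 𝒴. Then: (i) I(W̄) = (tr_T I(W)/(d−1))·P_T; and (ii) if I(W) is positive definite on T, then tr_T(I(W̄)^{-1}) ≤ tr_T(I(W)^{-1}). -/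
open Finset BigOperators Matrix

/-- The uniform-point Fisher matrix on the sum-zero subspace of a channel
`V : Fin d → Z → ℝ`: `I(V) = n · P_T · V · diag(q_V)⁻¹ · Vᵀ · P_T` where
`q_V(z) = (1/d)∑ₓ V(z|x)` and `P_T = I − (1/d)𝟙𝟙ᵀ`. -/
noncomputable def fisherUnif (d n : ℕ) {Z : Type*} [Fintype Z] (V : Fin d → Z → ℝ) :
    Matrix (Fin d) (Fin d) ℝ :=
  (n : ℝ) • ((1 - (d : ℝ)⁻¹ • (Matrix.of fun _ _ => (1 : ℝ))) *
      Matrix.of (fun x x' => ∑ z, V x z * V x' z / ((1 / (d : ℝ)) * ∑ u, V u z)) *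
      (1 - (d : ℝ)⁻¹ • (Matrix.of fun _ _ => (1 : ℝ))))

/-!
Write `I(V) = n · P_T · G(V) · P_T` with `G(V) = V · diag(q_V)⁻¹ · Vᵀ`. Since `q_{W̄}` is the
uniform mixture of the rows, `G(W̄)` is the average of `G(W)` over all simultaneous permutations
of rows and columns, and since `P_T` is permutation invariant, `I(W̄)` is the permutation average
of `I(W)`. A matrix invariant under all simultaneous permutations has the form
`a · 1 + b · 𝟙𝟙ᵀ`, and `P_T` kills `𝟙𝟙ᵀ`, so `I(W̄) = a · P_T`; averaging preserves the trace,
which forces `a = tr I(W) / (d - 1)`.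

For (ii), `tr I(W̄)⁻¹ = (d - 1)² / tr I(W)`, while for the inverse `B'` of `I(W)` on `T` the
Cauchy–Schwarz inequality for the trace form twisted by `√I(W)` gives
`(d - 1)² = (tr (B' I(W)))² ≤ tr I(W) · tr B'`.
-/

noncomputable section

section Centering

variable (d : ℕ)

def centering : Matrix (Fin d) (Fin d) ℝ := 1 - (d : ℝ)⁻¹ • of fun _ _ => 1

variable {d}

lemma centering_mul_allOnes (hd : (d : ℝ) ≠ 0) :
    centering d * (of fun _ _ => 1 : Matrix (Fin d) (Fin d) ℝ) = 0 := by
  ext i j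
  simp [centering, Matrix.mul_apply, Matrix.one_apply, hd]

lemma centering_mul_centering (hd : (d : ℝ) ≠ 0) : centering d * centering d = centering d := by
  conv_lhs => enter [2]; rw [centering]
  rw [Matrix.mul_sub, Matrix.mul_smul, centering_mul_allOnes hd, smul_zero, sub_zero, mul_one]

variable (d)

lemma transpose_centering : (centering d)ᵀ = centering d := by
  ext i j
  simp [centering, Matrix.one_apply, eq_comm]

lemma trace_centering (hd : (d : ℝ) ≠ 0) : trace (centering d) = d - 1 := by
  simp [centering, Matrix.trace, hd]

lemma submatrix_centering (σ : Equiv.Perm (Fin d)) :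
    (centering d).submatrix σ σ = centering d := by
  ext i j
  simp [centering, Matrix.one_apply]

lemma centering_mul_smul_one_add_smul_allOnes_mul_centering (hd : (d : ℝ) ≠ 0) (a b : ℝ) :
    centering d * (a • 1 + b • of fun _ _ => 1) * centering d = a • centering d := by
  rw [Matrix.mul_add, Matrix.mul_smul, Matrix.mul_smul, centering_mul_allOnes hd, smul_zero,
    add_zero, mul_one, Matrix.smul_mul, centering_mul_centering hd]

lemma sum_centering_mulVec (hd : (d : ℝ) ≠ 0) (v : Fin d → ℝ) : ∑ i, (centering d *ᵥ v) i = 0 := by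
  simp only [centering, Matrix.sub_mulVec, Matrix.one_mulVec, Matrix.smul_mulVec, Pi.sub_apply,
    Pi.smul_apply, Finset.sum_sub_distrib, ← Finset.smul_sum]
  simp [Matrix.mulVec, dotProduct, hd]

end Centering

section PermAverage

variable {ι : Type*} [DecidableEq ι]

lemma exists_perm_apply_eq_apply_eq {a b c e : ι} (hab : a ≠ b) (hce : c ≠ e) :
    ∃ τ : Equiv.Perm ι, τ a = c ∧ τ b = e := by
  refine ⟨Equiv.swap (Equiv.swap a c b) e * Equiv.swap a c, ?_, ?_⟩
  · have hcb : c ≠ Equiv.swap a c b := fun h => hab ((Equiv.swap a c).injective (by simp [← h]))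
    simp [Equiv.swap_apply_of_ne_of_ne hcb hce]
  · simp

lemma exists_eq_smul_one_add_smul_allOnes [Nontrivial ι] (A : Matrix ι ι ℝ)
    (hA : ∀ σ : Equiv.Perm ι, A.submatrix σ σ = A) :
    ∃ a b : ℝ, A = a • 1 + b • of fun _ _ => 1 := by
  obtain ⟨i₀, i₁, h01⟩ := exists_pair_ne ι
  have hinv (σ : Equiv.Perm ι) (i j : ι) : A (σ i) (σ j) = A i j :=
    congrFun (congrFun (hA σ) i) j
  refine ⟨A i₀ i₀ - A i₀ i₁, A i₀ i₁, ?_⟩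
  ext i j
  rcases eq_or_ne i j with rfl | hij
  · rw [← hinv (Equiv.swap i₀ i) i₀ i₀]
    simp
  · obtain ⟨τ, rfl, rfl⟩ := exists_perm_apply_eq_apply_eq h01 hij
    simp [hinv, Matrix.one_apply_ne hij]

variable [Fintype ι]

def permAverage (A : Matrix ι ι ℝ) : Matrix ι ι ℝ :=
  (Fintype.card (Equiv.Perm ι) : ℝ)⁻¹ • ∑ σ : Equiv.Perm ι, A.submatrix σ σ

lemma permAverage_apply (A : Matrix ι ι ℝ) (i j : ι) :
    permAverage A i j =
      (Fintype.card (Equiv.Perm ι) : ℝ)⁻¹ * ∑ σ : Equiv.Perm ι, A (σ i) (σ j) := by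
  simp [permAverage, Matrix.sum_apply]

lemma submatrix_permAverage (A : Matrix ι ι ℝ) (τ : Equiv.Perm ι) :
    (permAverage A).submatrix τ τ = permAverage A := by
  ext i j
  simp only [submatrix_apply, permAverage_apply]
  congr 1
  exact Fintype.sum_equiv (Equiv.mulRight τ) _ _ fun σ => rfl

lemma trace_permAverage (A : Matrix ι ι ℝ) : trace (permAverage A) = trace A := by
  have hcard : (Fintype.card (Equiv.Perm ι) : ℝ) ≠ 0 := Nat.cast_ne_zero.mpr Fintype.card_ne_zero
  have htr (σ : Equiv.Perm ι) : trace (A.submatrix σ σ) = trace A :=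
    Equiv.sum_comp σ fun i => A i i
  simp only [permAverage, trace_smul, trace_sum, htr, Finset.sum_const, Finset.card_univ,
    nsmul_eq_mul, smul_eq_mul, inv_mul_cancel_left₀ hcard]

lemma permAverage_smul (c : ℝ) (A : Matrix ι ι ℝ) : permAverage (c • A) = c • permAverage A := by
  ext i j
  simp [permAverage_apply, Finset.mul_sum, mul_left_comm]

lemma mul_permAverage_mul (N A : Matrix ι ι ℝ) (hN : ∀ σ : Equiv.Perm ι, N.submatrix σ σ = N) :
    N * permAverage A * N = permAverage (N * A * N) := by
  have h (σ : Equiv.Perm ι) : N * A.submatrix σ σ * N = (N * A * N).submatrix σ σ := by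
    conv_lhs => rw [← hN σ]
    rw [submatrix_mul_equiv, submatrix_mul_equiv]
  simp only [permAverage, Matrix.mul_smul, Matrix.smul_mul, Finset.mul_sum, Finset.sum_mul, h]

end PermAverage

lemma eq_smul_centering_of_forall_submatrix_eq {d : ℕ} (hd : 2 ≤ d) (A : Matrix (Fin d) (Fin d) ℝ)
    (hA : ∀ σ : Equiv.Perm (Fin d), A.submatrix σ σ = A) (hPA : centering d * A * centering d = A) :
    A = (trace A / (d - 1)) • centering d := by
  have : Nontrivial (Fin d) := Fin.nontrivial_iff_two_le.mpr hd
  have hd0 : (d : ℝ) ≠ 0 := by positivity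
  have hd1 : (d : ℝ) - 1 ≠ 0 := by
    rw [sub_ne_zero]; exact_mod_cast (by omega : d ≠ 1)
  obtain ⟨a, b, hab⟩ := exists_eq_smul_one_add_smul_allOnes A hA
  have hAa : A = a • centering d := by
    rw [← hPA, hab, centering_mul_smul_one_add_smul_allOnes_mul_centering d hd0]
  rw [hAa, trace_smul, trace_centering d hd0, smul_eq_mul, mul_div_cancel_right₀ a hd1]

lemma permAverage_eq_smul_centering {d : ℕ} (hd : 2 ≤ d) (A : Matrix (Fin d) (Fin d) ℝ)
    (hPA : centering d * A * centering d = A) :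
    permAverage A = (trace A / (d - 1)) • centering d := by
  rw [← trace_permAverage A]
  refine eq_smul_centering_of_forall_submatrix_eq hd _ (submatrix_permAverage A) ?_
  rw [mul_permAverage_mul _ _ (submatrix_centering d), hPA]

section Fisher

variable (d : ℕ) {Z : Type*} [Fintype Z]

def fisherGram (V : Fin d → Z → ℝ) : Matrix (Fin d) (Fin d) ℝ :=
  of fun x x' => ∑ z, V x z * V x' z / ((1 / (d : ℝ)) * ∑ u, V u z)

lemma fisherUnif_eq (n : ℕ) (V : Fin d → Z → ℝ) :
    fisherUnif d n V = (n : ℝ) • (centering d * fisherGram d V * centering d) := rfl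

variable {d}

lemma centering_mul_fisherUnif_mul_centering (hd : (d : ℝ) ≠ 0) (n : ℕ) (V : Fin d → Z → ℝ) :
    centering d * fisherUnif d n V * centering d = fisherUnif d n V := by
  simp only [fisherUnif_eq, Matrix.mul_smul, Matrix.smul_mul, ← mul_assoc,
    centering_mul_centering hd]
  rw [mul_assoc _ (centering d), centering_mul_centering hd]

lemma transpose_fisherUnif (n : ℕ) (V : Fin d → Z → ℝ) :
    (fisherUnif d n V)ᵀ = fisherUnif d n V := by
  have hG : (fisherGram d V)ᵀ = fisherGram d V := by
    ext x x'
    simp only [fisherGram, transpose_apply, of_apply, mul_comm (V x' _)]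
  rw [fisherUnif_eq, transpose_smul, transpose_mul, transpose_mul, transpose_centering, hG,
    mul_assoc]

lemma fisherGram_permMixture {Y : Type*} [Fintype Y] (W : Fin d → Y → ℝ)
    (Wbar : Fin d → (Equiv.Perm (Fin d) × Y) → ℝ)
    (hWbar : ∀ x π y, Wbar x (π, y) = W (π⁻¹ x) y / (Nat.factorial d : ℝ)) :
    fisherGram d Wbar = permAverage (fisherGram d W) := by
  have hF : (Nat.factorial d : ℝ) ≠ 0 := by positivity
  have hq (π : Equiv.Perm (Fin d)) (y : Y) : ∑ u, Wbar u (π, y) = (∑ u, W u y) / d.factorial := by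
    simp only [hWbar, ← Finset.sum_div, Equiv.sum_comp π⁻¹ fun u => W u y]
  ext x x'
  rw [permAverage_apply, Fintype.card_perm, Fintype.card_fin, Finset.mul_sum,
    ← Equiv.sum_comp (Equiv.inv (Equiv.Perm (Fin d)))]
  simp only [fisherGram, of_apply, Fintype.sum_prod_type, hq]
  refine Finset.sum_congr rfl fun π _ => ?_
  rw [Finset.mul_sum]
  refine Finset.sum_congr rfl fun y _ => ?_
  simp only [hWbar, Equiv.inv_apply]
  field_simp

lemma fisherUnif_permMixture (n : ℕ) {Y : Type*} [Fintype Y] (W : Fin d → Y → ℝ)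
    (Wbar : Fin d → (Equiv.Perm (Fin d) × Y) → ℝ)
    (hWbar : ∀ x π y, Wbar x (π, y) = W (π⁻¹ x) y / (Nat.factorial d : ℝ)) :
    fisherUnif d n Wbar = permAverage (fisherUnif d n W) := by
  rw [fisherUnif_eq, fisherUnif_eq, fisherGram_permMixture W Wbar hWbar,
    mul_permAverage_mul _ _ (submatrix_centering d), permAverage_smul]

end Fisher

lemma posSemidef_of_pos_on_sum_eq_zero {d : ℕ} (hd : (d : ℝ) ≠ 0) (A : Matrix (Fin d) (Fin d) ℝ)
    (hAt : Aᵀ = A) (hPA : centering d * A * centering d = A)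
    (hpos : ∀ u : Fin d → ℝ, ∑ x, u x = 0 → u ≠ 0 → 0 < u ⬝ᵥ A *ᵥ u) : A.PosSemidef := by
  refine Matrix.PosSemidef.of_dotProduct_mulVec_nonneg ?_ fun v => ?_
  · rwa [IsHermitian, conjTranspose_eq_transpose_of_trivial]
  have hv : v ⬝ᵥ A *ᵥ v = (centering d *ᵥ v) ⬝ᵥ A *ᵥ (centering d *ᵥ v) := by
    conv_lhs => rw [← hPA]
    rw [← mulVec_mulVec, ← mulVec_mulVec, dotProduct_mulVec, ← mulVec_transpose,
      transpose_centering, dotProduct_comm]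
  rw [star_trivial, hv]
  by_cases hv0 : centering d *ᵥ v = 0
  · rw [hv0, zero_dotProduct]
  · exact (hpos _ (sum_centering_mulVec d hd v) hv0).le

section TraceInequality

variable {ι : Type*} [Fintype ι]

lemma sq_trace_transpose_mul_le (X Y : Matrix ι ι ℝ) :
    trace (Xᵀ * Y) ^ 2 ≤ trace (Xᵀ * X) * trace (Yᵀ * Y) := by
  have hsum (U V : Matrix ι ι ℝ) : trace (Uᵀ * V) = ∑ p : ι × ι, U p.1 p.2 * V p.1 p.2 := by
    simp only [trace, Matrix.diag, mul_apply, transpose_apply, Fintype.sum_prod_type]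
    exact Finset.sum_comm
  simpa only [hsum, sq] using
    Finset.sum_mul_sq_le_sq_mul_sq univ (fun p : ι × ι => X p.1 p.2) (fun p => Y p.1 p.2)

open scoped MatrixOrder in
lemma sq_trace_mul_le_of_posSemidef [DecidableEq ι] (A : Matrix ι ι ℝ) {B : Matrix ι ι ℝ}
    (hB : B.PosSemidef) : trace (A * B) ^ 2 ≤ trace B * trace (Aᵀ * A * B) := by
  set R := CFC.sqrt B
  have hRR : R * R = B := CFC.sqrt_mul_sqrt_self B hB.nonneg
  have hRt : Rᵀ = R := by
    rw [← conjTranspose_eq_transpose_of_trivial]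
    exact (CFC.sqrt_nonneg B).posSemidef.1
  have h₁ : trace (Rᵀ * (A * R)) = trace (A * B) := by
    rw [hRt, trace_mul_comm, mul_assoc, hRR]
  have h₂ : trace (Rᵀ * R) = trace B := by rw [hRt, hRR]
  have h₃ : trace ((A * R)ᵀ * (A * R)) = trace (Aᵀ * A * B) := by
    rw [transpose_mul, hRt, trace_mul_comm (R * Aᵀ), mul_assoc, ← mul_assoc R, hRR, ← mul_assoc,
      trace_mul_comm, mul_assoc]
  simpa only [h₁, h₂, h₃] using sq_trace_transpose_mul_le R (A * R)

lemma sq_trace_le_trace_mul_trace [DecidableEq ι] {A B P : Matrix ι ι ℝ} (hA : A.PosSemidef)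
    (hBA : B * A = P) (hPB : P * B = B) (hP : Pᵀ = P) : trace P ^ 2 ≤ trace A * trace B := by
  have h := sq_trace_mul_le_of_posSemidef B hA
  have hBt : Bᵀ * P = Bᵀ := by rw [← hP, ← transpose_mul, hPB]
  rwa [hBA, mul_assoc, hBA, hBt, trace_transpose] at h

end TraceInequality

end

theorem fisher_symmetrization_general (d n : ℕ) (hd : 2 ≤ d)
    (Y : Type) [Fintype Y]
    (W : Fin d → Y → ℝ)
    (Wbar : Fin d → (Equiv.Perm (Fin d) × Y) → ℝ)
    (hWbar : ∀ x π y, Wbar x (π, y) = W (π⁻¹ x) y / (Nat.factorial d : ℝ))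
    (PT : Matrix (Fin d) (Fin d) ℝ)
    (hPT : PT = 1 - (d : ℝ)⁻¹ • (Matrix.of fun _ _ => (1 : ℝ))) :
    (fisherUnif d n Wbar = (Matrix.trace (fisherUnif d n W) / ((d : ℝ) - 1)) • PT)
    ∧ ((∀ u : Fin d → ℝ, (∑ x, u x = 0) → u ≠ 0 →
          0 < u ⬝ᵥ (fisherUnif d n W).mulVec u) →
        ∀ B B' : Matrix (Fin d) (Fin d) ℝ,
          B * fisherUnif d n Wbar = PT → fisherUnif d n Wbar * B = PT →
          PT * B = B → B * PT = B →
          B' * fisherUnif d n W = PT → fisherUnif d n W * B' = PT →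
          PT * B' = B' → B' * PT = B' →
          Matrix.trace B ≤ Matrix.trace B') := by
  obtain rfl : PT = centering d := hPT
  have hd0 : (d : ℝ) ≠ 0 := by positivity
  set A := fisherUnif d n W
  have hPA : centering d * A * centering d = A := centering_mul_fisherUnif_mul_centering hd0 n W
  have hsym : fisherUnif d n Wbar = (trace A / (d - 1)) • centering d := by
    rw [fisherUnif_permMixture n W Wbar hWbar, permAverage_eq_smul_centering hd A hPA]
  refine ⟨hsym, fun hpd B B' hB _ _ hBP hB'A _ hPB' _ => ?_⟩
  have hA : A.PosSemidef :=
    posSemidef_of_pos_on_sum_eq_zero hd0 A (transpose_fisherUnif n W) hPA hpd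
  have hCS := sq_trace_le_trace_mul_trace hA hB'A hPB' (transpose_centering d)
  have hB_tr : trace A / (d - 1) * trace B = trace (centering d) := by
    rw [← hB, hsym, Matrix.mul_smul, hBP, trace_smul, smul_eq_mul]
  have hd1 : (0 : ℝ) < d - 1 := by
    rw [sub_pos]; exact_mod_cast hd
  rw [trace_centering d hd0] at hB_tr hCS
  have hAB : trace A * trace B = (d - 1) ^ 2 := by
    field_simp at hB_tr; linarith
  have hA_pos : 0 < trace A := hA.trace_nonneg.lt_of_ne' fun h => by
    rw [h, zero_mul] at hAB; nlinarith
  exact le_of_mul_le_mul_left (hAB ▸ hCS) hA_pos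

/-- **Fisher symmetrization** (Theorem 9.1, eqs. (9.2)–(9.3)).  For the symmetrized
channel `W̄((π,y)|x) = W(y|π⁻¹x)/d!`: (i) `I(W̄) = (tr_T I(W)/(d−1))·P_T`; and
(ii) if `I(W)` is positive definite on the sum-zero subspace `T`, then
`tr_T(I(W̄)⁻¹) ≤ tr_T(I(W)⁻¹)`, the inverses on `T` being realised as matrices
`B` with `B·I = I·B = P_T` and `P_T·B = B·P_T = B`. -/
theorem fisher_symmetrization (d n : ℕ) (hd : 2 ≤ d) (hn : 1 ≤ n)
    (Y : Type) [Fintype Y]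
    (W : Fin d → Y → ℝ) (hpos : ∀ x y, 0 < W x y) (hrow : ∀ x, ∑ y, W x y = 1)
    (Wbar : Fin d → (Equiv.Perm (Fin d) × Y) → ℝ)
    (hWbar : ∀ x π y, Wbar x (π, y) = W (π⁻¹ x) y / (Nat.factorial d : ℝ))
    (PT : Matrix (Fin d) (Fin d) ℝ)
    (hPT : PT = 1 - (d : ℝ)⁻¹ • (Matrix.of fun _ _ => (1 : ℝ))) :
    (fisherUnif d n Wbar = (Matrix.trace (fisherUnif d n W) / ((d : ℝ) - 1)) • PT)
    ∧ ((∀ u : Fin d → ℝ, (∑ x, u x = 0) → u ≠ 0 →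
          0 < u ⬝ᵥ (fisherUnif d n W).mulVec u) →
        ∀ B B' : Matrix (Fin d) (Fin d) ℝ,
          B * fisherUnif d n Wbar = PT → fisherUnif d n Wbar * B = PT →
          PT * B = B → B * PT = B →
          B' * fisherUnif d n W = PT → fisherUnif d n W * B' = PT →
          PT * B' = B' → B' * PT = B' →
          Matrix.trace B ≤ Matrix.trace B') :=
  fisher_symmetrization_general d n hd Y W Wbar hWbar PT hPT
end
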